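/- arXiv:2602.15542 — 10 statements merged into one kernel-verified Lean document; each statement's English description precedes it below -/
import Mathlib

section
/- Let X and Y be compact subsets of ℝ. If there exists an order isomorphism f from Q_X to Q_Y mapping the X-gaps onto the Y-gaps, then there exists a strictly increasing homeomorphism F : ℝ → ℝ with F[X] = Y. -/
open Set

def gapsOf (Y : Set ℝ) : Set (Set ℝ) :=
  {S | ∃ x ∉ Y, S = connectedComponentIn Yᶜ x}

def intervalsOf (Y : Set ℝ) : Set (Set ℝ) :=
  {S | (∃ x ∈ Y, S = connectedComponentIn Y x) ∧ S.Nontrivial}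

def QOf (Y : Set ℝ) : Set (Set ℝ) := gapsOf Y ∪ intervalsOf Y

def setLT (I J : Set ℝ) : Prop := ∀ x ∈ I, ∀ y ∈ J, x < y

def Interlaces (G B : Set (Set ℝ)) : Prop :=
  ∀ I ∈ B, ∀ J ∈ B, setLT I J → ∃ K ∈ G, setLT I K ∧ setLT K J

def IsTame (A : Set ℝ) : Prop :=
  ∀ Y : Set ℝ, Nonempty (↥A ≃ₜ ↥Y) → ∃ f : ℝ ≃ₜ ℝ, f '' A = Y

def RegularlyClosedIn (X : Set ℝ) : Prop :=
  IsClosed X ∧ X ⊆ closure (⋃₀ intervalsOf X)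

def trivCompOf (X : Set ℝ) : Set ℝ := {x ∈ X | connectedComponentIn X x = {x}}

def BOf (X : Set ℝ) : Set (Set ℝ) :=
  {I ∈ intervalsOf X | ∀ e, (IsLeast I e ∨ IsGreatest I e) → e ∈ closure (X \ I)}

def MCantorval (X : Set ℝ) : Prop :=
  X.Nonempty ∧ Bornology.IsBounded X ∧ RegularlyClosedIn X ∧
  ∀ I ∈ intervalsOf X, ∀ e, (IsLeast I e ∨ IsGreatest I e) →
    e ∈ closure (trivCompOf X \ {e})

lemma QOf_ordConnected {Z Q : Set ℝ} (hQ : Q ∈ QOf Z) : Q.OrdConnected := by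
  rcases hQ with ⟨x, hx, rfl⟩ | ⟨⟨x, hx, rfl⟩, _⟩ <;>
    exact isPreconnected_connectedComponentIn.ordConnected

lemma QOf_nonempty {Z Q : Set ℝ} (hQ : Q ∈ QOf Z) : Q.Nonempty := by
  rcases hQ with ⟨x, hx, rfl⟩ | ⟨⟨x, hx, rfl⟩, _⟩
  · exact ⟨x, mem_connectedComponentIn hx⟩
  · exact ⟨x, mem_connectedComponentIn hx⟩

lemma gap_interval_disjoint {Z Q : Set ℝ} (hG : Q ∈ gapsOf Z) (hI : Q ∈ intervalsOf Z) : False := by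
  obtain ⟨x, hx, rfl⟩ := hG
  obtain ⟨⟨w, hw, hQ⟩, -⟩ := hI
  have h1 : x ∈ connectedComponentIn Zᶜ x := mem_connectedComponentIn hx
  rw [hQ] at h1
  exact hx (connectedComponentIn_subset _ _ h1)

lemma QOf_disjoint {Z Q Q' : Set ℝ} (hQ : Q ∈ QOf Z) (hQ' : Q' ∈ QOf Z) (hne : Q ≠ Q')
    {p : ℝ} (hp : p ∈ Q) (hp' : p ∈ Q') : False := by
  rcases hQ with ⟨x, hx, rfl⟩ | hQ
  · rcases hQ' with ⟨x', hx', rfl⟩ | hQ'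
    · exact hne ((connectedComponentIn_eq hp).trans (connectedComponentIn_eq hp').symm)
    · obtain ⟨⟨w, hw, hI⟩, -⟩ := hQ'
      refine (connectedComponentIn_subset Zᶜ x hp) ?_
      rw [hI] at hp'; exact connectedComponentIn_subset _ _ hp'
  · rcases hQ' with ⟨x', hx', rfl⟩ | hQ'
    · obtain ⟨⟨w, hw, hI⟩, -⟩ := hQ
      refine (connectedComponentIn_subset Zᶜ x' hp') ?_
      rw [hI] at hp; exact connectedComponentIn_subset _ _ hp
    · obtain ⟨⟨w, hw, hI⟩, -⟩ := hQ
      obtain ⟨⟨w', hw', hI'⟩, -⟩ := hQ'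
      apply hne
      rw [hI] at hp ⊢; rw [hI'] at hp' ⊢
      exact (connectedComponentIn_eq hp).trans (connectedComponentIn_eq hp').symm

lemma QOf_comparable {Z Q Q' : Set ℝ} (hQ : Q ∈ QOf Z) (hQ' : Q' ∈ QOf Z) (hne : Q ≠ Q') :
    setLT Q Q' ∨ setLT Q' Q := by
  by_cases h : setLT Q Q'
  · exact Or.inl h
  · right
    unfold setLT at h
    push_neg at h
    obtain ⟨a, ha, b, hb, hba⟩ := h
    intro c hc d hd
    by_contra hdc
    push_neg at hdc
    rcases le_or_gt a c with h1 | h1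
    · exact QOf_disjoint hQ hQ' hne ha ((QOf_ordConnected hQ').out hb hc ⟨hba, h1⟩)
    · exact QOf_disjoint hQ hQ' hne ((QOf_ordConnected hQ).out hd ha ⟨hdc, h1.le⟩) hc

lemma setLT_singleton {Z Q : Set ℝ} (hQ : Q ∈ QOf Z) {p q : ℝ} (hqQ : q ∈ Q) (hp : p ∉ Q)
    (hqp : q < p) : setLT Q {p} := by
  intro r hr t ht
  rcases ht with rfl
  by_contra hle
  push_neg at hle
  exact hp ((QOf_ordConnected hQ).out hqQ hr ⟨hqp.le, hle⟩)

lemma singleton_setLT {Z Q : Set ℝ} (hQ : Q ∈ QOf Z) {p q : ℝ} (hqQ : q ∈ Q) (hp : p ∉ Q)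
    (hqp : p < q) : setLT {p} Q := by
  intro t ht r hr
  rcases ht with rfl
  by_contra hle
  push_neg at hle
  exact hp ((QOf_ordConnected hQ).out hr hqQ ⟨hle, hqp.le⟩)

lemma setLT_trans {A B C : Set ℝ} (hAB : setLT A B) (hBC : setLT B C) (hB : B.Nonempty) :
    setLT A C := by
  obtain ⟨b, hb⟩ := hB
  exact fun a ha c hc => (hAB a ha b hb).trans (hBC b hb c hc)

section Shapes

variable {Z : Set ℝ} (hZc : IsCompact Z) (hZne : Z.Nonempty)

include hZc hZne in
lemma gap_shape {G : Set ℝ} (hG : G ∈ gapsOf Z) :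
    G = Iio (sInf Z) ∨ G = Ioi (sSup Z) ∨ ∃ a b : ℝ, a < b ∧ G = Ioo a b := by
  have hGne : G.Nonempty := QOf_nonempty (Or.inl hG)
  have hGord : G.OrdConnected := QOf_ordConnected (Or.inl hG)
  obtain ⟨x, hx, rfl⟩ := hG
  set G := connectedComponentIn Zᶜ x with hGdef
  have hGsub : G ⊆ Zᶜ := connectedComponentIn_subset _ _
  have hGopen : IsOpen G := hZc.isClosed.isOpen_compl.connectedComponentIn
  by_cases hbb : BddBelow G
  · by_cases hba : BddAbove G
    · right; right
      refine ⟨sInf G, sSup G, ?_, ?_⟩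
      · obtain ⟨g, hg⟩ := hGne
        obtain ⟨ε, hε, hball⟩ := Metric.isOpen_iff.mp hGopen g hg
        rw [Real.ball_eq_Ioo] at hball
        have h1 : g - ε / 2 ∈ G := hball ⟨by linarith, by linarith⟩
        have h2 : g + ε / 2 ∈ G := hball ⟨by linarith, by linarith⟩
        calc sInf G ≤ g - ε / 2 := csInf_le hbb h1
          _ < g + ε / 2 := by linarith
          _ ≤ sSup G := le_csSup hba h2
      · apply Subset.antisymm
        · intro g hg
          obtain ⟨ε, hε, hball⟩ := Metric.isOpen_iff.mp hGopen g hg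
          rw [Real.ball_eq_Ioo] at hball
          have h1 : g - ε / 2 ∈ G := hball ⟨by linarith, by linarith⟩
          have h2 : g + ε / 2 ∈ G := hball ⟨by linarith, by linarith⟩
          exact ⟨lt_of_le_of_lt (csInf_le hbb h1) (by linarith),
            lt_of_lt_of_le (by linarith : g < g + ε / 2) (le_csSup hba h2)⟩
        · rintro t ⟨ht1, ht2⟩
          obtain ⟨g1, hg1, hg1t⟩ := exists_lt_of_csInf_lt hGne ht1
          obtain ⟨g2, hg2, hg2t⟩ := exists_lt_of_lt_csSup hGne ht2
          exact hGord.out hg1 hg2 ⟨hg1t.le, hg2t.le⟩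
    · right; left
      rw [not_bddAbove_iff] at hba
      have hSmem : sSup Z ∈ Z := hZc.sSup_mem hZne
      apply Subset.antisymm
      · intro g hg
        simp only [mem_Ioi]
        by_contra hgle
        push_neg at hgle
        obtain ⟨g', hg', hgg'⟩ := hba (sSup Z)
        exact hGsub (hGord.out hg hg' ⟨hgle, hgg'.le⟩) hSmem
      · obtain ⟨g', hg', hgg'⟩ := hba (sSup Z)
        have hsub : Ioi (sSup Z) ⊆ Zᶜ := fun t ht => fun htZ =>
          absurd (le_csSup hZc.bddAbove htZ) (not_le.mpr ht)
        rw [hGdef, connectedComponentIn_eq hg']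
        exact isPreconnected_Ioi.subset_connectedComponentIn hgg' hsub
  · left
    rw [not_bddBelow_iff] at hbb
    have hImem : sInf Z ∈ Z := hZc.sInf_mem hZne
    apply Subset.antisymm
    · intro g hg
      simp only [mem_Iio]
      by_contra hgle
      push_neg at hgle
      obtain ⟨g', hg', hgg'⟩ := hbb (sInf Z)
      exact hGsub (hGord.out hg' hg ⟨hgg'.le, hgle⟩) hImem
    · obtain ⟨g', hg', hgg'⟩ := hbb (sInf Z)
      have hsub : Iio (sInf Z) ⊆ Zᶜ := fun t ht => fun htZ =>
        absurd (csInf_le hZc.bddBelow htZ) (not_le.mpr ht)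
      rw [hGdef, connectedComponentIn_eq hg']
      exact isPreconnected_Iio.subset_connectedComponentIn hgg' hsub

include hZc in
lemma interval_shape {I : Set ℝ} (hI : I ∈ intervalsOf Z) :
    ∃ a b : ℝ, a < b ∧ I = Icc a b := by
  have hIne : I.Nonempty := QOf_nonempty (Or.inr hI)
  have hIord : I.OrdConnected := QOf_ordConnected (Or.inr hI)
  obtain ⟨⟨x, hx, hIeq⟩, hnt⟩ := hI
  have hIsub : I ⊆ Z := by rw [hIeq]; exact connectedComponentIn_subset _ _
  have hclosed : IsClosed I := by
    apply isClosed_of_closure_subset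
    rw [hIeq]
    refine IsPreconnected.subset_connectedComponentIn ?_ ?_ ?_
    · exact isPreconnected_connectedComponentIn.closure
    · exact subset_closure (mem_connectedComponentIn hx)
    · exact closure_minimal (hIeq ▸ hIsub) hZc.isClosed
  have hIc : IsCompact I := hZc.of_isClosed_subset hclosed hIsub
  have ha : sInf I ∈ I := hIc.sInf_mem hIne
  have hb : sSup I ∈ I := hIc.sSup_mem hIne
  refine ⟨sInf I, sSup I, ?_, ?_⟩
  · obtain ⟨u, hu, v, hv, huv⟩ := hnt
    rcases huv.lt_or_gt with h | h
    · exact lt_of_le_of_lt (csInf_le hIc.bddBelow hu)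
        (lt_of_lt_of_le h (le_csSup hIc.bddAbove hv))
    · exact lt_of_le_of_lt (csInf_le hIc.bddBelow hv)
        (lt_of_lt_of_le h (le_csSup hIc.bddAbove hu))
  · exact Subset.antisymm
      (fun t ht => ⟨csInf_le hIc.bddBelow ht, le_csSup hIc.bddAbove ht⟩)
      (fun t ht => hIord.out ha hb ht)

include hZc hZne in
lemma mingap_mem : Iio (sInf Z) ∈ gapsOf Z := by
  have hImem : sInf Z ∈ Z := hZc.sInf_mem hZne
  have hsub : Iio (sInf Z) ⊆ Zᶜ := fun t ht => fun htZ =>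
    absurd (csInf_le hZc.bddBelow htZ) (not_le.mpr ht)
  have hmem1 : sInf Z - 1 ∈ Iio (sInf Z) := by simp
  have hx : sInf Z - 1 ∉ Z := hsub hmem1
  refine ⟨sInf Z - 1, hx, ?_⟩
  apply Subset.antisymm
  · exact isPreconnected_Iio.subset_connectedComponentIn hmem1 hsub
  · intro g hg
    simp only [mem_Iio]
    by_contra hgle
    push_neg at hgle
    have hxc : (sInf Z - 1 : ℝ) ∈ (Zᶜ : Set ℝ) := hx
    have hstep : sInf Z ∈ connectedComponentIn Zᶜ (sInf Z - 1) :=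
      (isPreconnected_connectedComponentIn.ordConnected).out
        (mem_connectedComponentIn hxc) hg ⟨by linarith, hgle⟩
    exact connectedComponentIn_subset _ _ hstep hImem

include hZc hZne in
lemma maxgap_mem : Ioi (sSup Z) ∈ gapsOf Z := by
  have hSmem : sSup Z ∈ Z := hZc.sSup_mem hZne
  have hsub : Ioi (sSup Z) ⊆ Zᶜ := fun t ht => fun htZ =>
    absurd (le_csSup hZc.bddAbove htZ) (not_le.mpr ht)
  have hmem1 : sSup Z + 1 ∈ Ioi (sSup Z) := by simp
  have hx : sSup Z + 1 ∉ Z := hsub hmem1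
  refine ⟨sSup Z + 1, hx, ?_⟩
  apply Subset.antisymm
  · exact isPreconnected_Ioi.subset_connectedComponentIn hmem1 hsub
  · intro g hg
    simp only [mem_Ioi]
    by_contra hgle
    push_neg at hgle
    have hxc : (sSup Z + 1 : ℝ) ∈ (Zᶜ : Set ℝ) := hx
    have hstep : sSup Z ∈ connectedComponentIn Zᶜ (sSup Z + 1) :=
      (isPreconnected_connectedComponentIn.ordConnected).out
        hg (mem_connectedComponentIn hxc) ⟨hgle, by linarith⟩
    exact connectedComponentIn_subset _ _ hstep hSmem

end Shapes

lemma meet_lemma (Z : Set ℝ) {x z : ℝ} (hxz : x < z) :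
    ∃ Q ∈ QOf Z, (Q ∩ Ioo x z).Nonempty := by
  by_cases h : ∃ p ∈ Ioo x z, p ∉ Z
  · obtain ⟨p, hpI, hpZ⟩ := h
    exact ⟨connectedComponentIn Zᶜ p, Or.inl ⟨p, hpZ, rfl⟩,
      p, mem_connectedComponentIn hpZ, hpI⟩
  · push_neg at h
    set p := (x + z) / 2 with hp
    have hpI : p ∈ Ioo x z := ⟨by simp only [hp]; linarith, by simp only [hp]; linarith⟩
    have hsub : Ioo x z ⊆ connectedComponentIn Z p :=
      isPreconnected_Ioo.subset_connectedComponentIn hpI h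
    have hq : (x + p) / 2 ∈ Ioo x z := ⟨by simp only [hp]; linarith, by simp only [hp]; linarith⟩
    refine ⟨connectedComponentIn Z p, Or.inr ⟨⟨p, h p hpI, rfl⟩, ?_⟩,
      p, mem_connectedComponentIn (h p hpI), hpI⟩
    exact ⟨(x + p) / 2, hsub hq, p, hsub hpI, by simp only [hp]; linarith⟩

lemma triv_not_mem {Z : Set ℝ} {y : ℝ} (hy : y ∈ Z)
    (htriv : connectedComponentIn Z y = {y}) {Q : Set ℝ} (hQ : Q ∈ QOf Z) : y ∉ Q := by
  intro hyQ
  rcases hQ with ⟨x, hx, rfl⟩ | ⟨⟨x, hx, hQeq⟩, hnt⟩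
  · exact connectedComponentIn_subset _ _ hyQ hy
  · rw [hQeq] at hyQ hnt
    rw [connectedComponentIn_eq hyQ, htriv] at hnt
    exact hnt.ne_singleton rfl

lemma triv_isLUB {Z : Set ℝ} {y : ℝ} (hy : y ∈ Z)
    (htriv : connectedComponentIn Z y = {y}) :
    IsLUB (⋃₀ {Q | Q ∈ QOf Z ∧ setLT Q {y}}) y := by
  constructor
  · rintro v ⟨Q, ⟨hQ, hlt⟩, hv⟩
    exact (hlt v hv y rfl).le
  · intro w hw
    by_contra hwy
    push_neg at hwy
    set c := max w (y - 1) with hc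
    have hcy : c < y := max_lt hwy (by linarith)
    obtain ⟨Q, hQ, q, hqQ, hqI⟩ := meet_lemma Z hcy
    have hynQ : y ∉ Q := triv_not_mem hy htriv hQ
    have hltQ : setLT Q {y} := setLT_singleton hQ hqQ hynQ hqI.2
    have : q ≤ w := hw ⟨Q, ⟨hQ, hltQ⟩, hqQ⟩
    exact absurd (lt_of_le_of_lt (le_max_left w (y-1)) hqI.1) (not_lt.mpr this)

lemma triv_isGLB {Z : Set ℝ} {y : ℝ} (hy : y ∈ Z)
    (htriv : connectedComponentIn Z y = {y}) :
    IsGLB (⋃₀ {Q | Q ∈ QOf Z ∧ setLT {y} Q}) y := by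
  constructor
  · rintro v ⟨Q, ⟨hQ, hlt⟩, hv⟩
    exact (hlt y rfl v hv).le
  · intro w hw
    by_contra hwy
    push_neg at hwy
    set c := min w (y + 1) with hc
    have hcy : y < c := lt_min hwy (by linarith)
    obtain ⟨Q, hQ, q, hqQ, hqI⟩ := meet_lemma Z hcy
    have hynQ : y ∉ Q := triv_not_mem hy htriv hQ
    have hltQ : setLT {y} Q := singleton_setLT hQ hqQ hynQ hqI.1
    have h1 : w ≤ q := hw ⟨Q, ⟨hQ, hltQ⟩, hqQ⟩
    have h2 : q < w := lt_of_lt_of_le hqI.2 (min_le_left w (y+1))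
    linarith

noncomputable def affIso (k l : ℝ) (hk : 0 < k) : ℝ ≃o ℝ :=
  StrictMono.orderIsoOfRightInverse (fun t => k * t + l)
    ((strictMono_mul_left_of_pos hk).add_const l)
    (fun s => (s - l) / k) (fun s => by dsimp; field_simp; ring)

lemma affIso_apply (k l : ℝ) (hk : 0 < k) (t : ℝ) : affIso k l hk t = k * t + l := rfl

noncomputable def Sset (X : Set ℝ) (e : Set ℝ → ℝ ≃o ℝ) (x : ℝ) : Set ℝ :=
  {v | ∃ Q, Q ∈ QOf X ∧ ∃ q ∈ Q, q ≤ x ∧ v = e Q q}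

lemma QOf_empty : QOf (∅ : Set ℝ) = {univ} := by
  have hgap : gapsOf (∅ : Set ℝ) = {univ} := by
    apply Subset.antisymm
    · rintro S ⟨x, -, rfl⟩
      simp only [mem_singleton_iff, compl_empty]
      rw [connectedComponentIn_univ]
      exact PreconnectedSpace.connectedComponent_eq_univ x
    · rintro S hS
      rcases hS with rfl
      refine ⟨0, notMem_empty 0, ?_⟩
      rw [compl_empty, connectedComponentIn_univ]
      exact (PreconnectedSpace.connectedComponent_eq_univ 0).symm
  have hint : intervalsOf (∅ : Set ℝ) = ∅ := by
    apply eq_empty_iff_forall_notMem.mpr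
    rintro S ⟨⟨x, hx, -⟩, -⟩
    exact notMem_empty x hx
  rw [QOf, hgap, hint, union_empty]
theorem homeo_of_gap_isomorphism (X Y : Set ℝ) (hX : IsCompact X) (hY : IsCompact Y)
    (f : Set ℝ → Set ℝ) (hbij : Set.BijOn f (QOf X) (QOf Y))
    (hmono : ∀ I ∈ QOf X, ∀ J ∈ QOf X, (setLT I J ↔ setLT (f I) (f J)))
    (hgaps : f '' gapsOf X = gapsOf Y) :
    ∃ F : ℝ ≃ₜ ℝ, StrictMono F ∧ F '' X = Y := by
  classical
  by_cases hXe : X = ∅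
  · -- then Y = ∅ and the identity works
    have hYe : Y = ∅ := by
      by_contra hYe
      have hYne : Y.Nonempty := nonempty_iff_ne_empty.mpr hYe
      have hQY : QOf Y = {f univ} := by
        rw [← hbij.image_eq, hXe, QOf_empty, image_singleton]
      have h1 : Iio (sInf Y) ∈ QOf Y := Or.inl (mingap_mem hY hYne)
      have h2 : Ioi (sSup Y) ∈ QOf Y := Or.inl (maxgap_mem hY hYne)
      rw [hQY, mem_singleton_iff] at h1 h2
      have h3 : Iio (sInf Y) = Ioi (sSup Y) := h1.trans h2.symm
      have h4 : sInf Y - 1 ∈ Iio (sInf Y) := by simp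
      rw [h3, mem_Ioi] at h4
      have h5 : sInf Y ≤ sSup Y := csInf_le_csSup hYne hY.bddBelow hY.bddAbove
      linarith
    refine ⟨Homeomorph.refl ℝ, fun a b h => h, ?_⟩
    rw [hXe, hYe, image_empty]
  by_cases hYe : Y = ∅
  · exfalso
    have hXne : X.Nonempty := nonempty_iff_ne_empty.mpr hXe
    have hQY : QOf Y = {univ} := by rw [hYe, QOf_empty]
    have h1 : Iio (sInf X) ∈ QOf X := Or.inl (mingap_mem hX hXne)
    have h2 : Ioi (sSup X) ∈ QOf X := Or.inl (maxgap_mem hX hXne)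
    have h1' := hbij.mapsTo h1
    have h2' := hbij.mapsTo h2
    rw [hQY, mem_singleton_iff] at h1' h2'
    have h3 : Iio (sInf X) = Ioi (sSup X) := hbij.injOn h1 h2 (h1'.trans h2'.symm)
    have h4 : sInf X - 1 ∈ Iio (sInf X) := by simp
    rw [h3, mem_Ioi] at h4
    have h5 : sInf X ≤ sSup X := csInf_le_csSup hXne hX.bddBelow hX.bddAbove
    linarith
  have hXne : X.Nonempty := nonempty_iff_ne_empty.mpr hXe
  have hYne : Y.Nonempty := nonempty_iff_ne_empty.mpr hYe
  have hQXmin : Iio (sInf X) ∈ QOf X := Or.inl (mingap_mem hX hXne)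
  have hQXmax : Ioi (sSup X) ∈ QOf X := Or.inl (maxgap_mem hX hXne)
  have hQYmin : Iio (sInf Y) ∈ QOf Y := Or.inl (mingap_mem hY hYne)
  have hQYmax : Ioi (sSup Y) ∈ QOf Y := Or.inl (maxgap_mem hY hYne)
  -- the leftmost gap is below everything else, and dually
  have hminlt : ∀ J ∈ QOf X, J ≠ Iio (sInf X) → setLT (Iio (sInf X)) J := by
    intro J hJ hne
    rcases QOf_comparable hQXmin hJ (Ne.symm hne) with h | h
    · exact h
    · exfalso
      obtain ⟨j, hj⟩ := QOf_nonempty hJ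
      have h2 : min (sInf X) j - 1 ∈ Iio (sInf X) := by
        have := min_le_left (sInf X) j; simp only [mem_Iio]; linarith
      have h3 := h j hj _ h2
      have := min_le_right (sInf X) j; linarith
  have hmaxlt : ∀ J ∈ QOf X, J ≠ Ioi (sSup X) → setLT J (Ioi (sSup X)) := by
    intro J hJ hne
    rcases QOf_comparable hJ hQXmax hne with h | h
    · exact h
    · exfalso
      obtain ⟨j, hj⟩ := QOf_nonempty hJ
      have h2 : max (sSup X) j + 1 ∈ Ioi (sSup X) := by
        have := le_max_left (sSup X) j; simp only [mem_Ioi]; linarith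
      have h3 := h _ h2 j hj
      have := le_max_right (sSup X) j; linarith
  -- f sends the extreme gaps to the extreme gaps
  have hfmin : f (Iio (sInf X)) = Iio (sInf Y) := by
    by_contra hne
    obtain ⟨J₀, hJ₀, hJeq⟩ := hbij.surjOn hQYmin
    have hJ₀ne : J₀ ≠ Iio (sInf X) := by rintro rfl; exact hne hJeq
    have h1 : setLT (Iio (sInf X)) J₀ := hminlt J₀ hJ₀ hJ₀ne
    have h2 : setLT (f (Iio (sInf X))) (Iio (sInf Y)) := by
      rw [← hJeq]; exact (hmono _ hQXmin _ hJ₀).mp h1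
    obtain ⟨v, hv⟩ := QOf_nonempty (hbij.mapsTo hQXmin)
    have h3 : min v (sInf Y) - 1 ∈ Iio (sInf Y) := by
      have := min_le_right v (sInf Y); simp only [mem_Iio]; linarith
    have h4 := h2 v hv _ h3
    have := min_le_left v (sInf Y); linarith
  have hfmax : f (Ioi (sSup X)) = Ioi (sSup Y) := by
    by_contra hne
    obtain ⟨J₀, hJ₀, hJeq⟩ := hbij.surjOn hQYmax
    have hJ₀ne : J₀ ≠ Ioi (sSup X) := by rintro rfl; exact hne hJeq
    have h1 : setLT J₀ (Ioi (sSup X)) := hmaxlt J₀ hJ₀ hJ₀ne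
    have h2 : setLT (Ioi (sSup Y)) (f (Ioi (sSup X))) := by
      rw [← hJeq]; exact (hmono _ hJ₀ _ hQXmax).mp h1
    obtain ⟨v, hv⟩ := QOf_nonempty (hbij.mapsTo hQXmax)
    have h3 : max v (sSup Y) + 1 ∈ Ioi (sSup Y) := by
      have := le_max_right v (sSup Y); simp only [mem_Ioi]; linarith
    have h4 := h2 _ h3 v hv
    have := le_max_left v (sSup Y); linarith
  have hgapiff : ∀ Q ∈ QOf X, (Q ∈ gapsOf X ↔ f Q ∈ gapsOf Y) := by
    intro Q hQ
    constructor
    · intro h; rw [← hgaps]; exact mem_image_of_mem f h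
    · intro h
      rw [← hgaps] at h
      obtain ⟨Q'', hQ'', heq⟩ := h
      have := hbij.injOn (Or.inl hQ'' : Q'' ∈ QOf X) hQ heq
      rwa [← this]
  have hintY : ∀ Q ∈ QOf X, Q ∈ intervalsOf X → f Q ∈ intervalsOf Y := by
    intro Q hQ hint
    rcases hbij.mapsTo hQ with hg | hi
    · exact absurd hint (fun h => gap_interval_disjoint ((hgapiff Q hQ).mpr hg) h)
    · exact hi
  have hintX : ∀ Q ∈ QOf X, f Q ∈ intervalsOf Y → Q ∈ intervalsOf X := by
    intro Q hQ hint
    rcases hQ with hg | hi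
    · exact absurd hint (fun h => gap_interval_disjoint ((hgapiff Q (Or.inl hg)).mp hg) h)
    · exact hi
  -- choice of increasing bijections realizing f on each member
  have hA : ∀ Q : Set ℝ, ∃ e : ℝ ≃o ℝ, Q ∈ QOf X → e '' Q = f Q := by
    intro Q
    by_cases hQ : Q ∈ QOf X
    swap
    · exact ⟨affIso 1 0 one_pos, fun h => absurd h hQ⟩
    rcases hQ with hg | hi
    · have hfg : f Q ∈ gapsOf Y := (hgapiff Q (Or.inl hg)).mp hg
      rcases gap_shape hX hXne hg with h1 | h2 | h3
      · refine ⟨affIso 1 (sInf Y - sInf X) one_pos, fun _ => ?_⟩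
        have hea : affIso 1 (sInf Y - sInf X) one_pos (sInf X) = sInf Y := by
          rw [affIso_apply]; ring
        rw [h1, OrderIso.image_Iio, hfmin, hea]
      · refine ⟨affIso 1 (sSup Y - sSup X) one_pos, fun _ => ?_⟩
        have hea : affIso 1 (sSup Y - sSup X) one_pos (sSup X) = sSup Y := by
          rw [affIso_apply]; ring
        rw [h2, OrderIso.image_Ioi, hfmax, hea]
      · obtain ⟨a, b, hab, h3⟩ := h3
        have hne1 : f Q ≠ Iio (sInf Y) := by
          intro h
          have heq : Q = Iio (sInf X) := hbij.injOn (Or.inl hg) hQXmin (h.trans hfmin.symm)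
          have hmem : min a (sInf X) - 1 ∈ Iio (sInf X) := by
            have := min_le_right a (sInf X); simp only [mem_Iio]; linarith
          rw [← heq, h3] at hmem
          have := min_le_left a (sInf X); have := hmem.1; linarith
        have hne2 : f Q ≠ Ioi (sSup Y) := by
          intro h
          have heq : Q = Ioi (sSup X) := hbij.injOn (Or.inl hg) hQXmax (h.trans hfmax.symm)
          have hmem : max b (sSup X) + 1 ∈ Ioi (sSup X) := by
            have := le_max_right b (sSup X); simp only [mem_Ioi]; linarith
          rw [← heq, h3] at hmem
          have := le_max_left b (sSup X); have := hmem.2; linarith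
        rcases gap_shape hY hYne hfg with h1' | h2' | h3'
        · exact absurd h1' hne1
        · exact absurd h2' hne2
        · obtain ⟨c, d, hcd, h3'⟩ := h3'
          have hba : b - a ≠ 0 := sub_ne_zero.mpr hab.ne'
          have hkpos : 0 < (d - c) / (b - a) := div_pos (by linarith) (by linarith)
          refine ⟨affIso _ (c - a * ((d - c) / (b - a))) hkpos, fun _ => ?_⟩
          have hea : affIso _ (c - a * ((d - c) / (b - a))) hkpos a = c := by
            rw [affIso_apply]; ring
          have heb : affIso _ (c - a * ((d - c) / (b - a))) hkpos b = d := by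
            rw [affIso_apply]; field_simp; ring
          rw [h3', h3, OrderIso.image_Ioo, hea, heb]
    · have hfint : f Q ∈ intervalsOf Y := hintY Q (Or.inr hi) hi
      obtain ⟨a, b, hab, h3⟩ := interval_shape hX hi
      obtain ⟨c, d, hcd, h3'⟩ := interval_shape hY hfint
      have hba : b - a ≠ 0 := sub_ne_zero.mpr hab.ne'
      have hkpos : 0 < (d - c) / (b - a) := div_pos (by linarith) (by linarith)
      refine ⟨affIso _ (c - a * ((d - c) / (b - a))) hkpos, fun _ => ?_⟩
      have hea : affIso _ (c - a * ((d - c) / (b - a))) hkpos a = c := by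
        rw [affIso_apply]; ring
      have heb : affIso _ (c - a * ((d - c) / (b - a))) hkpos b = d := by
        rw [affIso_apply]; field_simp; ring
      rw [h3', h3, OrderIso.image_Icc, hea, heb]
  choose e he using hA
  have hmemval : ∀ Q, Q ∈ QOf X → ∀ q ∈ Q, e Q q ∈ f Q := fun Q hQ q hq =>
    (he Q hQ) ▸ mem_image_of_mem _ hq
  have hltQQ' : ∀ Q ∈ QOf X, ∀ Q' ∈ QOf X, Q ≠ Q' → ∀ q ∈ Q, ∀ q' ∈ Q', q ≤ q' →
      setLT Q Q' := by
    intro Q hQ Q' hQ' hne q hq q' hq' hle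
    rcases QOf_comparable hQ hQ' hne with h | h
    · exact h
    · exact absurd (h q' hq' q hq) (not_lt.mpr hle)
  have hvallt : ∀ Q ∈ QOf X, ∀ Q' ∈ QOf X, Q ≠ Q' → ∀ q ∈ Q, ∀ q' ∈ Q', q ≤ q' →
      e Q q < e Q' q' := by
    intro Q hQ Q' hQ' hne q hq q' hq' hle
    exact (hmono Q hQ Q' hQ').mp (hltQQ' Q hQ Q' hQ' hne q hq q' hq' hle)
      _ (hmemval Q hQ q hq) _ (hmemval Q' hQ' q' hq')
  have hSne : ∀ x : ℝ, (Sset X e x).Nonempty := by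
    intro x
    refine ⟨e (Iio (sInf X)) (min x (sInf X) - 1), Iio (sInf X), hQXmin,
      min x (sInf X) - 1, ?_, ?_, rfl⟩
    · have := min_le_right x (sInf X); simp only [mem_Iio]; linarith
    · have := min_le_left x (sInf X); linarith
  have hSbdd : ∀ x : ℝ, BddAbove (Sset X e x) := by
    intro x
    refine ⟨e (Ioi (sSup X)) (max x (sSup X) + 1), ?_⟩
    rintro v ⟨Q, hQ, q, hq, hqx, rfl⟩
    have hmem : max x (sSup X) + 1 ∈ Ioi (sSup X) := by
      have := le_max_right x (sSup X); simp only [mem_Ioi]; linarith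
    by_cases hQM : Q = Ioi (sSup X)
    · subst hQM
      exact (e _).monotone (by have := le_max_left x (sSup X); linarith)
    · exact (hvallt Q hQ _ hQXmax hQM q hq _ hmem
        (by have := le_max_left x (sSup X); linarith)).le
  set F : ℝ → ℝ := fun x => sSup (Sset X e x) with hFdef
  have hFval : ∀ Q, Q ∈ QOf X → ∀ x ∈ Q, F x = e Q x := by
    intro Q hQ x hx
    apply IsGreatest.csSup_eq
    constructor
    · exact ⟨Q, hQ, x, hx, le_rfl, rfl⟩
    · rintro v ⟨Q', hQ', q, hq, hqx, rfl⟩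
      by_cases hQQ : Q' = Q
      · subst hQQ; exact (e Q').monotone hqx
      · exact (hvallt Q' hQ' Q hQ hQQ q hq x hx hqx).le
  have htrivcase : ∀ Z : Set ℝ, ∀ p ∈ Z,
      (∃ Q ∈ intervalsOf Z, p ∈ Q) ∨ connectedComponentIn Z p = {p} := by
    intro Z p hp
    by_cases hnt : (connectedComponentIn Z p).Nontrivial
    · exact Or.inl ⟨_, ⟨⟨p, hp, rfl⟩, hnt⟩, mem_connectedComponentIn hp⟩
    · exact Or.inr ((Set.not_nontrivial_iff.mp hnt).eq_singleton_of_mem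
        (mem_connectedComponentIn hp))
  have hQnontriv : ∀ Q ∈ QOf X, ∀ q ∈ Q, ∃ u ∈ Q, u ≠ q := by
    intro Q hQ q hq
    have hnt : Q.Nontrivial := by
      rcases hQ with hg | hi
      · rcases gap_shape hX hXne hg with h | h | ⟨a, b, hab, h⟩
        · rw [h]
          exact ⟨sInf X - 2, by simp only [mem_Iio]; linarith,
            sInf X - 1, by simp only [mem_Iio]; linarith, by norm_num⟩
        · rw [h]
          exact ⟨sSup X + 1, by simp only [mem_Ioi]; linarith,
            sSup X + 2, by simp only [mem_Ioi]; linarith, by norm_num⟩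
        · rw [h]
          exact ⟨(2*a+b)/3, ⟨by linarith, by linarith⟩,
            (a+2*b)/3, ⟨by linarith, by linarith⟩, by intro hc; field_simp at hc; linarith⟩
      · exact hi.2
    obtain ⟨a, ha, b, hb, hab⟩ := hnt
    by_cases h : a = q
    · exact ⟨b, hb, by rw [← h]; exact hab.symm⟩
    · exact ⟨a, ha, h⟩
  have htwopts : ∀ Q ∈ QOf X, ∀ x z q : ℝ, q ∈ Q → q ∈ Ioo x z →
      ∃ q1 q2, q1 ∈ Q ∧ q2 ∈ Q ∧ x < q1 ∧ q1 < q2 ∧ q2 < z := by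
    intro Q hQ x z q hqQ hqI
    obtain ⟨u, huQ, hune⟩ := hQnontriv Q hQ q hqQ
    have hord := QOf_ordConnected hQ
    rcases hune.lt_or_gt with h | h
    · refine ⟨max u ((x+q)/2), q, ?_, hqQ, ?_, ?_, hqI.2⟩
      · exact hord.out huQ hqQ ⟨le_max_left _ _, max_le h.le (by linarith [hqI.1])⟩
      · exact lt_of_lt_of_le (by linarith [hqI.1]) (le_max_right _ _)
      · exact max_lt h (by linarith [hqI.1])
    · refine ⟨q, min u ((q+z)/2), hqQ, ?_, hqI.1, ?_, ?_⟩
      · exact hord.out hqQ huQ ⟨le_min h.le (by linarith [hqI.2]), min_le_left _ _⟩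
      · exact lt_min h (by linarith [hqI.2])
      · exact lt_of_le_of_lt (min_le_right _ _) (by linarith [hqI.2])
  have hFstrict : StrictMono F := by
    intro x z hxz
    obtain ⟨Q, hQ, q, hqmem⟩ := meet_lemma X hxz
    obtain ⟨hqQ, hqI⟩ := hqmem
    by_cases hcA : ∃ Q₀, Q₀ ∈ QOf X ∧ x ∈ Q₀ ∧ (Q₀ ∩ Ioo x z).Nonempty
    · obtain ⟨Q₀, hQ₀, hxQ₀, q₀, hq₀Q, hq₀I⟩ := hcA
      calc F x = e Q₀ x := hFval Q₀ hQ₀ x hxQ₀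
        _ < e Q₀ q₀ := (e Q₀).strictMono hq₀I.1
        _ ≤ F z := le_csSup (hSbdd z) ⟨Q₀, hQ₀, q₀, hq₀Q, hq₀I.2.le, rfl⟩
    · obtain ⟨q1, q2, hq1Q, hq2Q, hxq1, hq12, hq2z⟩ := htwopts Q hQ x z q hqQ hqI
      have hub : ∀ v ∈ Sset X e x, v ≤ e Q q1 := by
        rintro v ⟨Q', hQ', q', hq', hq'x, rfl⟩
        have hQQ' : Q' ≠ Q := by
          rintro rfl
          exact hcA ⟨Q', hQ', (QOf_ordConnected hQ').out hq' hq1Q ⟨hq'x, hxq1.le⟩,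
            q1, hq1Q, hxq1, by linarith⟩
        exact (hvallt Q' hQ' Q hQ hQQ' q' hq' q1 hq1Q (by linarith)).le
      calc F x ≤ e Q q1 := csSup_le (hSne x) hub
        _ < e Q q2 := (e Q).strictMono hq12
        _ ≤ F z := le_csSup (hSbdd z) ⟨Q, hQ, q2, hq2Q, hq2z.le, rfl⟩
  -- F maps trivial components of X into Y
  have hFtrivY : ∀ p ∈ X, connectedComponentIn X p = {p} → F p ∈ Y := by
    intro p hpX htriv
    by_contra hFpY
    have hG'gap : connectedComponentIn Yᶜ (F p) ∈ gapsOf Y := ⟨F p, hFpY, rfl⟩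
    have hFpG' : F p ∈ connectedComponentIn Yᶜ (F p) := mem_connectedComponentIn hFpY
    obtain ⟨Q₂, hQ₂gap, hQ₂eq⟩ : connectedComponentIn Yᶜ (F p) ∈ f '' gapsOf X :=
      hgaps ▸ hG'gap
    have hQ₂ : Q₂ ∈ QOf X := Or.inl hQ₂gap
    have hpQ₂ : p ∉ Q₂ := triv_not_mem hpX htriv hQ₂
    have hG'open : IsOpen (connectedComponentIn Yᶜ (F p)) :=
      hY.isClosed.isOpen_compl.connectedComponentIn
    obtain ⟨ε, hε, hball⟩ := Metric.isOpen_iff.mp hG'open _ hFpG'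
    rw [Real.ball_eq_Ioo] at hball
    obtain ⟨w2, hw2⟩ := QOf_nonempty hQ₂
    have hw2p : w2 ≠ p := fun h => hpQ₂ (h ▸ hw2)
    rcases hw2p.lt_or_gt with hlt | hgt
    · have hslt : setLT Q₂ {p} := setLT_singleton hQ₂ hw2 hpQ₂ hlt
      have hsub : ∀ w ∈ connectedComponentIn Yᶜ (F p), w ≤ F p := by
        intro w hw
        rw [← hQ₂eq, ← he Q₂ hQ₂] at hw
        obtain ⟨q, hq, rfl⟩ := hw
        exact le_csSup (hSbdd p) ⟨Q₂, hQ₂, q, hq, (hslt q hq p rfl).le, rfl⟩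
      have hmem : F p + ε/2 ∈ connectedComponentIn Yᶜ (F p) :=
        hball ⟨by linarith, by linarith⟩
      linarith [hsub _ hmem]
    · have hsgt : setLT {p} Q₂ := singleton_setLT hQ₂ hw2 hpQ₂ hgt
      have hmem : F p - ε/2 ∈ connectedComponentIn Yᶜ (F p) :=
        hball ⟨by linarith, by linarith⟩
      have hub : ∀ v ∈ Sset X e p, v ≤ F p - ε/2 := by
        rintro v ⟨Q, hQ, q, hq, hqp, rfl⟩
        have hqnep : q ≠ p := fun h => (triv_not_mem hpX htriv hQ) (h ▸ hq)
        have hqp' : q < p := lt_of_le_of_ne hqp hqnep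
        have hQne : Q ≠ Q₂ := by
          rintro rfl
          exact absurd (hsgt p rfl q hq) (not_lt.mpr hqp'.le)
        have hltf : setLT (f Q) (f Q₂) := (hmono Q hQ Q₂ hQ₂).mp
          (hltQQ' Q hQ Q₂ hQ₂ hQne q hq w2 hw2 (hqp'.trans hgt).le)
        have hmem2 : (F p - ε/2) ∈ f Q₂ := by rw [hQ₂eq]; exact hmem
        exact (hltf _ (hmemval Q hQ q hq) _ hmem2).le
      have : F p ≤ F p - ε/2 := csSup_le (hSne p) hub
      linarith
  -- the key construction for trivial points of Y
  have hmain : ∀ y, y ∈ Y → connectedComponentIn Y y = {y} →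
      ∃ x ∈ X, connectedComponentIn X x = {x} ∧ F x = y := by
    intro y hyY hytriv
    set U := {Q | Q ∈ QOf X ∧ setLT (f Q) {y}} with hU
    have hminU : Iio (sInf X) ∈ U := by
      refine ⟨hQXmin, ?_⟩
      rw [hfmin]
      rintro v hv t rfl
      exact lt_of_lt_of_le (mem_Iio.mp hv) (csInf_le hY.bddBelow hyY)
    have hUne : (⋃₀ U).Nonempty := ⟨sInf X - 1, Iio (sInf X), hminU, by simp⟩
    have hUbdd : BddAbove (⋃₀ U) := by
      refine ⟨sSup X + 1, ?_⟩
      rintro q ⟨Q, ⟨hQ, hQlt⟩, hqQ⟩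
      have hQne : Q ≠ Ioi (sSup X) := by
        rintro rfl
        rw [hfmax] at hQlt
        have h1 : sSup Y + 1 < y := hQlt _ (mem_Ioi.mpr (by linarith)) y rfl
        have h2 : y ≤ sSup Y := le_csSup hY.bddAbove hyY
        linarith
      exact (hmaxlt Q hQ hQne q hqQ (sSup X + 1) (mem_Ioi.mpr (by linarith))).le
    set x := sSup (⋃₀ U) with hx
    have hxub : ∀ Q ∈ U, ∀ q ∈ Q, q ≤ x := fun Q hQ q hq => le_csSup hUbdd ⟨Q, hQ, hq⟩
    have hyLUB := triv_isLUB hyY hytriv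
    have hyGLB := triv_isGLB hyY hytriv
    have hxnot : ∀ Q₀ ∈ QOf X, x ∉ Q₀ := by
      intro Q₀ hQ₀ hxQ₀
      have hynQ₀ : y ∉ f Q₀ := triv_not_mem hyY hytriv (hbij.mapsTo hQ₀)
      obtain ⟨w0, hw0⟩ := QOf_nonempty (hbij.mapsTo hQ₀)
      have hw0y : w0 ≠ y := fun h => hynQ₀ (h ▸ hw0)
      rcases hw0y.lt_or_gt with hlt | hgt
      · have hslt : setLT (f Q₀) {y} := setLT_singleton (hbij.mapsTo hQ₀) hw0 hynQ₀ hlt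
        have hQ₀U : Q₀ ∈ U := ⟨hQ₀, hslt⟩
        have hm₀ : e Q₀ x ∈ f Q₀ := hmemval Q₀ hQ₀ x hxQ₀
        have hm₀y : e Q₀ x < y := hslt _ hm₀ y rfl
        have hnub : ¬ (∀ w' ∈ ⋃₀ {Q' | Q' ∈ QOf Y ∧ setLT Q' {y}}, w' ≤ e Q₀ x) := by
          intro h
          exact absurd (hyLUB.2 h) (not_le.mpr hm₀y)
        push_neg at hnub
        obtain ⟨w', hw'mem, hw'gt⟩ := hnub
        obtain ⟨Q₁', ⟨hQ₁', hQ₁'lt⟩, hw'Q₁⟩ := hw'mem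
        obtain ⟨Q₁, hQ₁, rfl⟩ := hbij.surjOn hQ₁'
        by_cases h10 : Q₁ = Q₀
        · subst h10
          rw [← he Q₁ hQ₁] at hw'Q₁
          obtain ⟨q', hq', rfl⟩ := hw'Q₁
          exact absurd ((e Q₁).monotone (hxub Q₁ ⟨hQ₁, hQ₁'lt⟩ q' hq'))
            (not_le.mpr hw'gt)
        · rcases QOf_comparable hQ₁ hQ₀ h10 with hc | hc
          · have := (hmono _ hQ₁ _ hQ₀).mp hc _ hw'Q₁ _ hm₀
            linarith
          · obtain ⟨q1, hq1⟩ := QOf_nonempty hQ₁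
            have h1 := hc x hxQ₀ q1 hq1
            have h2 := hxub Q₁ ⟨hQ₁, hQ₁'lt⟩ q1 hq1
            linarith
      · have hsgt : setLT {y} (f Q₀) := singleton_setLT (hbij.mapsTo hQ₀) hw0 hynQ₀ hgt
        have hQ₀nU : Q₀ ∉ U := by
          rintro ⟨-, hlt2⟩
          exact absurd (hsgt y rfl w0 hw0) (not_lt.mpr (hlt2 w0 hw0 y rfl).le)
        have hleast : ∀ p ∈ Q₀, x ≤ p := by
          intro p hp
          by_contra hpx
          push_neg at hpx
          obtain ⟨q1, ⟨Q₁, hQ₁U, hq1Q₁⟩, hpq1⟩ := exists_lt_of_lt_csSup hUne hpx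
          have h10 : Q₁ ≠ Q₀ := fun h => hQ₀nU (h ▸ hQ₁U)
          have hltf : setLT (f Q₁) (f Q₀) := setLT_trans hQ₁U.2 hsgt ⟨y, rfl⟩
          have hltQ : setLT Q₁ Q₀ := (hmono _ hQ₁U.1 _ hQ₀).mpr hltf
          exact absurd (hltQ q1 hq1Q₁ p hp) (not_lt.mpr hpq1.le)
        have hQ₀int : Q₀ ∈ intervalsOf X := by
          rcases hQ₀ with hg | hi
          · exfalso
            rcases gap_shape hX hXne hg with h | h | ⟨a, b, hab, h⟩
            · rw [h] at hxQ₀ hleast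
              have := hleast (x - 1) (by simp only [mem_Iio] at hxQ₀ ⊢; linarith)
              linarith
            · rw [h] at hxQ₀ hleast
              have := hleast ((sSup X + x)/2)
                (by simp only [mem_Ioi] at hxQ₀ ⊢; linarith)
              simp only [mem_Ioi] at hxQ₀; linarith
            · rw [h] at hxQ₀ hleast
              have := hleast ((a + x)/2) ⟨by linarith [hxQ₀.1], by linarith [hxQ₀.2, hxQ₀.1]⟩
              linarith [hxQ₀.1]
          · exact hi
        have hm₀ : e Q₀ x ∈ f Q₀ := hmemval Q₀ hQ₀ x hxQ₀
        have hym₀ : y < e Q₀ x := hsgt y rfl _ hm₀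
        have hlb : ∀ w' ∈ ⋃₀ {Q' | Q' ∈ QOf Y ∧ setLT {y} Q'}, e Q₀ x ≤ w' := by
          rintro w' ⟨Q₂', ⟨hQ₂', hQ₂'lt⟩, hw'⟩
          obtain ⟨Q₂, hQ₂, rfl⟩ := hbij.surjOn hQ₂'
          by_cases h20 : Q₂ = Q₀
          · subst h20
            rw [← he Q₂ hQ₂] at hw'
            obtain ⟨q', hq', rfl⟩ := hw'
            exact (e Q₂).monotone (hleast q' hq')
          · rcases QOf_comparable hQ₂ hQ₀ h20 with hc | hc
            · exfalso
              obtain ⟨q2, hq2⟩ := QOf_nonempty hQ₂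
              have h1 : q2 < x := hc q2 hq2 x hxQ₀
              have h2 : x ≤ q2 := by
                apply csSup_le hUne
                rintro t ⟨Q₃, hQ₃U, htQ₃⟩
                have hltf : setLT (f Q₃) (f Q₂) := setLT_trans hQ₃U.2 hQ₂'lt ⟨y, rfl⟩
                exact ((hmono _ hQ₃U.1 _ hQ₂).mpr hltf t htQ₃ q2 hq2).le
              linarith
            · exact ((hmono _ hQ₀ _ hQ₂).mp hc _ hm₀ _ hw').le
        exact absurd (hyGLB.2 hlb) (not_le.mpr hym₀)
    have hxX : x ∈ X := by
      by_contra hxXc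
      have hxc : x ∈ (Xᶜ : Set ℝ) := hxXc
      exact hxnot _ (Or.inl ⟨x, hxXc, rfl⟩) (mem_connectedComponentIn hxc)
    have hxtriv : connectedComponentIn X x = {x} := by
      rcases htrivcase X x hxX with ⟨Q, hQint, hxQ⟩ | h
      · exact absurd hxQ (hxnot Q (Or.inr hQint))
      · exact h
    refine ⟨x, hxX, hxtriv, ?_⟩
    have hlub : IsLUB (Sset X e x) y := by
      constructor
      · rintro v ⟨Q, hQ, q, hq, hqx, rfl⟩
        have hqnex : q ≠ x := fun h => hxnot Q hQ (h ▸ hq)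
        have hqx' : q < x := lt_of_le_of_ne hqx hqnex
        have hQU : Q ∈ U := by
          by_contra hQU
          have hynQ : y ∉ f Q := triv_not_mem hyY hytriv (hbij.mapsTo hQ)
          obtain ⟨w0, hw0⟩ := QOf_nonempty (hbij.mapsTo hQ)
          have hw0y : w0 ≠ y := fun h => hynQ (h ▸ hw0)
          rcases hw0y.lt_or_gt with hlt | hgt
          · exact hQU ⟨hQ, setLT_singleton (hbij.mapsTo hQ) hw0 hynQ hlt⟩
          · have hsgt := singleton_setLT (hbij.mapsTo hQ) hw0 hynQ hgt
            have h2 : x ≤ q := by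
              apply csSup_le hUne
              rintro t ⟨Q₃, hQ₃U, htQ₃⟩
              have hltf : setLT (f Q₃) (f Q) := setLT_trans hQ₃U.2 hsgt ⟨y, rfl⟩
              exact ((hmono _ hQ₃U.1 _ hQ).mpr hltf t htQ₃ q hq).le
            linarith
        exact (hQU.2 _ (hmemval Q hQ q hq) y rfl).le
      · intro w hw
        apply hyLUB.2
        rintro w' ⟨Q', ⟨hQ', hQ'lt⟩, hw'⟩
        obtain ⟨Q, hQ, rfl⟩ := hbij.surjOn hQ'
        rw [← he Q hQ] at hw'
        obtain ⟨q', hq', rfl⟩ := hw'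
        exact hw ⟨Q, hQ, q', hq', hxub Q ⟨hQ, hQ'lt⟩ q' hq', rfl⟩
    exact hlub.csSup_eq (hSne x)
  -- image of X is Y
  have hFXY : F '' X ⊆ Y := by
    rintro - ⟨p, hpX, rfl⟩
    rcases htrivcase X p hpX with ⟨Q, hQint, hpQ⟩ | htriv
    · rw [hFval Q (Or.inr hQint) p hpQ]
      have hmem : e Q p ∈ f Q := hmemval Q (Or.inr hQint) p hpQ
      obtain ⟨⟨w, hw, hEq⟩, -⟩ := hintY Q (Or.inr hQint) hQint
      rw [hEq] at hmem
      exact connectedComponentIn_subset _ _ hmem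
    · exact hFtrivY p hpX htriv
  have hYFX : Y ⊆ F '' X := by
    intro y hyY
    by_cases hyQ : ∃ Q' ∈ QOf Y, y ∈ Q'
    · obtain ⟨Q', hQ', hyQ'⟩ := hyQ
      obtain ⟨Q, hQ, rfl⟩ := hbij.surjOn hQ'
      have hfint : f Q ∈ intervalsOf Y := by
        rcases hbij.mapsTo hQ with hg | hi
        · exfalso
          obtain ⟨w, hw, hEq⟩ := hg
          rw [hEq] at hyQ'
          exact connectedComponentIn_subset _ _ hyQ' hyY
        · exact hi
      have hQint : Q ∈ intervalsOf X := hintX Q hQ hfint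
      rw [← he Q hQ] at hyQ'
      obtain ⟨q, hq, rfl⟩ := hyQ'
      have hqX : q ∈ X := by
        obtain ⟨⟨w, hw, hEq⟩, -⟩ := hQint
        rw [hEq] at hq
        exact connectedComponentIn_subset _ _ hq
      exact ⟨q, hqX, hFval Q hQ q hq⟩
    · push_neg at hyQ
      have hytriv : connectedComponentIn Y y = {y} := by
        rcases htrivcase Y y hyY with ⟨Q, hQint, hyQ2⟩ | h
        · exact absurd hyQ2 (hyQ _ (Or.inr hQint))
        · exact h
      obtain ⟨x, hxX, -, hFx⟩ := hmain y hyY hytriv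
      exact ⟨x, hxX, hFx⟩
  have hsurj : Function.Surjective F := by
    intro y
    by_cases hyQ : ∃ Q' ∈ QOf Y, y ∈ Q'
    · obtain ⟨Q', hQ', hyQ'⟩ := hyQ
      obtain ⟨Q, hQ, rfl⟩ := hbij.surjOn hQ'
      rw [← he Q hQ] at hyQ'
      obtain ⟨q, hq, rfl⟩ := hyQ'
      exact ⟨q, hFval Q hQ q hq⟩
    · push_neg at hyQ
      by_cases hyY : y ∈ Y
      · have hytriv : connectedComponentIn Y y = {y} := by
          rcases htrivcase Y y hyY with ⟨Q, hQint, hyQ2⟩ | h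
          · exact absurd hyQ2 (hyQ _ (Or.inr hQint))
          · exact h
        obtain ⟨x, -, -, hFx⟩ := hmain y hyY hytriv
        exact ⟨x, hFx⟩
      · have hyc : y ∈ (Yᶜ : Set ℝ) := hyY
        exact absurd (mem_connectedComponentIn hyc)
          (hyQ _ (Or.inl ⟨y, hyY, rfl⟩))
  refine ⟨(StrictMono.orderIsoOfSurjective F hFstrict hsurj).toHomeomorph, ?_, ?_⟩
  · exact hFstrict
  · exact Subset.antisymm hFXY hYFX
end

section
/- Let ℚ be the rationals with the natural order, and suppose ℚ = A₀ ∪ A₁ ∪ ⋯ = B₀ ∪ B₁ ∪ ⋯ where the Aₙ are pairwise disjoint, the Bₙ are pairwise disjoint, and each Aₙ and each Bₙ is dense in ℚ (i.e., between any two rationals there is an element of each Aₙ and each Bₙ). Then there exists an order isomorphism f : ℚ → ℚ with f[Aₙ] = Bₙ for every n. -/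
noncomputable section ColoredBackAndForth

open Order

/-- Partial order isomorphisms of ℚ preserving colorings `c` (domain) and `d` (codomain). -/
def PIso (c d : ℚ → ℕ) : Type :=
  { f : Finset (ℚ × ℚ) //
    (∀ p ∈ f, ∀ q ∈ f, cmp p.1 q.1 = cmp p.2 q.2) ∧ ∀ p ∈ f, d p.2 = c p.1 }

namespace PIso

variable {c d : ℚ → ℕ}

instance : Inhabited (PIso c d) :=
  ⟨⟨∅, ⟨fun _ h => absurd h (Finset.notMem_empty _),
    fun _ h => absurd h (Finset.notMem_empty _)⟩⟩⟩

instance : Preorder (PIso c d) := Subtype.preorder _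

/-- Density of each color class of `d`. -/
def DenseColors (d : ℚ → ℕ) : Prop :=
  ∀ (n : ℕ) (p q : ℚ), p < q → ∃ s, d s = n ∧ p < s ∧ s < q

theorem exists_between_finsets_color (hd : DenseColors d) (n : ℕ) (lo hi : Finset ℚ)
    (lo_lt_hi : ∀ x ∈ lo, ∀ y ∈ hi, x < y) :
    ∃ m : ℚ, d m = n ∧ (∀ x ∈ lo, x < m) ∧ ∀ y ∈ hi, m < y := by
  by_cases nlo : lo.Nonempty
  · by_cases nhi : hi.Nonempty
    · obtain ⟨m, hm, h1, h2⟩ :=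
        hd n _ _ (lo_lt_hi _ (Finset.max'_mem _ nlo) _ (Finset.min'_mem _ nhi))
      exact ⟨m, hm, fun x hx => lt_of_le_of_lt (Finset.le_max' lo x hx) h1,
        fun y hy => lt_of_lt_of_le h2 (Finset.min'_le hi y hy)⟩
    · obtain ⟨m, hm, h1, _⟩ := hd n (lo.max' nlo) (lo.max' nlo + 1) (lt_add_one _)
      exact ⟨m, hm, fun x hx => lt_of_le_of_lt (Finset.le_max' lo x hx) h1,
        fun y hy => absurd ⟨y, hy⟩ nhi⟩
  · by_cases nhi : hi.Nonempty
    · obtain ⟨m, hm, _, h2⟩ := hd n (hi.min' nhi - 1) (hi.min' nhi) (sub_one_lt _)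
      exact ⟨m, hm, fun x hx => absurd ⟨x, hx⟩ nlo,
        fun y hy => lt_of_lt_of_le h2 (Finset.min'_le hi y hy)⟩
    · obtain ⟨m, hm, _, _⟩ := hd n 0 1 one_pos
      exact ⟨m, hm, fun x hx => absurd ⟨x, hx⟩ nlo, fun y hy => absurd ⟨y, hy⟩ nhi⟩

theorem exists_across (hd : DenseColors d) (f : PIso c d) (a : ℚ) :
    ∃ b : ℚ, d b = c a ∧ ∀ p ∈ f.val, cmp p.1 a = cmp p.2 b := by
  by_cases h : ∃ b, (a, b) ∈ f.val
  · obtain ⟨b, hb⟩ := h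
    exact ⟨b, f.prop.2 _ hb, fun p hp => f.prop.1 _ hp _ hb⟩
  have key :
      ∀ x ∈ (f.val.filter fun p : ℚ × ℚ => p.1 < a).image Prod.snd,
        ∀ y ∈ (f.val.filter fun p : ℚ × ℚ => a < p.1).image Prod.snd, x < y := by
    intro x hx y hy
    rw [Finset.mem_image] at hx hy
    rcases hx with ⟨p, hp1, rfl⟩
    rcases hy with ⟨q, hq1, rfl⟩
    rw [Finset.mem_filter] at hp1 hq1
    rw [← lt_iff_lt_of_cmp_eq_cmp (f.prop.1 _ hp1.1 _ hq1.1)]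
    exact lt_trans hp1.2 hq1.2
  obtain ⟨b, hbc, hb⟩ := exists_between_finsets_color hd (c a) _ _ key
  refine ⟨b, hbc, ?_⟩
  rintro ⟨p1, p2⟩ hp
  have hne : p1 ≠ a := fun he => h ⟨p2, he ▸ hp⟩
  rcases lt_or_gt_of_ne hne with hl | hr
  · have h2 : p1 < a ∧ p2 < b :=
      ⟨hl, hb.1 _ (Finset.mem_image.mpr ⟨(p1, p2), Finset.mem_filter.mpr ⟨hp, hl⟩, rfl⟩)⟩
    rw [← cmp_eq_lt_iff, ← cmp_eq_lt_iff] at h2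
    exact h2.1.trans h2.2.symm
  · have h2 : a < p1 ∧ b < p2 :=
      ⟨hr, hb.2 _ (Finset.mem_image.mpr ⟨(p1, p2), Finset.mem_filter.mpr ⟨hp, hr⟩, rfl⟩)⟩
    rw [← cmp_eq_gt_iff, ← cmp_eq_gt_iff] at h2
    exact h2.1.trans h2.2.symm

/-- Swap a partial isomorphism. -/
protected def comm (f : PIso c d) : PIso d c :=
  ⟨f.val.image (Equiv.prodComm ℚ ℚ), by
    constructor
    · intro p hp q hq
      obtain ⟨p', hp', rfl⟩ := Finset.mem_image.1 hp
      obtain ⟨q', hq', rfl⟩ := Finset.mem_image.1 hq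
      simpa using (f.prop.1 _ hp' _ hq').symm
    · intro p hp
      obtain ⟨p', hp', rfl⟩ := Finset.mem_image.1 hp
      simpa using (f.prop.2 _ hp').symm⟩

/-- Cofinal set of partial isomorphisms defined at `a`. -/
def definedAtLeft (hd : DenseColors d) (a : ℚ) : Cofinal (PIso c d) where
  carrier := {f | ∃ b : ℚ, (a, b) ∈ f.val}
  isCofinal f := by
    obtain ⟨b, hbc, a_b⟩ := exists_across hd f a
    refine ⟨⟨insert (a, b) f.val, ⟨fun p hp q hq => ?_, fun p hp => ?_⟩⟩,
      ⟨b, Finset.mem_insert_self _ _⟩, Finset.subset_insert _ _⟩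
    · rw [Finset.mem_insert] at hp hq
      rcases hp with (rfl | pf) <;> rcases hq with (rfl | qf)
      · simp only [cmp_self_eq_eq]
      · rw [cmp_eq_cmp_symm]; exact a_b _ qf
      · exact a_b _ pf
      · exact f.prop.1 _ pf _ qf
    · rw [Finset.mem_insert] at hp
      rcases hp with rfl | pf
      · exact hbc
      · exact f.prop.2 _ pf

/-- Cofinal set of partial isomorphisms hitting `b`. -/
def definedAtRight (hc : DenseColors c) (b : ℚ) : Cofinal (PIso c d) where
  carrier := {f | ∃ a : ℚ, (a, b) ∈ f.val}
  isCofinal f := by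
    rcases (definedAtLeft hc b).isCofinal f.comm with ⟨f', ⟨a, ha⟩, hl⟩
    refine ⟨f'.comm, ⟨a, ?_⟩, ?_⟩
    · exact Finset.mem_image.2 ⟨(b, a), ha, rfl⟩
    · intro p hp
      exact Finset.mem_image.2 ⟨(p.2, p.1), hl (Finset.mem_image.2 ⟨p, hp, rfl⟩), by simp⟩

end PIso

end ColoredBackAndForth

theorem rational_partition_isomorphism
    (A B : ℕ → Set ℚ)
    (hAdisj : Pairwise (Function.onFun Disjoint A))
    (hBdisj : Pairwise (Function.onFun Disjoint B))
    (hAcover : (⋃ n, A n) = Set.univ)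
    (hBcover : (⋃ n, B n) = Set.univ)
    (hAdense : ∀ n, ∀ p q : ℚ, p < q → ∃ s ∈ A n, p < s ∧ s < q)
    (hBdense : ∀ n, ∀ p q : ℚ, p < q → ∃ s ∈ B n, p < s ∧ s < q) :
    ∃ f : ℚ ≃o ℚ, ∀ n, f '' A n = B n := by
  classical
  -- colorings
  have hcex : ∀ q : ℚ, ∃ n, q ∈ A n := fun q =>
    Set.mem_iUnion.1 (hAcover ▸ Set.mem_univ q)
  have hdex : ∀ q : ℚ, ∃ n, q ∈ B n := fun q =>
    Set.mem_iUnion.1 (hBcover ▸ Set.mem_univ q)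
  set c : ℚ → ℕ := fun q => Classical.choose (hcex q) with hc_def
  set d : ℚ → ℕ := fun q => Classical.choose (hdex q) with hd_def
  have hcA : ∀ q, q ∈ A (c q) := fun q => Classical.choose_spec (hcex q)
  have hdB : ∀ q, q ∈ B (d q) := fun q => Classical.choose_spec (hdex q)
  have hAu : ∀ {q n}, q ∈ A n → c q = n := by
    intro q n hq
    by_contra h
    exact Set.disjoint_left.1 (hAdisj h) (hcA q) hq
  have hBu : ∀ {q n}, q ∈ B n → d q = n := by
    intro q n hq
    by_contra h
    exact Set.disjoint_left.1 (hBdisj h) (hdB q) hq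
  have hc' : PIso.DenseColors c := by
    intro n p q hpq
    obtain ⟨s, hs, h1, h2⟩ := hAdense n p q hpq
    exact ⟨s, hAu hs, h1, h2⟩
  have hd' : PIso.DenseColors d := by
    intro n p q hpq
    obtain ⟨s, hs, h1, h2⟩ := hBdense n p q hpq
    exact ⟨s, hBu hs, h1, h2⟩
  -- the ideal of partial isomorphisms
  let to_cofinal : ℚ ⊕ ℚ → Order.Cofinal (PIso c d) := fun p =>
    Sum.recOn p (PIso.definedAtLeft hd') (PIso.definedAtRight hc')
  let our_ideal : Order.Ideal (PIso c d) := Order.idealOfCofinals default to_cofinal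
  have hF : ∀ a : ℚ, ∃ b : ℚ, ∃ f ∈ our_ideal, (a, b) ∈ f.val := by
    intro a
    obtain ⟨f, ⟨b, hb⟩, hf⟩ := Order.cofinal_meets_idealOfCofinals default to_cofinal (Sum.inl a)
    exact ⟨b, f, hf, hb⟩
  have hG : ∀ b : ℚ, ∃ a : ℚ, ∃ f ∈ our_ideal, (a, b) ∈ f.val := by
    intro b
    obtain ⟨f, ⟨a, ha⟩, hf⟩ := Order.cofinal_meets_idealOfCofinals default to_cofinal (Sum.inr b)
    exact ⟨a, f, hf, ha⟩
  set F : ℚ → ℚ := fun a => Classical.choose (hF a) with hF_def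
  set G : ℚ → ℚ := fun b => Classical.choose (hG b) with hG_def
  have hFspec : ∀ a, ∃ f ∈ our_ideal, (a, F a) ∈ f.val := fun a => Classical.choose_spec (hF a)
  have hGspec : ∀ b, ∃ f ∈ our_ideal, (G b, b) ∈ f.val := fun b => Classical.choose_spec (hG b)
  have key : ∀ a b : ℚ, cmp a (G b) = cmp (F a) b := by
    intro a b
    obtain ⟨f, hf, ha⟩ := hFspec a
    obtain ⟨g, hg, hb⟩ := hGspec b
    rcases our_ideal.directed _ hf _ hg with ⟨m, _, fm, gm⟩
    exact m.prop.1 (a, _) (fm ha) (_, b) (gm hb)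
  let e : ℚ ≃o ℚ := OrderIso.ofCmpEqCmp F G key
  have hecol : ∀ a : ℚ, d (e a) = c a := by
    intro a
    obtain ⟨f, _, ha⟩ := hFspec a
    exact f.prop.2 _ ha
  refine ⟨e, fun n => Set.ext fun b => ?_⟩
  constructor
  · rintro ⟨a, haA, rfl⟩
    have : d (e a) = n := (hecol a).trans (hAu haA)
    exact this ▸ hdB (e a)
  · intro hb
    refine ⟨e.symm b, ?_, e.apply_symm_apply b⟩
    have h1 : c (e.symm b) = n := by
      have := hecol (e.symm b)
      rw [e.apply_symm_apply] at this
      rw [← this, hBu hb]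
    exact h1 ▸ hcA (e.symm b)
end

section
/- Let (X, <) be a linearly ordered set and Y ⊆ X a countable subset that interlaces X \ Y (between any two elements of X \ Y there is an element of Y). If every point of X having an immediate predecessor or immediate successor belongs to Y, then (X, <) is order-isomorphic to a subset of the unit interval [0,1]. -/
theorem order_iso_into_unit_interval {X : Type*} [LinearOrder X]
    (Y : Set X) (hc : Y.Countable)
    (hint : ∀ a ∉ Y, ∀ b ∉ Y, a < b → ∃ y ∈ Y, a < y ∧ y < b)
    (hG : {x : X | ∃ y, x ≠ y ∧ Set.Ioo x y ∪ Set.Ioo y x = ∅} ⊆ Y) :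
    ∃ f : X → ℝ, StrictMono f ∧ ∀ x, f x ∈ Set.Icc (0 : ℝ) 1 := by
  -- key separation lemma
  have key : ∀ x x' : X, x < x' → ∃ y ∈ Y, x < y ∧ y ≤ x' := by
    intro x x' hlt
    rcases Set.eq_empty_or_nonempty (Set.Ioo x x') with he | ⟨z, hz⟩
    · refine ⟨x', hG ⟨x, (ne_of_gt hlt), ?_⟩, hlt, le_refl _⟩
      rw [Set.Ioo_eq_empty (by exact fun h => absurd hlt (not_lt_of_gt h))]
      simpa using he
    · by_cases hzY : z ∈ Y
      · exact ⟨z, hzY, hz.1, le_of_lt hz.2⟩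
      · by_cases hx'Y : x' ∈ Y
        · exact ⟨x', hx'Y, hlt, le_refl _⟩
        · obtain ⟨y, hy, h1, h2⟩ := hint z hzY x' hx'Y hz.2
          exact ⟨y, hy, lt_trans hz.1 h1, le_of_lt h2⟩
  rcases Set.eq_empty_or_nonempty Y with hY | hY
  · refine ⟨fun _ => 0, ?_, fun x => ⟨le_refl _, zero_le_one⟩⟩
    intro x x' hlt
    obtain ⟨y, hy, -⟩ := key x x' hlt
    simp [hY] at hy
  · obtain ⟨e, he⟩ := Set.Countable.exists_eq_range hc hY
    set g : ℕ → ℝ := fun n => (1/2 : ℝ)^(n+1) with hg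
    have hgpos : ∀ n, 0 < g n := fun n => by positivity
    have hgeo : Summable (fun n : ℕ => (1/2:ℝ)^n) :=
      summable_geometric_of_lt_one (by norm_num) (by norm_num)
    have hgsum : Summable g := by
      refine Summable.of_nonneg_of_le (fun n => by positivity) (fun n => ?_) hgeo
      exact pow_le_pow_of_le_one (by norm_num) (by norm_num) (Nat.le_succ n)
    have hgtsum : ∑' n, g n = 1 := by
      rw [hg]
      have : ∑' n : ℕ, (1/2:ℝ)^(n+1) = (1/2) * ∑' n : ℕ, (1/2:ℝ)^n := by
        rw [← tsum_mul_left]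
        congr 1; ext n; ring
      rw [this, tsum_geometric_of_lt_one (by norm_num) (by norm_num)]
      norm_num
    set F : X → ℕ → ℝ := fun x n => if e n ≤ x then g n else 0 with hF
    have hFnonneg : ∀ x n, 0 ≤ F x n := by
      intro x n; rw [hF]; dsimp only
      split <;> [exact le_of_lt (hgpos n); exact le_refl _]
    have hFle : ∀ x n, F x n ≤ g n := by
      intro x n; rw [hF]; dsimp only
      split <;> [exact le_refl _; exact le_of_lt (hgpos n)]
    have hFsum : ∀ x, Summable (F x) := fun x =>
      Summable.of_nonneg_of_le (hFnonneg x) (hFle x) hgsum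
    refine ⟨fun x => ∑' n, F x n, ?_, ?_⟩
    · intro x x' hlt
      obtain ⟨y, hy, h1, h2⟩ := key x x' hlt
      rw [he] at hy
      obtain ⟨N, hN⟩ := hy
      have hmono : ∀ n, F x n ≤ F x' n := by
        intro n; rw [hF]; dsimp only
        split
        · rw [if_pos (le_trans (by assumption) (le_of_lt hlt))]
        · exact hFnonneg x' n
      refine Summable.tsum_lt_tsum (i := N) hmono ?_ (hFsum x) (hFsum x')
      rw [hF]; dsimp only
      rw [if_neg (by rw [hN]; exact not_le_of_gt h1), if_pos (by rw [hN]; exact h2)]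
      exact hgpos N
    · intro x
      constructor
      · exact tsum_nonneg (hFnonneg x)
      · calc ∑' n, F x n ≤ ∑' n, g n := Summable.tsum_le_tsum (hFle x) (hFsum x) hgsum
          _ = 1 := hgtsum
end

section
/- Let (X, <) be a linearly ordered set, Y ⊆ X a countable subset interlacing X \ Y, with every point of X having an immediate neighbor contained in Y. Then there exists a strictly increasing map φ : X → [0,1] that is a homeomorphism onto its image, where X carries the order topology and the image carries the subspace topology from [0,1]. -/
open Set

namespace OrderHomeoAux

variable {X : Type*} [LinearOrder X]

noncomputable section
open scoped Classical

/-- one recursion step: value assigned to index `n` given earlier values `f`. -/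
def val (e : ℕ → X) (f : ℕ → ℝ) (n : ℕ) : ℝ :=
  if h : ∃ k, k < n ∧ e k = e n then f (Nat.find h)
  else (sSup (insert 0 (f '' {k | k < n ∧ e k < e n})) +
        sInf (insert (1/2) (f '' {k | k < n ∧ e n < e k}))) / 2

def seqf (e : ℕ → X) : ℕ → ℕ → ℝ
  | 0 => fun _ => 0
  | n+1 => Function.update (seqf e n) n (val e (seqf e n) n)

def psi (e : ℕ → X) (n : ℕ) : ℝ := seqf e (n+1) n

lemma val_congr (e : ℕ → X) {f f' : ℕ → ℝ} {n : ℕ} (h : ∀ k, k < n → f k = f' k) :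
    val e f n = val e f' n := by
  unfold val
  by_cases h₀ : ∃ k, k < n ∧ e k = e n
  · rw [dif_pos h₀, dif_pos h₀, h _ (Nat.find_spec h₀).1]
  · rw [dif_neg h₀, dif_neg h₀]
    have h1 : f '' {k | k < n ∧ e k < e n} = f' '' {k | k < n ∧ e k < e n} :=
      Set.image_congr fun k hk => h k hk.1
    have h2 : f '' {k | k < n ∧ e n < e k} = f' '' {k | k < n ∧ e n < e k} :=
      Set.image_congr fun k hk => h k hk.1
    rw [h1, h2]

lemma seqf_stable (e : ℕ → X) : ∀ m n, n < m → seqf e m n = psi e n := by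
  intro m
  induction m with
  | zero => intro n hn; omega
  | succ m ih =>
    intro n hn
    rcases Nat.lt_succ_iff_lt_or_eq.mp hn with h | h
    · show Function.update (seqf e m) m (val e (seqf e m) m) n = _
      rw [Function.update_of_ne (by omega)]
      exact ih n h
    · subst h; rfl

lemma psi_eq (e : ℕ → X) (n : ℕ) : psi e n = val e (psi e) n := by
  have h1 : psi e n = val e (seqf e n) n := by
    show Function.update (seqf e n) n (val e (seqf e n) n) n = _
    rw [Function.update_self]
  rw [h1]
  exact val_congr e fun k hk => seqf_stable e n k hk

lemma finA (e : ℕ → X) (n : ℕ) :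
    (insert (0:ℝ) (psi e '' {k | k < n ∧ e k < e n})).Finite :=
  (((Set.finite_Iio n).subset (fun k hk => hk.1)).image _).insert _

lemma finB (e : ℕ → X) (n : ℕ) :
    (insert (1/2:ℝ) (psi e '' {k | k < n ∧ e n < e k})).Finite :=
  (((Set.finite_Iio n).subset (fun k hk => hk.1)).image _).insert _

/-- Main invariant of the recursion. -/
lemma psi_main (e : ℕ → X) : ∀ n : ℕ, (0 < psi e n ∧ psi e n < 1/2) ∧
    ∀ k, k < n → (e k < e n → psi e k < psi e n) ∧ (e n < e k → psi e n < psi e k) ∧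
      (e k = e n → psi e k = psi e n) := by
  intro n
  induction n using Nat.strong_induction_on with
  | _ n ih =>
  have rel : ∀ a b, a < n → b < n → e a < e b → psi e a < psi e b := by
    intro a b ha hb hab
    rcases lt_trichotomy a b with h' | h' | h'
    · exact ((ih b hb).2 a h').1 hab
    · subst h'; exact absurd hab (lt_irrefl _)
    · exact ((ih a ha).2 b h').2.1 hab
  have req : ∀ a b, a < n → b < n → e a = e b → psi e a = psi e b := by
    intro a b ha hb hab
    rcases lt_trichotomy a b with h' | h' | h'
    · exact ((ih b hb).2 a h').2.2 hab
    · subst h'; rfl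
    · exact (((ih a ha).2 b h').2.2 hab.symm).symm
  by_cases h : ∃ k, k < n ∧ e k = e n
  · have hk₀ := Nat.find_spec h
    set k₀ := Nat.find h with hk₀def
    have hv : psi e n = psi e k₀ := by
      rw [psi_eq]; unfold val; rw [dif_pos h]
    constructor
    · rw [hv]; exact (ih k₀ hk₀.1).1
    · intro k hk
      refine ⟨fun hlt => ?_, fun hlt => ?_, fun heq => ?_⟩
      · rw [hv]; exact rel k k₀ hk hk₀.1 (by rw [hk₀.2]; exact hlt)
      · rw [hv]; exact rel k₀ k hk₀.1 hk (by rw [hk₀.2]; exact hlt)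
      · rw [hv]; exact req k k₀ hk hk₀.1 (by rw [hk₀.2, heq])
  · set A := sSup (insert (0:ℝ) (psi e '' {k | k < n ∧ e k < e n})) with hA
    set B := sInf (insert (1/2:ℝ) (psi e '' {k | k < n ∧ e n < e k})) with hB
    have hv : psi e n = (A + B) / 2 := by
      rw [psi_eq]; unfold val; rw [dif_neg h]
    have hAmem : A ∈ insert (0:ℝ) (psi e '' {k | k < n ∧ e k < e n}) :=
      (Set.insert_nonempty _ _).csSup_mem (finA e n)
    have hBmem : B ∈ insert (1/2:ℝ) (psi e '' {k | k < n ∧ e n < e k}) :=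
      (Set.insert_nonempty _ _).csInf_mem (finB e n)
    have hA0 : 0 ≤ A := le_csSup (finA e n).bddAbove (Set.mem_insert _ _)
    have hB2 : B ≤ 1/2 := csInf_le (finB e n).bddBelow (Set.mem_insert _ _)
    have hAub : ∀ k, k < n → e k < e n → psi e k ≤ A := fun k h1 h2 =>
      le_csSup (finA e n).bddAbove (Set.mem_insert_of_mem _ ⟨k, ⟨h1, h2⟩, rfl⟩)
    have hBlb : ∀ k, k < n → e n < e k → B ≤ psi e k := fun k h1 h2 =>
      csInf_le (finB e n).bddBelow (Set.mem_insert_of_mem _ ⟨k, ⟨h1, h2⟩, rfl⟩)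
    have hAB : A < B := by
      rcases Set.mem_insert_iff.mp hAmem with h0 | ⟨k₁, hk₁, hk₁v⟩ <;>
        rcases Set.mem_insert_iff.mp hBmem with h0' | ⟨k₂, hk₂, hk₂v⟩
      · rw [h0, h0']; norm_num
      · rw [h0, ← hk₂v]; exact (ih k₂ hk₂.1).1.1
      · rw [h0', ← hk₁v]; exact (ih k₁ hk₁.1).1.2
      · rw [← hk₁v, ← hk₂v]
        exact rel k₁ k₂ hk₁.1 hk₂.1 (lt_trans hk₁.2 hk₂.2)
    constructor
    · constructor
      · rw [hv]; linarith
      · rw [hv]; linarith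
    · intro k hk
      refine ⟨fun hlt => ?_, fun hlt => ?_, fun heq => ?_⟩
      · have := hAub k hk hlt; rw [hv]; linarith
      · have := hBlb k hk hlt; rw [hv]; linarith
      · exact absurd ⟨k, hk, heq⟩ h

lemma psi_pos (e : ℕ → X) (n : ℕ) : 0 < psi e n := (psi_main e n).1.1

lemma psi_lt_half (e : ℕ → X) (n : ℕ) : psi e n < 1/2 := (psi_main e n).1.2

lemma psi_lt (e : ℕ → X) {k l : ℕ} (h : e k < e l) : psi e k < psi e l := by
  rcases lt_trichotomy k l with h' | h' | h'
  · exact ((psi_main e l).2 k h').1 h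
  · subst h'; exact absurd h (lt_irrefl _)
  · exact ((psi_main e k).2 l h').2.1 h

lemma psi_eqq (e : ℕ → X) {k l : ℕ} (h : e k = e l) : psi e k = psi e l := by
  rcases lt_trichotomy k l with h' | h' | h'
  · exact ((psi_main e l).2 k h').2.2 h
  · subst h'; rfl
  · exact (((psi_main e k).2 l h').2.2 h.symm).symm

lemma psi_le (e : ℕ → X) {k l : ℕ} (h : e k ≤ e l) : psi e k ≤ psi e l := by
  rcases lt_or_eq_of_le h with h' | h'
  · exact (psi_lt e h').le
  · exact (psi_eqq e h').le


/-- extension of `psi` to all of `X` by suprema over the countable set. -/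
def psb (e : ℕ → X) (x : X) : ℝ := sSup (insert 0 (psi e '' {n | e n ≤ x}))

lemma bddPsb (e : ℕ → X) (S : Set ℕ) : BddAbove (insert (0:ℝ) (psi e '' S)) := by
  refine ⟨1/2, ?_⟩
  rintro u (rfl | ⟨n, -, rfl⟩)
  · norm_num
  · exact (psi_lt_half e n).le

lemma psb_nonneg (e : ℕ → X) (x : X) : 0 ≤ psb e x :=
  le_csSup (bddPsb e _) (Set.mem_insert _ _)

lemma psb_le_half (e : ℕ → X) (x : X) : psb e x ≤ 1/2 := by
  refine csSup_le (Set.insert_nonempty _ _) ?_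
  rintro u (rfl | ⟨n, -, rfl⟩)
  · norm_num
  · exact (psi_lt_half e n).le

lemma psb_mono (e : ℕ → X) {x x' : X} (h : x ≤ x') : psb e x ≤ psb e x' := by
  refine csSup_le_csSup (bddPsb e _) (Set.insert_nonempty _ _) ?_
  rintro u (rfl | ⟨n, hn, rfl⟩)
  · exact Set.mem_insert _ _
  · exact Set.mem_insert_of_mem _ ⟨n, le_trans hn h, rfl⟩

lemma psi_le_psb (e : ℕ → X) {n : ℕ} {x : X} (h : e n ≤ x) : psi e n ≤ psb e x :=
  le_csSup (bddPsb e _) (Set.mem_insert_of_mem _ ⟨n, h, rfl⟩)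

lemma psb_eq (e : ℕ → X) {i : ℕ} {x : X} (hi : e i = x) : psb e x = psi e i := by
  refine le_antisymm ?_ (psi_le_psb e (le_of_eq hi))
  refine csSup_le (Set.insert_nonempty _ _) ?_
  rintro u (rfl | ⟨n, hn, rfl⟩)
  · exact (psi_pos e i).le
  · exact psi_le e (by rw [hi]; exact hn)

lemma keyT2 (e : ℕ → X) (x : X)
    (hU : ∀ j, x < e j → ∃ j', x < e j' ∧ e j' < e j) :
    ∀ j, x < e j → ∃ j', x < e j' ∧ psi e j' ≤ (psb e x + psi e j) / 2 := by
  intro j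
  induction j using Nat.strong_induction_on with
  | _ j ih =>
  intro hj
  have H : ∃ m, x < e m ∧ e m < e j := hU j hj
  set m := Nat.find H with hmdef
  have hm : x < e m ∧ e m < e j := Nat.find_spec H
  have hmin : ∀ k, k < m → ¬(x < e k ∧ e k < e j) := fun k hk => Nat.find_min H hk
  have hmj : m ≠ j := fun hh => absurd hm.2 (by rw [hh]; exact lt_irrefl _)
  rcases lt_or_gt_of_ne hmj with hlt | hgt
  · obtain ⟨j', hj'1, hj'2⟩ := ih m hlt hm.1
    refine ⟨j', hj'1, le_trans hj'2 ?_⟩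
    have := psi_lt e hm.2
    linarith
  · -- j < m : the value assigned to m is at most (psb x + psi j)/2
    have hnew : ¬∃ k, k < m ∧ e k = e m := by
      rintro ⟨k, hk, hek⟩
      exact hmin k hk ⟨by rw [hek]; exact hm.1, by rw [hek]; exact hm.2⟩
    have hv : psi e m = (sSup (insert 0 (psi e '' {k | k < m ∧ e k < e m})) +
        sInf (insert (1/2) (psi e '' {k | k < m ∧ e m < e k}))) / 2 := by
      rw [psi_eq]; unfold val; rw [dif_neg hnew]
    have hAle : sSup (insert (0:ℝ) (psi e '' {k | k < m ∧ e k < e m})) ≤ psb e x := by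
      refine csSup_le (Set.insert_nonempty _ _) ?_
      rintro u (rfl | ⟨k, ⟨hk1, hk2⟩, rfl⟩)
      · exact psb_nonneg e x
      · have hkx : e k ≤ x := by
          by_contra hxk
          exact hmin k hk1 ⟨lt_of_not_ge hxk, lt_trans hk2 hm.2⟩
        exact psi_le_psb e hkx
    have hBle : sInf (insert (1/2:ℝ) (psi e '' {k | k < m ∧ e m < e k})) ≤ psi e j :=
      csInf_le (finB e m).bddBelow (Set.mem_insert_of_mem _ ⟨j, ⟨hgt, hm.2⟩, rfl⟩)
    exact ⟨m, hm.1, by rw [hv]; linarith⟩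

lemma approxT2 (e : ℕ → X) (x : X)
    (hU : ∀ j, x < e j → ∃ j', x < e j' ∧ e j' < e j)
    (hne : ∃ j, x < e j) :
    ∀ ε : ℝ, 0 < ε → ∃ j, x < e j ∧ psi e j < psb e x + ε := by
  intro ε hε
  obtain ⟨j₀, hj₀⟩ := hne
  have hs_le : ∀ j, x < e j → psb e x ≤ psi e j := by
    intro j hj
    refine csSup_le (Set.insert_nonempty _ _) ?_
    rintro u (rfl | ⟨n, hn, rfl⟩)
    · exact (psi_pos e j).le
    · exact (psi_lt e (lt_of_le_of_lt hn hj)).le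
  set D := psi e j₀ - psb e x with hD
  have hD0 : 0 ≤ D := by have := hs_le j₀ hj₀; linarith
  have key : ∀ k : ℕ, ∃ j, x < e j ∧ psi e j ≤ psb e x + D / 2 ^ k := by
    intro k
    induction k with
    | zero => exact ⟨j₀, hj₀, by simp [hD]⟩
    | succ k ihk =>
      obtain ⟨j, hj1, hj2⟩ := ihk
      obtain ⟨j', h1, h2⟩ := keyT2 e x hU j hj1
      refine ⟨j', h1, ?_⟩
      have h2k : (0:ℝ) < 2 ^ k := by positivity
      have hhalf : D / 2 ^ (k+1) = (D / 2 ^ k) / 2 := by rw [pow_succ]; ring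
      rw [hhalf]
      linarith
  obtain ⟨k, hk⟩ : ∃ k : ℕ, D / 2 ^ k < ε := by
    obtain ⟨k, hk⟩ := pow_unbounded_of_one_lt (D / ε) (one_lt_two (α := ℝ))
    refine ⟨k, ?_⟩
    rw [div_lt_iff₀ (by positivity)]
    rw [div_lt_iff₀ hε] at hk
    linarith
  obtain ⟨j, h1, h2⟩ := key k
  exact ⟨j, h1, lt_of_le_of_lt h2 (by linarith)⟩

lemma keyT1 (e : ℕ → X) (x : X)
    (hD : ∀ k, e k < x → ∃ k', e k' < x ∧ e k < e k') (i : ℕ) (hi : e i = x) :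
    ∀ k, e k < x → ∃ k', e k' < x ∧ (psi e i + psi e k) / 2 ≤ psi e k' := by
  intro k
  induction k using Nat.strong_induction_on with
  | _ k ih =>
  intro hk
  have H : ∃ m, e m < x ∧ e k < e m := hD k hk
  set m := Nat.find H with hmdef
  have hm : e m < x ∧ e k < e m := Nat.find_spec H
  have hmin : ∀ k', k' < m → ¬(e k' < x ∧ e k < e k') := fun k' hk' => Nat.find_min H hk'
  have hmk : m ≠ k := fun hh => absurd hm.2 (by rw [hh]; exact lt_irrefl _)
  rcases lt_or_gt_of_ne hmk with hlt | hgt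
  · obtain ⟨k', h1, h2⟩ := ih m hlt hm.1
    refine ⟨k', h1, le_trans ?_ h2⟩
    have := psi_lt e hm.2
    linarith
  · -- k < m
    have hnew : ¬∃ k', k' < m ∧ e k' = e m := by
      rintro ⟨k', hk', hek⟩
      exact hmin k' hk' ⟨by rw [hek]; exact hm.1, by rw [hek]; exact hm.2⟩
    have hv : psi e m = (sSup (insert 0 (psi e '' {k' | k' < m ∧ e k' < e m})) +
        sInf (insert (1/2) (psi e '' {k' | k' < m ∧ e m < e k'}))) / 2 := by
      rw [psi_eq]; unfold val; rw [dif_neg hnew]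
    have hAge : psi e k ≤ sSup (insert (0:ℝ) (psi e '' {k' | k' < m ∧ e k' < e m})) :=
      le_csSup (finA e m).bddAbove (Set.mem_insert_of_mem _ ⟨k, ⟨hgt, hm.2⟩, rfl⟩)
    have hBge : psi e i ≤ sInf (insert (1/2:ℝ) (psi e '' {k' | k' < m ∧ e m < e k'})) := by
      refine le_csInf (Set.insert_nonempty _ _) ?_
      rintro u (rfl | ⟨k', ⟨hk'1, hk'2⟩, rfl⟩)
      · exact (psi_lt_half e i).le
      · have hxk' : x ≤ e k' := by
          by_contra hc
          exact hmin k' hk'1 ⟨lt_of_not_ge hc, lt_trans hm.2 hk'2⟩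
        exact psi_le e (by rw [hi]; exact hxk')
    exact ⟨m, hm.1, by rw [hv]; linarith⟩

lemma approxT1 (e : ℕ → X) (x : X)
    (hD : ∀ k, e k < x → ∃ k', e k' < x ∧ e k < e k') (i : ℕ) (hi : e i = x)
    (hne : ∃ k, e k < x) :
    ∀ ε : ℝ, 0 < ε → ∃ k, e k < x ∧ psi e i - ε < psi e k := by
  intro ε hε
  obtain ⟨k₀, hk₀⟩ := hne
  set D := psi e i - psi e k₀ with hDdef
  have hD0 : 0 ≤ D := by
    have : psi e k₀ < psi e i := psi_lt e (by rw [hi]; exact hk₀)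
    linarith
  have key : ∀ n : ℕ, ∃ k, e k < x ∧ psi e i - psi e k ≤ D / 2 ^ n := by
    intro n
    induction n with
    | zero => exact ⟨k₀, hk₀, by simp [hDdef]⟩
    | succ n ihn =>
      obtain ⟨k, hk1, hk2⟩ := ihn
      obtain ⟨k', h1, h2⟩ := keyT1 e x hD i hi k hk1
      refine ⟨k', h1, ?_⟩
      have h2k : (0:ℝ) < 2 ^ n := by positivity
      have hhalf : D / 2 ^ (n+1) = (D / 2 ^ n) / 2 := by rw [pow_succ]; ring
      rw [hhalf]
      linarith
  obtain ⟨n, hn⟩ : ∃ n : ℕ, D / 2 ^ n < ε := by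
    obtain ⟨n, hn⟩ := pow_unbounded_of_one_lt (D / ε) (one_lt_two (α := ℝ))
    refine ⟨n, ?_⟩
    rw [div_lt_iff₀ (by positivity)]
    rw [div_lt_iff₀ hε] at hn
    linarith
  obtain ⟨k, h1, h2⟩ := key n
  exact ⟨k, h1, by linarith⟩

lemma psb_left (e : ℕ → X) (x : X)
    (hll : ∀ t, t < x → ∃ i, t < e i ∧ e i < x) (hmin : ∃ t, t < x) :
    ∀ ε : ℝ, 0 < ε → ∃ i, e i < x ∧ psb e x ≤ psi e i + ε := by
  intro ε hε
  have hne' : ∃ i, e i < x := by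
    obtain ⟨t, ht⟩ := hmin
    obtain ⟨i, -, h2⟩ := hll t ht
    exact ⟨i, h2⟩
  by_cases hx : ∃ i₀, e i₀ = x
  · obtain ⟨i₀, hi₀⟩ := hx
    have hD : ∀ k, e k < x → ∃ k', e k' < x ∧ e k < e k' := by
      intro k hk
      obtain ⟨i, h1, h2⟩ := hll (e k) hk
      exact ⟨i, h2, h1⟩
    obtain ⟨k, hk1, hk2⟩ := approxT1 e x hD i₀ hi₀ hne' ε hε
    rw [psb_eq e hi₀]
    exact ⟨k, hk1, by linarith⟩
  · push_neg at hx
    have hlt : psb e x - ε < psb e x := by linarith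
    obtain ⟨u, hu, hbu⟩ := exists_lt_of_lt_csSup (Set.insert_nonempty _ _) hlt
    rcases Set.mem_insert_iff.mp hu with rfl | ⟨n, hn, rfl⟩
    · obtain ⟨i, hi⟩ := hne'
      have := psi_pos e i
      exact ⟨i, hi, by linarith⟩
    · have hnx : e n < x := lt_of_le_of_ne hn (hx n)
      exact ⟨n, hnx, by linarith⟩

lemma psb_right (e : ℕ → X) (x : X)
    (hrl : ∀ t, x < t → ∃ i, x < e i ∧ e i < t) (hmax : ∃ t, x < t) :
    ∀ ε : ℝ, 0 < ε → ∃ j, x < e j ∧ psi e j ≤ psb e x + ε := by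
  intro ε hε
  have hU : ∀ j, x < e j → ∃ j', x < e j' ∧ e j' < e j := fun j hj => hrl (e j) hj
  have hne : ∃ j, x < e j := by
    obtain ⟨t, ht⟩ := hmax
    obtain ⟨i, h1, -⟩ := hrl t ht
    exact ⟨i, h1⟩
  obtain ⟨j, h1, h2⟩ := approxT2 e x hU hne ε hε
  exact ⟨j, h1, h2.le⟩


/-- `y` has a "gap" immediately below it, witnessed within `X`. -/
def Lp (e : ℕ → X) (y : X) : Prop := ∃ t, t < y ∧ ∀ i, ¬(t < e i ∧ e i < y)

def wgt (m : ℕ) : ℝ := (1/4 : ℝ) ^ (m + 1)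

lemma wgt_pos (m : ℕ) : 0 < wgt m := by unfold wgt; positivity

lemma summable_wgt : Summable wgt := by
  have : ∀ m, wgt m = (1/4 : ℝ) * (1/4) ^ m := by
    intro m; unfold wgt; rw [pow_succ]; ring
  rw [funext this]
  exact (summable_geometric_of_lt_one (by norm_num) (by norm_num)).mul_left _

lemma tsum_wgt : ∑' m, wgt m = 1/3 := by
  have : ∀ m, wgt m = (1/4 : ℝ) ^ m * (1/4) := by
    intro m; unfold wgt; rw [pow_succ]
  rw [funext this, tsum_mul_right, tsum_geometric_of_lt_one (by norm_num) (by norm_num)]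
  norm_num

lemma wgt_tail : ∀ ε : ℝ, 0 < ε → ∃ N : ℕ, ∑' m, wgt (m + N) < ε := by
  intro ε hε
  obtain ⟨N, hN⟩ := exists_pow_lt_of_lt_one hε (show (1/4:ℝ) < 1 by norm_num)
  refine ⟨N, ?_⟩
  have heq : ∀ m : ℕ, wgt (m + N) = (1/4 : ℝ) ^ N * wgt m := by
    intro m; unfold wgt
    rw [show m + N + 1 = N + (m + 1) by omega, pow_add]
  rw [funext heq, tsum_mul_left, tsum_wgt]
  have h4 : (0:ℝ) ≤ (1/4:ℝ)^N := by positivity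
  nlinarith

def gfun (e : ℕ → X) (x : X) : ℝ :=
  ∑' m, if e m ≤ x ∧ Lp e (e m) then wgt m else 0

lemma summable_ind (e : ℕ → X) (x : X) :
    Summable (fun m => if e m ≤ x ∧ Lp e (e m) then wgt m else 0) := by
  refine Summable.of_nonneg_of_le (fun m => ?_) (fun m => ?_) summable_wgt
  · split_ifs
    · exact (wgt_pos m).le
    · exact le_refl 0
  · split_ifs
    · exact le_refl _
    · exact (wgt_pos m).le

lemma gfun_nonneg (e : ℕ → X) (x : X) : 0 ≤ gfun e x := by
  refine tsum_nonneg fun m => ?_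
  split_ifs
  · exact (wgt_pos m).le
  · exact le_refl 0

lemma gfun_le (e : ℕ → X) (x : X) : gfun e x ≤ 1/2 := by
  have h1 : gfun e x ≤ ∑' m, wgt m := by
    refine Summable.tsum_le_tsum (fun m => ?_) (summable_ind e x) summable_wgt
    split_ifs
    · exact le_refl _
    · exact (wgt_pos m).le
  rw [tsum_wgt] at h1
  linarith

lemma gfun_mono (e : ℕ → X) {x x' : X} (h : x ≤ x') : gfun e x ≤ gfun e x' := by
  refine Summable.tsum_le_tsum (fun m => ?_) (summable_ind e x) (summable_ind e x')
  by_cases h1 : e m ≤ x ∧ Lp e (e m)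
  · rw [if_pos h1, if_pos ⟨h1.1.trans h, h1.2⟩]
  · rw [if_neg h1]
    split_ifs
    · exact (wgt_pos m).le
    · exact le_refl 0

lemma gfun_jump (e : ℕ → X) {x x' : X} {i : ℕ} (h1 : x < e i) (h2 : e i ≤ x')
    (hL : Lp e (e i)) : gfun e x + wgt i ≤ gfun e x' := by
  have hsing : Summable (fun m => if m = i then wgt i else (0:ℝ)) :=
    summable_of_ne_finset_zero (s := {i}) (by
      intro b hb
      rw [if_neg (by simpa using hb)])
  have htsing : ∑' m, (if m = i then wgt i else (0:ℝ)) = wgt i := tsum_ite_eq i (fun _ => wgt i)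
  calc gfun e x + wgt i
      = ∑' m, ((if e m ≤ x ∧ Lp e (e m) then wgt m else 0) + (if m = i then wgt i else 0)) := by
        rw [Summable.tsum_add (summable_ind e x) hsing, htsing]
        rfl
    _ ≤ gfun e x' := by
        refine Summable.tsum_le_tsum (fun m => ?_) ((summable_ind e x).add hsing) (summable_ind e x')
        by_cases hmi : m = i
        · subst hmi
          rw [if_pos rfl, if_neg (fun hc => absurd h1 (not_lt_of_ge hc.1)),
            if_pos ⟨h2, hL⟩]
          simp
        · rw [if_neg hmi, add_zero]
          by_cases hc : e m ≤ x ∧ Lp e (e m)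
          · rw [if_pos hc, if_pos ⟨hc.1.trans (le_of_lt (lt_of_lt_of_le h1 h2)), hc.2⟩]
          · rw [if_neg hc]
            split_ifs
            · exact (wgt_pos m).le
            · exact le_refl 0

lemma gfun_left (e : ℕ → X) (x : X)
    (hll : ∀ t, t < x → ∃ i, t < e i ∧ e i < x) (hmin : ∃ t, t < x) :
    ∀ ε : ℝ, 0 < ε → ∃ i, e i < x ∧ gfun e x ≤ gfun e (e i) + ε := by
  intro ε hε
  obtain ⟨N, hN⟩ := wgt_tail ε hε
  set a : ℕ → ℝ := fun m => if e m ≤ x ∧ Lp e (e m) then wgt m else 0 with ha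
  have hsplit : (∑ m ∈ Finset.range N, a m) + ∑' m, a (m + N) = gfun e x :=
    (summable_ind e x).sum_add_tsum_nat_add N
  have htail : ∑' m, a (m + N) < ε := by
    refine lt_of_le_of_lt ?_ hN
    refine Summable.tsum_le_tsum (fun m => ?_) ((summable_nat_add_iff N).mpr (summable_ind e x)) ?_
    · simp only [ha]
      split_ifs
      · exact le_refl _
      · exact (wgt_pos _).le
    · exact (summable_nat_add_iff N).mpr summable_wgt
  set T : Finset ℕ := (Finset.range N).filter (fun m => e m ≤ x ∧ Lp e (e m)) with hT
  have hTlt : ∀ m ∈ T, e m < x := by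
    intro m hm
    have hle := (Finset.mem_filter.mp hm).2.1
    have hLp := (Finset.mem_filter.mp hm).2.2
    refine lt_of_le_of_ne hle (fun heq => ?_)
    obtain ⟨t, ht, hall⟩ := hLp
    rw [heq] at ht hall
    obtain ⟨i, h1, h2⟩ := hll t ht
    exact hall i ⟨h1, h2⟩
  by_cases hTne : T.Nonempty
  · have hTim : (T.image e).Nonempty := hTne.image e
    set t₀ := (T.image e).max' hTim with ht₀def
    have ht₀x : t₀ < x := by
      obtain ⟨m₀, hm₀, heq⟩ := Finset.mem_image.mp ((T.image e).max'_mem hTim)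
      have := hTlt m₀ hm₀
      rwa [heq] at this
    obtain ⟨i, hi1, hi2⟩ := hll t₀ ht₀x
    have hsum : (∑ m ∈ Finset.range N, a m) ≤ gfun e (e i) := by
      have hptw : ∀ m ∈ Finset.range N, a m ≤
          (if e m ≤ e i ∧ Lp e (e m) then wgt m else 0) := by
        intro m hm
        simp only [ha]
        by_cases hc : e m ≤ x ∧ Lp e (e m)
        · have hmT : m ∈ T := Finset.mem_filter.mpr ⟨hm, hc⟩
          have hmt₀ : e m ≤ t₀ := Finset.le_max' _ _ (Finset.mem_image_of_mem e hmT)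
          rw [if_pos hc, if_pos ⟨(hmt₀.trans hi1.le), hc.2⟩]
        · rw [if_neg hc]
          split_ifs
          · exact (wgt_pos m).le
          · exact le_refl 0
      calc (∑ m ∈ Finset.range N, a m)
          ≤ ∑ m ∈ Finset.range N, (if e m ≤ e i ∧ Lp e (e m) then wgt m else 0) :=
            Finset.sum_le_sum hptw
        _ ≤ gfun e (e i) := by
            refine Summable.sum_le_tsum _ (fun m _ => ?_) (summable_ind e (e i))
            split_ifs
            · exact (wgt_pos m).le
            · exact le_refl 0
    exact ⟨i, hi2, by linarith⟩
  · have hzero : (∑ m ∈ Finset.range N, a m) = 0 := by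
      refine Finset.sum_eq_zero fun m hm => ?_
      simp only [ha]
      rw [if_neg (fun hc => hTne ⟨m, Finset.mem_filter.mpr ⟨hm, hc⟩⟩)]
    obtain ⟨t, ht⟩ := hmin
    obtain ⟨i, -, hi2⟩ := hll t ht
    have := gfun_nonneg e (e i)
    exact ⟨i, hi2, by linarith⟩

lemma gfun_right (e : ℕ → X) (x : X)
    (hrl : ∀ t, x < t → ∃ i, x < e i ∧ e i < t) (hmax : ∃ t, x < t) :
    ∀ ε : ℝ, 0 < ε → ∃ i, x < e i ∧ gfun e (e i) ≤ gfun e x + ε := by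
  intro ε hε
  obtain ⟨N, hN⟩ := wgt_tail ε hε
  set T : Finset ℕ := (Finset.range N).filter (fun m => x < e m) with hT
  -- generic bound: whenever x < e i and no element indexed in T lies in (x, e i]
  have hbound : ∀ i, x < e i → (∀ m ∈ T, ¬ e m ≤ e i) → gfun e (e i) ≤ gfun e x + ε := by
    intro i hi hsep
    set b : ℕ → ℝ := fun m => if e m ≤ e i ∧ Lp e (e m) then wgt m else 0 with hb
    have hsplit : (∑ m ∈ Finset.range N, b m) + ∑' m, b (m + N) = gfun e (e i) :=
      (summable_ind e (e i)).sum_add_tsum_nat_add N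
    have htail : ∑' m, b (m + N) < ε := by
      refine lt_of_le_of_lt ?_ hN
      refine Summable.tsum_le_tsum (fun m => ?_) ((summable_nat_add_iff N).mpr (summable_ind e (e i))) ?_
      · simp only [hb]
        split_ifs
        · exact le_refl _
        · exact (wgt_pos _).le
      · exact (summable_nat_add_iff N).mpr summable_wgt
    have hsum : (∑ m ∈ Finset.range N, b m) ≤ gfun e x := by
      have hptw : ∀ m ∈ Finset.range N, b m ≤
          (if e m ≤ x ∧ Lp e (e m) then wgt m else 0) := by
        intro m hm
        simp only [hb]
        by_cases hc : e m ≤ e i ∧ Lp e (e m)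
        · have hmx : e m ≤ x := by
            by_contra hcx
            exact hsep m (Finset.mem_filter.mpr ⟨hm, lt_of_not_ge hcx⟩) hc.1
          rw [if_pos hc, if_pos ⟨hmx, hc.2⟩]
        · rw [if_neg hc]
          split_ifs
          · exact (wgt_pos m).le
          · exact le_refl 0
      calc (∑ m ∈ Finset.range N, b m)
          ≤ ∑ m ∈ Finset.range N, (if e m ≤ x ∧ Lp e (e m) then wgt m else 0) :=
            Finset.sum_le_sum hptw
        _ ≤ gfun e x := by
            refine Summable.sum_le_tsum _ (fun m _ => ?_) (summable_ind e x)
            split_ifs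
            · exact (wgt_pos m).le
            · exact le_refl 0
    linarith
  by_cases hTne : T.Nonempty
  · have hTim : (T.image e).Nonempty := hTne.image e
    set z := (T.image e).min' hTim with hzdef
    have hz : x < z := by
      obtain ⟨m₀, hm₀, heq⟩ := Finset.mem_image.mp ((T.image e).min'_mem hTim)
      have := (Finset.mem_filter.mp hm₀).2
      rwa [heq] at this
    obtain ⟨i, hi1, hi2⟩ := hrl z hz
    refine ⟨i, hi1, hbound i hi1 ?_⟩
    intro m hm hle
    have : z ≤ e m := Finset.min'_le _ _ (Finset.mem_image_of_mem e hm)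
    exact absurd (lt_of_le_of_lt (this.trans hle) hi2) (lt_irrefl z)
  · obtain ⟨t, ht⟩ := hmax
    obtain ⟨i, hi1, -⟩ := hrl t ht
    refine ⟨i, hi1, hbound i hi1 ?_⟩
    intro m hm
    exact absurd (⟨m, hm⟩ : T.Nonempty) hTne


def phi (e : ℕ → X) (x : X) : ℝ := psb e x + gfun e x

lemma phi_smono (e : ℕ → X)
    (hN1 : ∀ a b : X, a < b → ∃ i, a < e i ∧ e i ≤ b) : StrictMono (phi e) := by
  intro x x' hxx'
  obtain ⟨j, hj1, hj2⟩ := hN1 x x' hxx'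
  unfold phi
  by_cases hmid : ∃ k, x < e k ∧ e k < e j
  · obtain ⟨k, hk1, hk2⟩ := hmid
    have h1 : psb e x ≤ psi e k := by
      refine csSup_le (Set.insert_nonempty _ _) ?_
      rintro u (rfl | ⟨n, hn, rfl⟩)
      · exact (psi_pos e k).le
      · exact (psi_lt e (lt_of_le_of_lt hn hk1)).le
    have h2 : psi e k < psi e j := psi_lt e hk2
    have h3 : psi e j ≤ psb e x' := psi_le_psb e hj2
    have h4 : gfun e x ≤ gfun e x' := gfun_mono e hxx'.le
    linarith
  · have hLp : Lp e (e j) := ⟨x, hj1, fun i hcon => hmid ⟨i, hcon⟩⟩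
    have h1 : gfun e x + wgt j ≤ gfun e x' := gfun_jump e hj1 hj2 hLp
    have h2 : psb e x ≤ psb e x' := psb_mono e hxx'.le
    have := wgt_pos j
    linarith

lemma phi_mem (e : ℕ → X) (x : X) : phi e x ∈ Set.Icc (0:ℝ) 1 := by
  constructor
  · exact add_nonneg (psb_nonneg e x) (gfun_nonneg e x)
  · have := psb_le_half e x
    have := gfun_le e x
    unfold phi
    linarith

end
end OrderHomeoAux

open Set OrderHomeoAux Topology

theorem order_homeo_into_unit_interval {X : Type*} [LinearOrder X]
    [TopologicalSpace X] [OrderTopology X]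
    (Y : Set X) (hc : Y.Countable)
    (hint : ∀ a ∉ Y, ∀ b ∉ Y, a < b → ∃ y ∈ Y, a < y ∧ y < b)
    (hG : {x : X | ∃ y, x ≠ y ∧ Set.Ioo x y ∪ Set.Ioo y x = ∅} ⊆ Y) :
    ∃ φ : X → ℝ, StrictMono φ ∧ (∀ x, φ x ∈ Set.Icc (0 : ℝ) 1) ∧
      Topology.IsEmbedding φ := by
  rcases Set.eq_empty_or_nonempty Y with hY | hY
  · -- degenerate case: X is a subsingleton
    have hsub : ∀ a b : X, ¬ a < b := by
      intro a b hab
      have ha : a ∉ Y := by rw [hY]; exact notMem_empty a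
      have hb : b ∉ Y := by rw [hY]; exact notMem_empty b
      obtain ⟨y, hy, -⟩ := hint a ha b hb hab
      rw [hY] at hy
      exact notMem_empty y hy
    have hall : ∀ a b : X, a = b := by
      intro a b
      rcases lt_trichotomy a b with h | h | h
      · exact absurd h (hsub a b)
      · exact h
      · exact absurd h (hsub b a)
    have hopen : ∀ (t : TopologicalSpace X) (s : Set X), IsOpen[t] s := by
      intro t s
      rcases Set.eq_empty_or_nonempty s with rfl | ⟨a, ha⟩
      · exact @isOpen_empty X t
      · have : s = Set.univ := Set.eq_univ_of_forall fun b => (hall b a) ▸ ha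
        rw [this]
        exact @isOpen_univ X t
    refine ⟨fun _ => 0, fun a b h => absurd h (hsub a b),
      fun x => ⟨le_refl 0, zero_le_one⟩, ⟨⟨?_⟩, fun a b _ => hall a b⟩⟩
    apply TopologicalSpace.ext
    funext s
    exact propext ⟨fun _ => hopen _ s, fun _ => hopen _ s⟩
  · obtain ⟨e, he⟩ := hc.exists_eq_range hY
    have hmem : ∀ z : X, z ∈ Y ↔ ∃ i, e i = z := by
      intro z; rw [he]; exact Set.mem_range.trans Iff.rfl
    -- between any a < b there is some e i with a < e i ≤ b
    have hN1 : ∀ a b : X, a < b → ∃ i, a < e i ∧ e i ≤ b := by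
      intro a b hab
      by_cases hb : b ∈ Y
      · obtain ⟨i, hi⟩ := (hmem b).mp hb
        exact ⟨i, hi ▸ hab, hi.le⟩
      · have hIoo : (Ioo a b).Nonempty := by
          by_contra hcon
          rw [Set.not_nonempty_iff_eq_empty] at hcon
          refine hb (hG ⟨a, (ne_of_gt hab), ?_⟩)
          rw [Set.Ioo_eq_empty (not_lt_of_ge hab.le), hcon, Set.union_empty]
        obtain ⟨z, hz1, hz2⟩ := hIoo
        by_cases hzY : z ∈ Y
        · obtain ⟨i, hi⟩ := (hmem z).mp hzY
          exact ⟨i, hi ▸ hz1, hi ▸ hz2.le⟩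
        · obtain ⟨y, hy, hy1, hy2⟩ := hint z hzY b hb hz2
          obtain ⟨i, hi⟩ := (hmem y).mp hy
          exact ⟨i, hi ▸ (hz1.trans hy1), hi ▸ hy2.le⟩
    have hN2 : ∀ a b : X, a < b → ∃ i, a ≤ e i ∧ e i < b := by
      intro a b hab
      by_cases ha : a ∈ Y
      · obtain ⟨i, hi⟩ := (hmem a).mp ha
        exact ⟨i, hi.ge, hi ▸ hab⟩
      · have hIoo : (Ioo a b).Nonempty := by
          by_contra hcon
          rw [Set.not_nonempty_iff_eq_empty] at hcon
          refine ha (hG ⟨b, (ne_of_lt hab), ?_⟩)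
          rw [Set.Ioo_eq_empty (not_lt_of_ge hab.le), hcon, Set.union_empty]
        obtain ⟨z, hz1, hz2⟩ := hIoo
        by_cases hzY : z ∈ Y
        · obtain ⟨i, hi⟩ := (hmem z).mp hzY
          exact ⟨i, hi ▸ hz1.le, hi ▸ hz2⟩
        · obtain ⟨y, hy, hy1, hy2⟩ := hint a ha z hzY hz1
          obtain ⟨i, hi⟩ := (hmem y).mp hy
          exact ⟨i, hi ▸ hy1.le, hi ▸ (hy2.trans hz2)⟩
    have hsm : StrictMono (phi e) := phi_smono e hN1
    have hmono : Monotone (phi e) := hsm.monotone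
    have hcont : Continuous (phi e) := by
      rw [continuous_iff_continuousAt]
      intro x
      have : Filter.Tendsto (phi e) (nhds x) (nhds (phi e x)) := by
        rw [tendsto_order]
        constructor
        · intro b hb
          by_cases hmin : ∃ t, t < x
          · by_cases hll : ∀ t, t < x → ∃ i, t < e i ∧ e i < x
            · set ε := phi e x - b with hεdef
              have hε : 0 < ε := by simp [hεdef]; linarith
              obtain ⟨i₁, hi₁, hP⟩ := psb_left e x hll hmin (ε/3) (by linarith)
              obtain ⟨i₂, hi₂, hG2⟩ := gfun_left e x hll hmin (ε/3) (by linarith)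
              have ht₀ : max (e i₁) (e i₂) < x := max_lt hi₁ hi₂
              filter_upwards [Ioi_mem_nhds ht₀] with t ht
              have h1 : psi e i₁ ≤ psb e t :=
                psi_le_psb e (le_trans (le_max_left _ _) (le_of_lt ht))
              have h2 : gfun e (e i₂) ≤ gfun e t :=
                gfun_mono e (le_trans (le_max_right _ _) (le_of_lt ht))
              have : phi e t = psb e t + gfun e t := rfl
              have hphix : phi e x = psb e x + gfun e x := rfl
              rw [this] at *
              linarith
            · push_neg at hll
              obtain ⟨t, ht, hallt⟩ := hll
              filter_upwards [Ioi_mem_nhds ht] with t' ht'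
              have hxt' : x ≤ t' := by
                by_contra hcn
                push_neg at hcn
                obtain ⟨i, hi1, hi2⟩ := hN1 t t' ht'
                exact absurd (lt_of_le_of_lt hi2 hcn) (not_lt.mpr (hallt i hi1))
              exact lt_of_lt_of_le hb (hmono hxt')
          · filter_upwards with t
            have hxt : x ≤ t := not_lt.mp (fun h => hmin ⟨t, h⟩)
            exact lt_of_lt_of_le hb (hmono hxt)
        · intro b hb
          by_cases hmax : ∃ t, x < t
          · by_cases hrl : ∀ t, x < t → ∃ i, x < e i ∧ e i < t
            · set ε := b - phi e x with hεdef
              have hε : 0 < ε := by simp [hεdef]; linarith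
              obtain ⟨j₁, hj₁, hP⟩ := psb_right e x hrl hmax (ε/3) (by linarith)
              obtain ⟨i₂, hi₂, hG2⟩ := gfun_right e x hrl hmax (ε/3) (by linarith)
              have hphix : phi e x = psb e x + gfun e x := rfl
              have key : ∃ t, x < t ∧ phi e t < b := by
                rcases le_total (e j₁) (e i₂) with hle | hle
                · refine ⟨e j₁, hj₁, ?_⟩
                  have hpsb : psb e (e j₁) = psi e j₁ := psb_eq e rfl
                  have hg : gfun e (e j₁) ≤ gfun e (e i₂) := gfun_mono e hle
                  have : phi e (e j₁) = psb e (e j₁) + gfun e (e j₁) := rfl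
                  rw [this, hpsb]
                  linarith
                · refine ⟨e i₂, hi₂, ?_⟩
                  have hpsb : psb e (e i₂) = psi e i₂ := psb_eq e rfl
                  have hpsi : psi e i₂ ≤ psi e j₁ := psi_le e hle
                  have : phi e (e i₂) = psb e (e i₂) + gfun e (e i₂) := rfl
                  rw [this, hpsb]
                  linarith
              obtain ⟨t, htx, htb⟩ := key
              filter_upwards [Iio_mem_nhds htx] with t' ht'
              exact lt_of_le_of_lt (hmono (le_of_lt ht')) htb
            · push_neg at hrl
              obtain ⟨t, ht, hallt⟩ := hrl
              filter_upwards [Iio_mem_nhds ht] with t' ht'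
              have hxt' : t' ≤ x := by
                by_contra hcn
                push_neg at hcn
                obtain ⟨i, hi1, hi2⟩ := hN2 t' t ht'
                exact absurd hi2 (not_lt.mpr (hallt i (lt_of_lt_of_le hcn hi1)))
              exact lt_of_le_of_lt (hmono hxt') hb
          · filter_upwards with t
            have hxt : t ≤ x := not_lt.mp (fun h => hmax ⟨t, h⟩)
            exact lt_of_le_of_lt (hmono hxt) hb
      exact this
    refine ⟨phi e, hsm, phi_mem e, ⟨⟨?_⟩, hsm.injective⟩⟩
    have h2 : TopologicalSpace.induced (phi e) inferInstance ≤ Preorder.topology X :=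
      induced_topology_le_preorder (fun {a b} => hsm.lt_iff_lt)
    have h3 : Preorder.topology X = ‹TopologicalSpace X› := by
      rw [show (Preorder.topology X) =
        TopologicalSpace.generateFrom {s : Set X | ∃ a : X, s = Set.Ioi a ∨ s = Set.Iio a} from rfl]
      exact (OrderTopology.topology_eq_generate_intervals (α := X)).symm
    exact le_antisymm (continuous_iff_le_induced.mp hcont) (h3 ▸ h2)
end

section
/- Every tame set in ℝ is compact. -/
open Set

/-- The equivalence from a set onto its image under a map with a local inverse. -/
noncomputable def equivImage (φ ψ : ℝ → ℝ) (A : Set ℝ) (hinv : ∀ x ∈ A, ψ (φ x) = x) :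
    ↥A ≃ ↥(φ '' A) where
  toFun x := ⟨φ x, Set.mem_image_of_mem _ x.2⟩
  invFun y := ⟨ψ y, by
    obtain ⟨x, hx, hxy⟩ := y.2
    rw [← hxy, hinv x hx]; exact hx⟩
  left_inv x := Subtype.ext (hinv x x.2)
  right_inv y := Subtype.ext (by
    obtain ⟨x, hx, hxy⟩ := y.2
    show φ (ψ (y : ℝ)) = (y : ℝ)
    rw [← hxy, hinv x hx])

/-- A homeomorphism from a set onto its image under a map with a continuous local inverse. -/
noncomputable def homeoImage (φ ψ : ℝ → ℝ) (A : Set ℝ) (hinv : ∀ x ∈ A, ψ (φ x) = x)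
    (hφ : ContinuousOn φ A) (hψ : ContinuousOn ψ (φ '' A)) : ↥A ≃ₜ ↥(φ '' A) where
  toEquiv := equivImage φ ψ A hinv
  continuous_toFun := Continuous.subtype_mk hφ.restrict _
  continuous_invFun := Continuous.subtype_mk hψ.restrict _

lemma tame_bounded (A : Set ℝ) (h : IsTame A) : Bornology.IsBounded A := by
  set φ : ℝ → ℝ := fun x => x / (1 + |x|) with hφdef
  set ψ : ℝ → ℝ := fun y => y / (1 - |y|) with hψdef
  have habs : ∀ x : ℝ, |φ x| = |x| / (1 + |x|) := by
    intro x
    rw [hφdef]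
    simp only
    rw [abs_div, abs_of_pos (by positivity : (0:ℝ) < 1 + |x|)]
  have hlt : ∀ x : ℝ, |φ x| < 1 := by
    intro x
    rw [habs, div_lt_one (by positivity)]
    linarith [abs_nonneg x]
  have hinv : ∀ x ∈ A, ψ (φ x) = x := by
    intro x _
    have h1 : (1:ℝ) + |x| ≠ 0 := by positivity
    rw [hψdef]
    simp only [habs]
    rw [hφdef]
    simp only
    field_simp
    ring
  have hφc : Continuous φ := by
    apply Continuous.div continuous_id (by continuity)
    intro x; positivity
  have hψc : ContinuousOn ψ (φ '' A) := by
    apply ContinuousOn.div continuousOn_id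
      ((continuous_const.sub continuous_abs).continuousOn)
    rintro y ⟨x, hx, rfl⟩
    have := hlt x
    intro hzero
    change 1 - |φ x| = 0 at hzero
    linarith [abs_nonneg (φ x)]
  obtain ⟨f, hf⟩ := h (φ '' A) ⟨homeoImage φ ψ A hinv hφc.continuousOn hψc⟩
  have hYb : Bornology.IsBounded (φ '' A) := by
    apply (Metric.isBounded_Icc (-1 : ℝ) 1).subset
    rintro y ⟨x, hx, rfl⟩
    have := hlt x
    constructor <;> [linarith [neg_abs_le (φ x)]; linarith [le_abs_self (φ x)]]
  have hK : IsCompact (f.symm '' closure (φ '' A)) :=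
    (Metric.isCompact_of_isClosed_isBounded isClosed_closure hYb.closure).image
      f.symm.continuous
  apply hK.isBounded.subset
  intro x hx
  have : f x ∈ closure (φ '' A) := subset_closure (hf ▸ Set.mem_image_of_mem f hx)
  exact ⟨f x, this, f.symm_apply_apply x⟩

theorem isTame_isCompact (A : Set ℝ) (h : IsTame A) : IsCompact A := by
  have hb := tame_bounded A h
  rw [Metric.isCompact_iff_isClosed_bounded]
  refine ⟨?_, hb⟩
  rw [← closure_subset_iff_isClosed]
  intro p hpcl
  by_contra hp
  set φ : ℝ → ℝ := fun x => p + (x - p)⁻¹ with hφdef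
  have hne : ∀ x ∈ A, x - p ≠ 0 := fun x hx => sub_ne_zero.mpr (fun e => hp (e ▸ hx))
  have hinv : ∀ x ∈ A, φ (φ x) = x := by
    intro x hx
    rw [hφdef]; simp [add_sub_cancel_left, inv_inv]
  have hφc : ContinuousOn φ A := by
    apply ContinuousOn.add continuousOn_const
    exact ContinuousOn.inv₀ (by fun_prop) hne
  have hψc : ContinuousOn φ (φ '' A) := by
    apply ContinuousOn.add continuousOn_const
    apply ContinuousOn.inv₀ (by fun_prop)
    rintro y ⟨x, hx, rfl⟩
    rw [hφdef]
    simp only [add_sub_cancel_left]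
    exact inv_ne_zero (hne x hx)
  obtain ⟨f, hf⟩ := h (φ '' A) ⟨homeoImage φ φ A hinv hφc hψc⟩
  -- φ '' A is bounded, being the image of a bounded set under an ambient homeo
  have hYb : Bornology.IsBounded (φ '' A) := by
    rw [← hf]
    apply Bornology.IsBounded.subset _ (Set.image_mono (f := f) subset_closure)
    exact (((Metric.isCompact_of_isClosed_isBounded isClosed_closure hb.closure).image
      f.continuous).isBounded)
  obtain ⟨r, hr⟩ := isBounded_iff_forall_norm_le.mp hYb
  -- r is nonnegative since φ '' A is nonempty
  obtain ⟨x0, hx0, _⟩ := Metric.mem_closure_iff.mp hpcl 1 one_pos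
  have hr0 : 0 ≤ r := le_trans (norm_nonneg _) (hr (φ x0) ⟨x0, hx0, rfl⟩)
  -- find a point of A very close to p
  have hεpos : (0:ℝ) < (r + |p| + 1)⁻¹ := by positivity
  obtain ⟨x, hx, hdx⟩ := Metric.mem_closure_iff.mp hpcl _ hεpos
  have hxp : |x - p| < (r + |p| + 1)⁻¹ := by
    rw [abs_sub_comm]; simpa [Real.dist_eq] using hdx
  have hxp0 : 0 < |x - p| := abs_pos.mpr (hne x hx)
  have hbig : r + |p| + 1 < |x - p|⁻¹ := by
    rw [← inv_inv (r + |p| + 1)]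
    exact inv_strictAnti₀ hxp0 hxp
  have hmem : φ x ∈ φ '' A := ⟨x, hx, rfl⟩
  have h1 : |φ x - p| = |x - p|⁻¹ := by
    rw [hφdef]; simp [abs_inv]
  have h2 : |φ x - p| ≤ |φ x| + |p| := abs_sub (φ x) p
  have h3 : |φ x| ≤ r := hr (φ x) hmem
  rw [h1] at h2
  linarith
end

section
/- Every non-compact subset of ℝ has both a bounded homeomorphic copy in ℝ and an unbounded homeomorphic copy in ℝ. -/
noncomputable def homeoOfInv (f g : ℝ → ℝ) (s : Set ℝ)
    (hf : ContinuousOn f s) (hg : ContinuousOn g (f '' s))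
    (hgf : ∀ x ∈ s, g (f x) = x) : ↥s ≃ₜ ↥(f '' s) where
  toFun x := ⟨f x, Set.mem_image_of_mem f x.2⟩
  invFun y := ⟨g y, by
    obtain ⟨x, hx, hxy⟩ := y.2
    rw [← hxy, hgf x hx]; exact hx⟩
  left_inv x := Subtype.ext (hgf x x.2)
  right_inv y := Subtype.ext (by
    obtain ⟨x, hx, hxy⟩ := y.2
    show f (g ↑y) = ↑y
    rw [← hxy, hgf x hx])
  continuous_toFun := by exact Continuous.subtype_mk hf.restrict _
  continuous_invFun := by exact Continuous.subtype_mk hg.restrict _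

theorem noncompact_has_bounded_and_unbounded_copy (A : Set ℝ) (h : ¬ IsCompact A) :
    (∃ Y : Set ℝ, Bornology.IsBounded Y ∧ Nonempty (↥A ≃ₜ ↥Y)) ∧
    (∃ Y : Set ℝ, ¬ Bornology.IsBounded Y ∧ Nonempty (↥A ≃ₜ ↥Y)) := by
  constructor
  · -- bounded copy via arctan
    refine ⟨Real.arctan '' A, ?_, ⟨homeoOfInv Real.arctan Real.tan A
      Real.continuous_arctan.continuousOn ?_ (fun x _ => Real.tan_arctan x)⟩⟩
    · have : Real.arctan '' A ⊆ Set.Icc (-(Real.pi/2)) (Real.pi/2) := by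
        rintro y ⟨x, -, rfl⟩
        exact ⟨(Real.neg_pi_div_two_lt_arctan x).le, (Real.arctan_lt_pi_div_two x).le⟩
      exact (Metric.isBounded_Icc _ _).subset this
    · intro y hy
      obtain ⟨x, -, rfl⟩ := hy
      have hcos : Real.cos (Real.arctan x) ≠ 0 := (Real.cos_arctan_pos x).ne'
      exact (Real.continuousAt_tan.mpr hcos).continuousWithinAt
  · -- unbounded copy
    by_cases hb : Bornology.IsBounded A
    · -- A bounded, so not closed; invert around a limit point
      have hnc : ¬ IsClosed A := fun hc => h (Metric.isCompact_iff_isClosed_bounded.mpr ⟨hc, hb⟩)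
      have : ¬ closure A ⊆ A := fun hsub => hnc (by
        have := closure_subset_iff_isClosed.mp hsub; exact this)
      obtain ⟨a, ha, haA⟩ := Set.not_subset.mp this
      set f : ℝ → ℝ := fun x => (x - a)⁻¹ with hf
      set g : ℝ → ℝ := fun y => a + y⁻¹ with hg
      have hne : ∀ x ∈ A, x - a ≠ 0 := fun x hx => sub_ne_zero.mpr (fun e => haA (e ▸ hx))
      have hgf : ∀ x ∈ A, g (f x) = x := by
        intro x hx
        simp only [hf, hg, inv_inv]
        ring
      have himne : ∀ y ∈ f '' A, y ≠ 0 := by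
        rintro y ⟨x, hx, rfl⟩
        exact inv_ne_zero (hne x hx)
      refine ⟨f '' A, ?_, ⟨homeoOfInv f g A ?_ ?_ hgf⟩⟩
      · -- unbounded
        intro hbd
        obtain ⟨C, hC⟩ := isBounded_iff_forall_norm_le.mp hbd
        have hε : (0:ℝ) < (|C| + 1)⁻¹ := by positivity
        obtain ⟨x, hx, hdx⟩ := Metric.mem_closure_iff.mp ha _ hε
        have hxa : x ≠ a := fun e => haA (e ▸ hx)
        have hd0 : 0 < |x - a| := abs_pos.mpr (sub_ne_zero.mpr hxa)
        have hlt : |x - a| < (|C| + 1)⁻¹ := by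
          rwa [Real.dist_eq, abs_sub_comm] at hdx
        have h1 : |C| + 1 < |x - a|⁻¹ := by
          have := (inv_strictAnti₀ hd0 hlt)
          rwa [inv_inv] at this
        have h2 : ‖f x‖ ≤ C := hC _ (Set.mem_image_of_mem f hx)
        have h3 : |f x| = |x - a|⁻¹ := by simp [hf, abs_inv]
        rw [Real.norm_eq_abs, h3] at h2
        have : |C| + 1 ≤ C := le_trans h1.le h2
        have : C < |C| + 1 := lt_of_le_of_lt (le_abs_self C) (by linarith)
        linarith
      · exact ContinuousOn.inv₀ (continuousOn_id.sub continuousOn_const) hne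
      · exact continuousOn_const.add (ContinuousOn.inv₀ continuousOn_id himne)
    · exact ⟨A, hb, ⟨Homeomorph.refl _⟩⟩
end

section
/- Let X ⊆ ℝ be compact and let {x} be a connected component of X that is a single point. Then there exist embeddings f₁, f₂ of X into ℝ (homeomorphisms onto their images X₁, X₂) such that f₁(x) = min X₁ and f₂(x) = max X₂. -/
noncomputable section SingletonComp

private def sig (u : ℝ) : ℝ := u / (1 + |u|)

private lemma one_add_abs_pos (u : ℝ) : (0:ℝ) < 1 + |u| := by positivity

private lemma sig_lt_one (u : ℝ) : sig u < 1 :=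
  (div_lt_one (one_add_abs_pos u)).2 (by linarith [le_abs_self u])

private lemma neg_one_lt_sig (u : ℝ) : -1 < sig u := by
  rw [sig, neg_lt, ← neg_div, div_lt_one (one_add_abs_pos u)]
  linarith [neg_abs_le u]

private lemma sig_inj : Function.Injective sig := by
  intro u v h
  rw [sig, sig, div_eq_div_iff (one_add_abs_pos u).ne' (one_add_abs_pos v).ne'] at h
  rcases abs_cases u with ⟨h1, _⟩ | ⟨h1, _⟩ <;> rcases abs_cases v with ⟨h3, _⟩ | ⟨h3, _⟩ <;>
    rw [h1, h3] at h <;> nlinarith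

private lemma sig_cont : Continuous sig :=
  continuous_id.div (continuous_const.add continuous_abs) fun u => (one_add_abs_pos u).ne'

private lemma level_eq {a b : ℕ} {s r : ℝ} (hs1 : -1 < s) (hs2 : s < 1) (hr1 : -1 < r)
    (hr2 : r < 1) (h : (2⁻¹:ℝ) ^ a * (3 + s) = (2⁻¹:ℝ) ^ b * (3 + r)) : a = b ∧ s = r := by
  have key : ∀ a b : ℕ, a < b → ∀ s r : ℝ, -1 < s → s < 1 → -1 < r → r < 1 →
      (2⁻¹:ℝ) ^ a * (3 + s) ≠ (2⁻¹:ℝ) ^ b * (3 + r) := by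
    intro a b hab s r hs1 hs2 hr1 hr2 h
    have h1 : (2⁻¹:ℝ) ^ b ≤ (2⁻¹:ℝ) ^ (a + 1) :=
      pow_le_pow_of_le_one (by norm_num) (by norm_num) hab
    have h2 : (2⁻¹:ℝ) ^ (a + 1) = (2⁻¹:ℝ) ^ a * 2⁻¹ := pow_succ _ _
    have hpa : (0:ℝ) < (2⁻¹:ℝ) ^ a := by positivity
    have hpb : (0:ℝ) < (2⁻¹:ℝ) ^ b := by positivity
    nlinarith
  rcases lt_trichotomy a b with hab | hab | hab
  · exact absurd h (key a b hab s r hs1 hs2 hr1 hr2)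
  · subst hab
    refine ⟨rfl, ?_⟩
    have := mul_left_cancel₀ (by positivity : ((2⁻¹:ℝ) ^ a) ≠ 0) h
    linarith
  · exact absurd h.symm (key b a hab r s hr1 hr2 hs1 hs2)

variable (x : ℝ) (G H : ℕ → ℝ)

def FF (hGex : ∀ t, x < t → ∃ n, G n ≤ t) (hHex : ∀ t, t < x → ∃ n, t ≤ H n) (t : ℝ) : ℝ :=
  if h : x < t then (2⁻¹:ℝ) ^ (Nat.find (hGex t h)) * (3 + sig (t - x))
  else if h' : t < x then (2⁻¹:ℝ) ^ (Nat.find (hHex t h')) * (3 + sig (t - x))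
  else 0

variable (hGex : ∀ t, x < t → ∃ n, G n ≤ t) (hHex : ∀ t, t < x → ∃ n, t ≤ H n)

lemma FF_of_gt {t : ℝ} (h : x < t) :
    FF x G H hGex hHex t = (2⁻¹:ℝ) ^ (Nat.find (hGex t h)) * (3 + sig (t - x)) := by
  rw [FF, dif_pos h]

lemma FF_of_lt {t : ℝ} (h : t < x) :
    FF x G H hGex hHex t = (2⁻¹:ℝ) ^ (Nat.find (hHex t h)) * (3 + sig (t - x)) := by
  rw [FF, dif_neg (by linarith), dif_pos h]

lemma FF_self : FF x G H hGex hHex x = 0 := by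
  rw [FF, dif_neg (lt_irrefl x), dif_neg (lt_irrefl x)]

lemma FF_pos {t : ℝ} (h : t ≠ x) : 0 < FF x G H hGex hHex t := by
  rcases h.lt_or_gt with h | h
  · rw [FF_of_lt x G H hGex hHex h]
    have h1 := neg_one_lt_sig (t - x)
    exact mul_pos (by positivity) (by linarith)
  · rw [FF_of_gt x G H hGex hHex h]
    have h1 := neg_one_lt_sig (t - x)
    exact mul_pos (by positivity) (by linarith)

lemma FF_nonneg (t : ℝ) : 0 ≤ FF x G H hGex hHex t := by
  rcases eq_or_ne t x with rfl | h
  · rw [FF_self]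
  · exact (FF_pos x G H hGex hHex h).le

lemma FF_inj : Function.Injective (FF x G H hGex hHex) := by
  have main : ∀ t1 t2 : ℝ, t1 ≠ x → t2 ≠ x →
      FF x G H hGex hHex t1 = FF x G H hGex hHex t2 → t1 = t2 := by
    intro t1 t2 h1 h2 h
    have e1 : ∃ a : ℕ, FF x G H hGex hHex t1 = (2⁻¹:ℝ) ^ a * (3 + sig (t1 - x)) := by
      rcases h1.lt_or_gt with hl | hl
      · exact ⟨_, FF_of_lt x G H hGex hHex hl⟩
      · exact ⟨_, FF_of_gt x G H hGex hHex hl⟩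
    have e2 : ∃ a : ℕ, FF x G H hGex hHex t2 = (2⁻¹:ℝ) ^ a * (3 + sig (t2 - x)) := by
      rcases h2.lt_or_gt with hl | hl
      · exact ⟨_, FF_of_lt x G H hGex hHex hl⟩
      · exact ⟨_, FF_of_gt x G H hGex hHex hl⟩
    obtain ⟨a, ha⟩ := e1
    obtain ⟨b, hb⟩ := e2
    rw [ha, hb] at h
    have := (level_eq (neg_one_lt_sig _) (sig_lt_one _) (neg_one_lt_sig _) (sig_lt_one _) h).2
    have := sig_inj this
    linarith
  intro t1 t2 h
  rcases eq_or_ne t1 x with h1 | h1 <;> rcases eq_or_ne t2 x with h2 | h2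
  · rw [h1, h2]
  · rw [h1, FF_self x G H hGex hHex] at h
    exact absurd h.symm (FF_pos x G H hGex hHex h2).ne'
  · rw [h2, FF_self x G H hGex hHex] at h
    exact absurd h (FF_pos x G H hGex hHex h1).ne'
  · exact main t1 t2 h1 h2 h

lemma FF_continuousAt_gt (hGanti : Antitone G) {t0 : ℝ} (ht0 : x < t0)
    (hne : ∀ n, G n ≠ t0) : ContinuousAt (FF x G H hGex hHex) t0 := by
  set m := Nat.find (hGex t0 ht0) with hm
  have hspec : G m ≤ t0 := Nat.find_spec (hGex t0 ht0)
  have hlt : G m < t0 := lt_of_le_of_ne hspec (hne m)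
  have hc : ContinuousAt (fun t => (2⁻¹:ℝ) ^ m * (3 + sig (t - x))) t0 :=
    (continuous_const.mul (continuous_const.add
      (sig_cont.comp (continuous_id.sub continuous_const)))).continuousAt
  refine hc.congr ?_
  have hxGm : x < G m ∨ x < t0 := Or.inr ht0
  rcases Nat.eq_zero_or_pos m with hm0 | hmpos
  · have hU : Set.Ioi (G m) ∈ nhds t0 := Ioi_mem_nhds hlt
    filter_upwards [hU, Ioi_mem_nhds ht0] with t ht hxt
    rw [FF_of_gt x G H hGex hHex hxt]
    have hfind : Nat.find (hGex t hxt) = m := by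
      rw [Nat.find_eq_iff]
      rw [hm0] at ht ⊢
      exact ⟨le_of_lt ht, fun j hj => absurd hj (by omega)⟩
    rw [hfind]
  · have hmin : ¬ G (m - 1) ≤ t0 := Nat.find_min (hGex t0 ht0) (by omega)
    have hU : Set.Ioo (G m) (G (m - 1)) ∈ nhds t0 :=
      Ioo_mem_nhds hlt (not_le.mp hmin)
    filter_upwards [hU, Ioi_mem_nhds ht0] with t ht hxt
    rw [FF_of_gt x G H hGex hHex hxt]
    have hfind : Nat.find (hGex t hxt) = m := by
      rw [Nat.find_eq_iff]
      refine ⟨le_of_lt ht.1, fun j hj => ?_⟩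
      have : G (m - 1) ≤ G j := hGanti (by omega)
      exact not_le.mpr (lt_of_lt_of_le ht.2 this)
    rw [hfind]

lemma FF_continuousAt_lt (hHmono : Monotone H) {t0 : ℝ} (ht0 : t0 < x)
    (hne : ∀ n, H n ≠ t0) : ContinuousAt (FF x G H hGex hHex) t0 := by
  set m := Nat.find (hHex t0 ht0) with hm
  have hspec : t0 ≤ H m := Nat.find_spec (hHex t0 ht0)
  have hlt : t0 < H m := lt_of_le_of_ne hspec (fun h => hne m h.symm)
  have hc : ContinuousAt (fun t => (2⁻¹:ℝ) ^ m * (3 + sig (t - x))) t0 :=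
    (continuous_const.mul (continuous_const.add
      (sig_cont.comp (continuous_id.sub continuous_const)))).continuousAt
  refine hc.congr ?_
  rcases Nat.eq_zero_or_pos m with hm0 | hmpos
  · have hU : Set.Iio (H m) ∈ nhds t0 := Iio_mem_nhds hlt
    filter_upwards [hU, Iio_mem_nhds ht0] with t ht hxt
    rw [FF_of_lt x G H hGex hHex hxt]
    have hfind : Nat.find (hHex t hxt) = m := by
      rw [Nat.find_eq_iff]
      rw [hm0] at ht ⊢
      exact ⟨le_of_lt ht, fun j hj => absurd hj (by omega)⟩
    rw [hfind]
  · have hmin : ¬ t0 ≤ H (m - 1) := Nat.find_min (hHex t0 ht0) (by omega)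
    have hU : Set.Ioo (H (m - 1)) (H m) ∈ nhds t0 :=
      Ioo_mem_nhds (not_le.mp hmin) hlt
    filter_upwards [hU, Iio_mem_nhds ht0] with t ht hxt
    rw [FF_of_lt x G H hGex hHex hxt]
    have hfind : Nat.find (hHex t hxt) = m := by
      rw [Nat.find_eq_iff]
      refine ⟨le_of_lt ht.2, fun j hj => ?_⟩
      have : H j ≤ H (m - 1) := hHmono (by omega)
      exact not_le.mpr (lt_of_le_of_lt this ht.1)
    rw [hfind]

lemma FF_continuousAt_self (hGx : ∀ n, x < G n) (hHx : ∀ n, H n < x)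
    (hGanti : Antitone G) (hHmono : Monotone H) :
    ContinuousAt (FF x G H hGex hHex) x := by
  rw [Metric.continuousAt_iff]
  intro ε hε
  obtain ⟨m, hmε⟩ := exists_pow_lt_of_lt_one (by positivity : (0:ℝ) < ε / 4)
    (by norm_num : (2⁻¹:ℝ) < 1)
  refine ⟨min (G m - x) (x - H m), by
      have := hGx m; have := hHx m
      simp only [lt_min_iff]; constructor <;> linarith, ?_⟩
  intro t ht
  rw [Real.dist_eq] at ht
  rw [Real.dist_eq, FF_self, sub_zero]
  have habs : |FF x G H hGex hHex t| = FF x G H hGex hHex t :=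
    abs_of_nonneg (FF_nonneg x G H hGex hHex t)
  rw [habs]
  have hbound : ∀ a : ℕ, m ≤ a → ∀ s : ℝ, -1 < s → s < 1 →
      (2⁻¹:ℝ) ^ a * (3 + s) < ε := by
    intro a haa s hs1 hs2
    have h1 : (2⁻¹:ℝ) ^ a ≤ (2⁻¹:ℝ) ^ m :=
      pow_le_pow_of_le_one (by norm_num) (by norm_num) haa
    have hpa : (0:ℝ) < (2⁻¹:ℝ) ^ a := by positivity
    nlinarith
  rcases lt_trichotomy t x with hl | hl | hl
  · rw [FF_of_lt x G H hGex hHex hl]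
    refine hbound _ ?_ _ (neg_one_lt_sig _) (sig_lt_one _)
    have hgap : H m < t := by
      have h0 : x - t ≤ |t - x| := by rw [abs_sub_comm]; exact le_abs_self _
      have h1 : |t - x| < x - H m := lt_of_lt_of_le ht (min_le_right _ _)
      linarith
    by_contra hcon
    push_neg at hcon
    have hHle : H (Nat.find (hHex t hl)) ≤ H m := hHmono hcon.le
    have := Nat.find_spec (hHex t hl)
    linarith
  · subst hl
    rw [FF_self]
    simpa using hε
  · rw [FF_of_gt x G H hGex hHex hl]
    refine hbound _ ?_ _ (neg_one_lt_sig _) (sig_lt_one _)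
    have hgap : t < G m := by
      have h0 : t - x ≤ |t - x| := le_abs_self _
      have h1 : |t - x| < G m - x := lt_of_lt_of_le ht (min_le_left _ _)
      linarith
    by_contra hcon
    push_neg at hcon
    have hGle : G m ≤ G (Nat.find (hGex t hl)) := hGanti hcon.le
    have := Nat.find_spec (hGex t hl)
    linarith

end SingletonComp

theorem singleton_component_to_extremes (X : Set ℝ) (hX : IsCompact X)
    (x : ℝ) (hx : x ∈ X) (hcomp : connectedComponentIn X x = {x}) :
    (∃ f₁ : ↥X → ℝ, Topology.IsEmbedding f₁ ∧ IsLeast (Set.range f₁) (f₁ ⟨x, hx⟩)) ∧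
    (∃ f₂ : ↥X → ℝ, Topology.IsEmbedding f₂ ∧ IsGreatest (Set.range f₂) (f₂ ⟨x, hx⟩)) := by
  classical
  -- gaps on the right
  have gapR : ∀ ε : ℝ, 0 < ε → ∃ y, x < y ∧ y < x + ε ∧ y ∉ X := by
    intro ε hε
    by_contra hcon
    push_neg at hcon
    have hsub : Set.Icc x (x + ε / 2) ⊆ X := by
      intro y hy
      rcases eq_or_lt_of_le hy.1 with rfl | hlt
      · exact hx
      · exact hcon y hlt (by linarith [hy.2])
    have := isPreconnected_Icc.subset_connectedComponentIn
      (Set.left_mem_Icc.mpr (by linarith)) hsub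
    rw [hcomp] at this
    have := this (Set.right_mem_Icc.mpr (by linarith))
    simp only [Set.mem_singleton_iff] at this
    linarith
  have gapL : ∀ ε : ℝ, 0 < ε → ∃ y, x - ε < y ∧ y < x ∧ y ∉ X := by
    intro ε hε
    by_contra hcon
    push_neg at hcon
    have hsub : Set.Icc (x - ε / 2) x ⊆ X := by
      intro y hy
      rcases eq_or_lt_of_le hy.2 with rfl | hlt
      · exact hx
      · exact hcon y (by linarith [hy.1]) hlt
    have := isPreconnected_Icc.subset_connectedComponentIn
      (Set.right_mem_Icc.mpr (by linarith)) hsub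
    rw [hcomp] at this
    have := this (Set.left_mem_Icc.mpr (by linarith))
    simp only [Set.mem_singleton_iff] at this
    linarith
  choose gr hgr1 hgr2 hgr3 using fun n : ℕ => gapR (1 / (n + 1)) (by positivity)
  choose gl hgl1 hgl2 hgl3 using fun n : ℕ => gapL (1 / (n + 1)) (by positivity)
  -- running min / max
  set G : ℕ → ℝ := fun n => Nat.rec (gr 0) (fun k ih => min ih (gr (k + 1))) n with hGdef
  set H : ℕ → ℝ := fun n => Nat.rec (gl 0) (fun k ih => max ih (gl (k + 1))) n with hHdef
  have hGsucc : ∀ n, G (n + 1) = min (G n) (gr (n + 1)) := fun n => rfl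
  have hHsucc : ∀ n, H (n + 1) = max (H n) (gl (n + 1)) := fun n => rfl
  have hGx : ∀ n, x < G n := by
    intro n; induction n with
    | zero => exact hgr1 0
    | succ k ih => rw [hGsucc]; exact lt_min ih (hgr1 (k + 1))
  have hHx : ∀ n, H n < x := by
    intro n; induction n with
    | zero => exact hgl2 0
    | succ k ih => rw [hHsucc]; exact max_lt ih (hgl2 (k + 1))
  have hGmem : ∀ n, G n ∉ X := by
    intro n; induction n with
    | zero => exact hgr3 0
    | succ k ih =>
      rw [hGsucc]
      rcases min_cases (G k) (gr (k + 1)) with ⟨h, _⟩ | ⟨h, _⟩ <;> rw [h]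
      · exact ih
      · exact hgr3 (k + 1)
  have hHmem : ∀ n, H n ∉ X := by
    intro n; induction n with
    | zero => exact hgl3 0
    | succ k ih =>
      rw [hHsucc]
      rcases max_cases (H k) (gl (k + 1)) with ⟨h, _⟩ | ⟨h, _⟩ <;> rw [h]
      · exact ih
      · exact hgl3 (k + 1)
  have hGanti : Antitone G := antitone_nat_of_succ_le fun n => by
    rw [hGsucc]; exact min_le_left _ _
  have hHmono : Monotone H := monotone_nat_of_le_succ fun n => by
    rw [hHsucc]; exact le_max_left _ _
  have hGle : ∀ n, G n ≤ gr n := by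
    intro n; cases n with
    | zero => exact le_refl _
    | succ k => rw [hGsucc]; exact min_le_right _ _
  have hHge : ∀ n, gl n ≤ H n := by
    intro n; cases n with
    | zero => exact le_refl _
    | succ k => rw [hHsucc]; exact le_max_right _ _
  have hGex : ∀ t, x < t → ∃ n, G n ≤ t := by
    intro t ht
    obtain ⟨n, hn⟩ := exists_nat_one_div_lt (show (0:ℝ) < t - x by linarith)
    exact ⟨n, by have := hgr2 n; have := hGle n;  linarith⟩
  have hHex : ∀ t, t < x → ∃ n, t ≤ H n := by
    intro t ht
    obtain ⟨n, hn⟩ := exists_nat_one_div_lt (show (0:ℝ) < x - t by linarith)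
    exact ⟨n, by have := hgl1 n; have := hHge n;  linarith⟩
  -- the embedding
  haveI : CompactSpace ↥X := isCompact_iff_compactSpace.mp hX
  set F := FF x G H hGex hHex with hF
  have hcont : Continuous fun p : ↥X => F p.1 := by
    rw [continuous_iff_continuousAt]
    intro p
    have hFat : ContinuousAt F p.1 := by
      rcases lt_trichotomy (p : ℝ) x with hl | hl | hl
      · exact FF_continuousAt_lt x G H hGex hHex hHmono hl
          (fun n h => hHmem n (h ▸ p.2))
      · rw [show (p : ℝ) = x from hl]
        exact FF_continuousAt_self x G H hGex hHex hGx hHx hGanti hHmono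
      · exact FF_continuousAt_gt x G H hGex hHex hGanti hl
          (fun n h => hGmem n (h ▸ p.2))
    exact hFat.comp continuous_subtype_val.continuousAt
  have hinj : Function.Injective fun p : ↥X => F p.1 :=
    fun p q h => Subtype.ext (FF_inj x G H hGex hHex h)
  have hemb : Topology.IsEmbedding fun p : ↥X => F p.1 :=
    (hcont.isClosedEmbedding hinj).isEmbedding
  have hleast : IsLeast (Set.range fun p : ↥X => F p.1) (F x) := by
    constructor
    · exact ⟨⟨x, hx⟩, rfl⟩
    · rintro y ⟨p, rfl⟩
      rw [hF, FF_self]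
      exact FF_nonneg x G H hGex hHex _
  constructor
  · exact ⟨fun p => F p.1, hemb, hleast⟩
  · refine ⟨fun p => -(F p.1), ?_, ?_⟩
    · exact (Homeomorph.neg ℝ).isEmbedding.comp hemb
    · constructor
      · exact ⟨⟨x, hx⟩, rfl⟩
      · rintro y ⟨p, rfl⟩
        simp only
        have h1 : F x ≤ F p.1 := hleast.2 ⟨p, rfl⟩
        have h2 : F x = 0 := by rw [hF, FF_self]
        have h3 := FF_nonneg x G H hGex hHex (p : ℝ)
        rw [← hF] at h3
        linarith
end

section
/- If X ⊆ ℝ is compact and {x}, {y} are two distinct singleton connected components of X, then there exists a homeomorphism f of X onto a subset f[X] ⊆ ℝ such that f(x) = min f[X] and f(y) = max f[X]. -/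
open Set Topology

-- clopen nbhd inside open set, for point with singleton component, compact T2
lemma clopen_nbhd {α : Type*} [TopologicalSpace α] [T2Space α] [CompactSpace α]
    {x : α} (hx : connectedComponent x = {x}) {U : Set α} (hU : IsOpen U) (hxU : x ∈ U) :
    ∃ V : Set α, IsClopen V ∧ x ∈ V ∧ V ⊆ U := by
  have hint : (⋂ Z : {Z : Set α // IsClopen Z ∧ x ∈ Z}, (Z : Set α)) ⊆ U := by
    rw [← connectedComponent_eq_iInter_isClopen, hx]
    simpa using hxU
  have hcU : IsCompact Uᶜ := (hU.isClosed_compl).isCompact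
  have hcover : Uᶜ ⊆ ⋃ Z : {Z : Set α // IsClopen Z ∧ x ∈ Z}, ((Z : Set α))ᶜ := by
    intro t ht
    by_contra h
    simp only [mem_iUnion, not_exists, mem_compl_iff, not_not] at h
    exact ht (hint (by simpa using h))
  obtain ⟨I, hI⟩ := hcU.elim_finite_subcover _
    (fun Z : {Z : Set α // IsClopen Z ∧ x ∈ Z} => Z.2.1.compl.isOpen) hcover
  refine ⟨⋂ Z ∈ I, (Z : Set α), ?_, ?_, ?_⟩
  · exact isClopen_biInter_finset (fun Z _ => Z.2.1)
  · exact mem_iInter₂.mpr fun Z _ => Z.2.2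
  · intro t ht
    by_contra htU
    have := hI htU
    rw [mem_iUnion₂] at this
    obtain ⟨Z, hZI, hZ⟩ := this
    exact hZ (mem_iInter₂.mp ht Z hZI)

lemma key_lemma (S : Set ℝ) (hS : IsCompact S) (p : ℝ) (hp : p ∈ S)
    (hcp : connectedComponentIn S p = {p}) {a b : ℝ} (hab : a < b) :
    ∃ g : ↥S → ℝ, Continuous g ∧ Function.Injective g ∧
      (∀ s, g s ∈ Set.Icc a b) ∧ g ⟨p, hp⟩ = a ∧ ∀ s : ↥S, s ≠ ⟨p, hp⟩ → a < g s := by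
  classical
  haveI : CompactSpace ↥S := isCompact_iff_compactSpace.mp hS
  set pt : ↥S := ⟨p, hp⟩ with hptdef
  have hcc : connectedComponent pt = {pt} := by
    have h1 : (Subtype.val '' connectedComponent pt : Set ℝ) = Subtype.val '' {pt} := by
      rw [← connectedComponentIn_eq_image hp, hcp]; simp; rfl
    exact Set.image_injective.mpr Subtype.val_injective h1
  -- clopen neighborhoods shrinking to pt
  have hZ : ∀ n : ℕ, ∃ V : Set ↥S, IsClopen V ∧ pt ∈ V ∧ V ⊆ Metric.ball pt ((1/2 : ℝ)^n) := by
    intro n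
    exact clopen_nbhd hcc Metric.isOpen_ball (Metric.mem_ball_self (by positivity))
  choose Z hZclopen hZmem hZball using hZ
  -- decreasing sequence
  set A : ℕ → Set ↥S := fun n => Nat.rec Set.univ (fun k Ak => Ak ∩ Z k) n with hAdef
  have hA0 : A 0 = Set.univ := rfl
  have hAsucc : ∀ n, A (n+1) = A n ∩ Z n := fun n => rfl
  have hAclopen : ∀ n, IsClopen (A n) := by
    intro n; induction n with
    | zero => exact isClopen_univ
    | succ k ih => rw [hAsucc]; exact ih.inter (hZclopen k)
  have hAmem : ∀ n, pt ∈ A n := by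
    intro n; induction n with
    | zero => trivial
    | succ k ih => exact ⟨ih, hZmem k⟩
  have hAanti : Antitone A := by
    apply antitone_nat_of_succ_le
    intro n t ht; exact ht.1
  have hAball : ∀ n, A (n+1) ⊆ Metric.ball pt ((1/2:ℝ)^n) := by
    intro n t ht; exact hZball n ht.2
  -- bound
  obtain ⟨r, hr⟩ := hS.isBounded.subset_closedBall p
  set M : ℝ := max r 1 with hMdef
  have hM0 : 0 < M := lt_of_lt_of_le one_pos (le_max_right _ _)
  have hMb : ∀ s : ↥S, |s.val - p| ≤ M := by
    intro s
    have := hr s.2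
    rw [Metric.mem_closedBall, Real.dist_eq] at this
    exact this.trans (le_max_left _ _)
  set u : ↥S → ℝ := fun s => (s.val - p + M) / (2*M) with hudef
  have hu01 : ∀ s, u s ∈ Set.Icc (0:ℝ) 1 := by
    intro s
    have h1 := abs_le.mp (hMb s)
    constructor
    · apply div_nonneg (by linarith [h1.1]) (by linarith)
    · rw [div_le_one (by linarith)]; linarith [h1.2]
  have huinj : Function.Injective u := by
    intro s t h
    rw [div_eq_div_iff (by positivity) (by positivity)] at h
    have := mul_right_cancel₀ (by positivity : (2*M) ≠ 0) h
    exact Subtype.val_injective (by linarith)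
  -- index function
  have hex : ∀ s : ↥S, s ≠ pt → ∃ k, s ∉ A k := by
    intro s hs
    have hd : 0 < dist s pt := dist_pos.mpr hs
    obtain ⟨n, hn⟩ := exists_pow_lt_of_lt_one hd (by norm_num : (1/2:ℝ) < 1)
    refine ⟨n+1, fun hmem => ?_⟩
    have := hAball n hmem
    rw [Metric.mem_ball] at this
    linarith
  set N : ↥S → ℕ := fun s => if h : ∃ k, s ∉ A k then Nat.find h - 1 else 0 with hNdef
  have hNfind : ∀ (s : ↥S) (hs : s ≠ pt), Nat.find (hex s hs) = N s + 1 := by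
    intro s hs
    have h : ∃ k, s ∉ A k := hex s hs
    have h1 : 1 ≤ Nat.find h := by
      rw [Nat.one_le_iff_ne_zero]
      intro h0
      exact (h0 ▸ Nat.find_spec h) (by rw [hA0]; trivial)
    have : N s = Nat.find h - 1 := by simp only [hNdef, dif_pos h]
    omega
  have hNmem : ∀ (s : ↥S) (hs : s ≠ pt), s ∈ A (N s) := by
    intro s hs
    have := Nat.find_min (hex s hs) (m := N s) (by rw [hNfind s hs]; omega)
    exact not_not.mp this
  have hNnot : ∀ (s : ↥S) (hs : s ≠ pt), s ∉ A (N s + 1) := by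
    intro s hs
    have := Nat.find_spec (hex s hs)
    rwa [hNfind s hs] at this
  have hNval : ∀ (s : ↥S) (hs : s ≠ pt) (n : ℕ), s ∈ A n → s ∉ A (n+1) → N s = n := by
    intro s hs n hmem hnot
    have h1 : Nat.find (hex s hs) ≤ n + 1 := Nat.find_le hnot
    have h2 : n < Nat.find (hex s hs) := by
      rw [Nat.lt_find_iff]
      intro m hm hnm
      exact hnm (hAanti hm hmem)
    have := hNfind s hs
    omega
  -- definition of g
  set δ : ℝ := b - a with hδdef
  have hδ0 : 0 < δ := by linarith
  set g : ↥S → ℝ := fun s => if s = pt then a else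
      a + δ * ((1/2:ℝ)^(N s + 1) + (1/2:ℝ)^(N s + 2) * u s) with hgdef
  have hgpt : g pt = a := by simp [hgdef]
  have hgval : ∀ (s : ↥S), s ≠ pt →
      g s = a + δ * ((1/2:ℝ)^(N s + 1) + (1/2:ℝ)^(N s + 2) * u s) := by
    intro s hs; simp [hgdef, hs]
  have hglb : ∀ (s : ↥S) (hs : s ≠ pt), a + δ * (1/2:ℝ)^(N s + 1) ≤ g s := by
    intro s hs
    rw [hgval s hs]
    have h1 := (hu01 s).1
    have h2 : (0:ℝ) ≤ (1/2:ℝ)^(N s + 2) := by positivity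
    have h3 : 0 ≤ δ * ((1/2:ℝ)^(N s + 2) * u s) := mul_nonneg hδ0.le (mul_nonneg h2 h1)
    nlinarith
  have hgub : ∀ (s : ↥S) (hs : s ≠ pt), g s ≤ a + δ * (3 * (1/2:ℝ)^(N s + 2)) := by
    intro s hs
    rw [hgval s hs]
    have h1 := (hu01 s).2
    have h2 : (0:ℝ) < (1/2:ℝ)^(N s + 2) := by positivity
    have h3 : (1/2:ℝ)^(N s + 1) = 2 * (1/2:ℝ)^(N s + 2) := by ring
    have h4 : (1/2:ℝ)^(N s + 2) * u s ≤ (1/2:ℝ)^(N s + 2) := mul_le_of_le_one_right h2.le h1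
    have h5 := mul_le_mul_of_nonneg_left
      (by linarith : (1/2:ℝ)^(N s + 1) + (1/2:ℝ)^(N s + 2) * u s ≤ 3 * (1/2:ℝ)^(N s + 2)) hδ0.le
    linarith
  have hgpos : ∀ (s : ↥S), s ≠ pt → a < g s := by
    intro s hs
    have := hglb s hs
    have h2 : (0:ℝ) < (1/2:ℝ)^(N s + 1) := by positivity
    nlinarith
  have hgle : ∀ s : ↥S, g s ∈ Set.Icc a b := by
    intro s
    by_cases hs : s = pt
    · rw [hs, hgpt]; exact ⟨le_refl a, le_of_lt hab⟩
    · constructor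
      · exact le_of_lt (hgpos s hs)
      · have h1 := hgub s hs
        have h2 : (1/2:ℝ)^(N s + 2) ≤ (1/2:ℝ)^2 := by
          apply pow_le_pow_of_le_one (by norm_num) (by norm_num); omega
        nlinarith
  -- injectivity
  have hginj : Function.Injective g := by
    intro s t h
    by_cases hs : s = pt
    · by_cases ht : t = pt
      · rw [hs, ht]
      · exfalso; rw [hs, hgpt] at h; exact absurd h.symm (ne_of_gt (hgpos t ht))
    · by_cases ht : t = pt
      · exfalso; rw [ht, hgpt] at h; exact absurd h (ne_of_gt (hgpos s hs))
      · -- both ≠ pt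
        have hcross : ∀ (v w : ↥S) (hv : v ≠ pt) (hw : w ≠ pt), N v < N w → g w < g v := by
          intro v w hv hw hlt
          have h1 := hglb v hv
          have h2 := hgub w hw
          have h3 : (1/2:ℝ)^(N w) ≤ (1/2:ℝ)^(N v + 1) := by
            apply pow_le_pow_of_le_one (by norm_num) (by norm_num); omega
          have h4 : 3 * (1/2:ℝ)^(N w + 2) < (1/2:ℝ)^(N w) := by
            have : (1/2:ℝ)^(N w) = 4 * (1/2:ℝ)^(N w + 2) := by ring
            have hpos : (0:ℝ) < (1/2:ℝ)^(N w + 2) := by positivity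
            linarith
          have : δ * (3 * (1/2:ℝ)^(N w + 2)) < δ * (1/2:ℝ)^(N v + 1) := by
            apply mul_lt_mul_of_pos_left _ hδ0
            linarith
          linarith
        rcases lt_trichotomy (N s) (N t) with hlt | heq | hgt
        · exact absurd h (ne_of_gt (hcross s t hs ht hlt))
        · -- equal indices
          rw [hgval s hs, hgval t ht, heq] at h
          have hpow : (0:ℝ) < (1/2:ℝ)^(N t + 2) := by positivity
          have : u s = u t := by
            have h' : δ * ((1/2:ℝ)^(N t+1) + (1/2:ℝ)^(N t+2) * u s)
                = δ * ((1/2:ℝ)^(N t+1) + (1/2:ℝ)^(N t+2) * u t) := by linarith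
            have h'' := mul_left_cancel₀ (ne_of_gt hδ0) h'
            nlinarith [h'']
          exact huinj this
        · exact absurd h (ne_of_lt (hcross t s ht hs hgt))
  -- continuity
  have hgcont : Continuous g := by
    rw [continuous_iff_continuousAt]
    intro s₀
    by_cases hs₀ : s₀ = pt
    · -- continuity at pt
      rw [ContinuousAt, hs₀, hgpt, Metric.tendsto_nhds]
      intro ε hε
      obtain ⟨n, hn⟩ := exists_pow_lt_of_lt_one (div_pos hε hδ0) (by norm_num : (1/2:ℝ) < 1)
      have hmemn : A (n+1) ∈ nhds pt := ((hAclopen (n+1)).2).mem_nhds (hAmem (n+1))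
      refine Filter.eventually_of_mem hmemn (fun t ht => ?_)
      by_cases hts : t = pt
      · rw [hts, hgpt]; simpa using hε
      · have hN : n + 1 ≤ N t := by
          by_contra hcon
          push_neg at hcon
          exact hNnot t hts (hAanti (by omega : N t + 1 ≤ n + 1) ht)
        have h1 := hgub t hts
        have h2 : (1/2:ℝ)^(N t + 2) ≤ (1/2:ℝ)^(n + 3) := by
          apply pow_le_pow_of_le_one (by norm_num) (by norm_num); omega
        have h3 : g t - a < ε := by
          have h4 : 3 * (1/2:ℝ)^(n+3) < 4 * (1/2:ℝ)^(n+3) := by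
            have : (0:ℝ) < (1/2:ℝ)^(n+3) := by positivity
            linarith
          have h5 : (4:ℝ) * (1/2:ℝ)^(n+3) = (1/2:ℝ)^(n+1) := by ring
          have h6 : (1/2:ℝ)^(n+1) ≤ (1/2:ℝ)^n := by
            apply pow_le_pow_of_le_one (by norm_num) (by norm_num); omega
          have h7 : δ * (3 * (1/2:ℝ)^(N t + 2)) ≤ δ * (3 * (1/2:ℝ)^(n+3)) := by
            apply mul_le_mul_of_nonneg_left _ (le_of_lt hδ0); linarith
          have h8 : δ * (1/2:ℝ)^n < ε := by
            rw [lt_div_iff₀ hδ0] at hn; linarith [hn]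
          nlinarith
        rw [Real.dist_eq, abs_of_nonneg (by linarith [hgpos t hts])]
        linarith
    · -- continuity away from pt
      set n := N s₀ with hndef
      have hW : (A n \ A (n+1)) ∈ nhds s₀ :=
        (((hAclopen n).2).sdiff (hAclopen (n+1)).1).mem_nhds ⟨hNmem s₀ hs₀, hNnot s₀ hs₀⟩
      have heq : ∀ t ∈ A n \ A (n+1),
          g t = a + δ * ((1/2:ℝ)^(n + 1) + (1/2:ℝ)^(n + 2) * u t) := by
        intro t ht
        have hts : t ≠ pt := by
          intro h; rw [h] at ht; exact ht.2 (hAmem (n+1))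
        rw [hgval t hts, hNval t hts n ht.1 ht.2]
      have hcont2 : ContinuousAt (fun t : ↥S =>
          a + δ * ((1/2:ℝ)^(n + 1) + (1/2:ℝ)^(n + 2) * u t)) s₀ := by
        apply Continuous.continuousAt
        have hucont : Continuous u := by
          apply Continuous.div_const
          exact (continuous_subtype_val.sub continuous_const).add continuous_const
        exact continuous_const.add (continuous_const.mul
          (continuous_const.add (continuous_const.mul hucont)))
      apply ContinuousAt.congr hcont2
      exact Filter.eventuallyEq_of_mem hW (fun t ht => (heq t ht).symm)
  exact ⟨g, hgcont, hginj, hgle, hgpt, hgpos⟩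

theorem two_singleton_components_to_extremes (X : Set ℝ) (hX : IsCompact X)
    (x y : ℝ) (hx : x ∈ X) (hy : y ∈ X) (hxy : x ≠ y)
    (hcx : connectedComponentIn X x = {x}) (hcy : connectedComponentIn X y = {y}) :
    ∃ f : ↥X → ℝ, Topology.IsEmbedding f ∧
      IsLeast (Set.range f) (f ⟨x, hx⟩) ∧ IsGreatest (Set.range f) (f ⟨y, hy⟩) := by
  classical
  haveI : CompactSpace ↥X := isCompact_iff_compactSpace.mp hX
  set p : ↥X := ⟨x, hx⟩ with hpdef
  set q : ↥X := ⟨y, hy⟩ with hqdef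
  have hpq : p ≠ q := fun h => hxy (congrArg Subtype.val h)
  have hcc : connectedComponent p = {p} := by
    have h1 : (Subtype.val '' connectedComponent p : Set ℝ) = Subtype.val '' {p} := by
      rw [← connectedComponentIn_eq_image hx, hcx]; simp; rfl
    exact Set.image_injective.mpr Subtype.val_injective h1
  obtain ⟨Zc, hZclopen, hpZ, hZsub⟩ :=
    clopen_nbhd hcc (isOpen_compl_singleton (x := q)) (by simpa using hpq)
  have hqZ : q ∉ Zc := fun h => (hZsub h) rfl
  set S₁ : Set ℝ := Subtype.val '' Zc with hS₁def
  set S₂ : Set ℝ := Subtype.val '' Zcᶜ with hS₂def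
  have hmem1 : ∀ t : ↥X, (t.val ∈ S₁ ↔ t ∈ Zc) := by
    intro t
    constructor
    · rintro ⟨s, hs, hst⟩; rwa [Subtype.val_injective hst] at hs
    · intro h; exact ⟨t, h, rfl⟩
  have hmem2 : ∀ t : ↥X, (t.val ∈ S₂ ↔ t ∉ Zc) := by
    intro t
    constructor
    · rintro ⟨s, hs, hst⟩; rwa [Subtype.val_injective hst] at hs
    · intro h; exact ⟨t, h, rfl⟩
  have hS₁X : S₁ ⊆ X := by rintro t ⟨s, _, rfl⟩; exact s.2
  have hS₂X : S₂ ⊆ X := by rintro t ⟨s, _, rfl⟩; exact s.2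
  have hS₁c : IsCompact S₁ := (hZclopen.1.isCompact).image continuous_subtype_val
  have hS₂c : IsCompact S₂ := (hZclopen.compl.1.isCompact).image continuous_subtype_val
  have hxS₁ : x ∈ S₁ := ⟨p, hpZ, rfl⟩
  have hyS₂ : y ∈ S₂ := ⟨q, hqZ, rfl⟩
  have hdisj : ∀ t : ℝ, t ∈ S₁ → t ∉ S₂ := by
    rintro t ⟨s, hs, rfl⟩ h2
    exact (hmem2 s).mp h2 hs
  have hcover : ∀ t : ↥X, t.val ∈ S₁ ∨ t.val ∈ S₂ := by
    intro t
    by_cases h : t ∈ Zc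
    · exact Or.inl ((hmem1 t).mpr h)
    · exact Or.inr ((hmem2 t).mpr h)
  -- singleton components in the pieces
  have hc1 : connectedComponentIn S₁ x = {x} := by
    apply Set.Subset.antisymm
    · exact (connectedComponentIn_mono x hS₁X).trans hcx.subset
    · exact Set.singleton_subset_iff.mpr (mem_connectedComponentIn hxS₁)
  have hc2 : connectedComponentIn S₂ y = {y} := by
    apply Set.Subset.antisymm
    · exact (connectedComponentIn_mono y hS₂X).trans hcy.subset
    · exact Set.singleton_subset_iff.mpr (mem_connectedComponentIn hyS₂)
  obtain ⟨g₁, hg₁cont, hg₁inj, hg₁mem, hg₁x, -⟩ :=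
    key_lemma S₁ hS₁c x hxS₁ hc1 (by norm_num : (0:ℝ) < 1)
  obtain ⟨g₂, hg₂cont, hg₂inj, hg₂mem, hg₂y, -⟩ :=
    key_lemma S₂ hS₂c y hyS₂ hc2 (by norm_num : (-3:ℝ) < -2)
  set F : ℝ → ℝ := fun t => if h : t ∈ S₁ then g₁ ⟨t, h⟩ else
      if h2 : t ∈ S₂ then -g₂ ⟨t, h2⟩ else 0 with hFdef
  have hF1 : ∀ (t : ℝ) (h : t ∈ S₁), F t = g₁ ⟨t, h⟩ := by
    intro t h; simp [hFdef, h]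
  have hF2 : ∀ (t : ℝ) (h : t ∈ S₂), F t = -g₂ ⟨t, h⟩ := by
    intro t h
    have h1 : t ∉ S₁ := fun h1 => hdisj t h1 h
    simp [hFdef, h1, h]
  have hFc1 : ContinuousOn F S₁ := by
    rw [continuousOn_iff_continuous_restrict]
    have : S₁.restrict F = g₁ := funext fun s => hF1 s.val s.2
    rw [show S₁.domRestrict F = g₁ from this]; exact hg₁cont
  have hFc2 : ContinuousOn F S₂ := by
    rw [continuousOn_iff_continuous_restrict]
    have : S₂.restrict F = fun s => -g₂ s := funext fun s => hF2 s.val s.2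
    rw [show S₂.domRestrict F = (fun s => -g₂ s) from this]; exact hg₂cont.neg
  have hFcX : ContinuousOn F X := by
    intro t ht
    have ht' : t ∈ S₁ ∪ S₂ := hcover ⟨t, ht⟩
    have h1 : ContinuousWithinAt F S₁ t := by
      by_cases h : t ∈ S₁
      · exact hFc1 t h
      · exact continuousWithinAt_of_notMem_closure (by rwa [hS₁c.isClosed.closure_eq])
    have h2 : ContinuousWithinAt F S₂ t := by
      by_cases h : t ∈ S₂
      · exact hFc2 t h
      · exact continuousWithinAt_of_notMem_closure (by rwa [hS₂c.isClosed.closure_eq])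
    have := h1.union h2
    exact this.mono (fun s hs => hcover ⟨s, hs⟩)
  set f : ↥X → ℝ := fun s => F s.val with hfdef
  have hfcont : Continuous f := continuousOn_iff_continuous_restrict.mp hFcX
  have hfinj : Function.Injective f := by
    intro s t h
    rcases hcover s with hs | hs <;> rcases hcover t with ht | ht
    · rw [hfdef] at h; simp only at h
      rw [hF1 s.val hs, hF1 t.val ht] at h
      have := hg₁inj h
      exact Subtype.ext (Subtype.mk_eq_mk.mp this)
    · exfalso
      rw [hfdef] at h; simp only at h
      rw [hF1 s.val hs, hF2 t.val ht] at h
      have h1 := (hg₁mem ⟨s.val, hs⟩).2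
      have h2 := (hg₂mem ⟨t.val, ht⟩).2
      linarith
    · exfalso
      rw [hfdef] at h; simp only at h
      rw [hF2 s.val hs, hF1 t.val ht] at h
      have h1 := (hg₁mem ⟨t.val, ht⟩).2
      have h2 := (hg₂mem ⟨s.val, hs⟩).2
      linarith
    · rw [hfdef] at h; simp only at h
      rw [hF2 s.val hs, hF2 t.val ht] at h
      have := hg₂inj (neg_injective h)
      exact Subtype.ext (Subtype.mk_eq_mk.mp this)
  have hfx : f ⟨x, hx⟩ = 0 := by
    show F x = 0
    rw [hF1 x hxS₁]; exact hg₁x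
  have hfy : f ⟨y, hy⟩ = 3 := by
    show F y = 3
    rw [hF2 y hyS₂, hg₂y]; norm_num
  refine ⟨f, (hfcont.isClosedEmbedding hfinj).toIsEmbedding, ?_, ?_⟩
  · constructor
    · exact Set.mem_range_self _
    · rintro v ⟨s, rfl⟩
      rw [hfx]
      rcases hcover s with hs | hs
      · show (0:ℝ) ≤ F s.val
        rw [hF1 s.val hs]; exact (hg₁mem ⟨s.val, hs⟩).1
      · show (0:ℝ) ≤ F s.val
        rw [hF2 s.val hs]
        have := (hg₂mem ⟨s.val, hs⟩).2
        linarith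
  · constructor
    · exact Set.mem_range_self _
    · rintro v ⟨s, rfl⟩
      rw [hfy]
      rcases hcover s with hs | hs
      · show F s.val ≤ 3
        rw [hF1 s.val hs]
        have := (hg₁mem ⟨s.val, hs⟩).2
        linarith
      · show F s.val ≤ 3
        rw [hF2 s.val hs]
        have := (hg₂mem ⟨s.val, hs⟩).1
        linarith
end

section
/- A nonempty compact set X ⊆ ℝ is homeomorphic to the Cantor set if and only if the family of X-gaps equals the whole family Q_X and interlaces itself (i.e., X has no nontrivial components and between any two components of the complement there is another component of the complement). -/
open Set

lemma gapLT {X : Set ℝ} {z a : ℝ} (hz : z ∉ X) (ha : a ∈ X) (hza : z < a) :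
    ∀ w ∈ connectedComponentIn Xᶜ z, w < a := by
  intro w hw
  by_contra h
  push_neg at h
  have hoc : OrdConnected (connectedComponentIn Xᶜ z) :=
    (isPreconnected_connectedComponentIn).ordConnected
  have : a ∈ connectedComponentIn Xᶜ z :=
    hoc.out (mem_connectedComponentIn hz) hw ⟨hza.le, h⟩
  exact (connectedComponentIn_subset _ _ this) ha

lemma ltGap {X : Set ℝ} {z a : ℝ} (hz : z ∉ X) (ha : a ∈ X) (hza : a < z) :
    ∀ w ∈ connectedComponentIn Xᶜ z, a < w := by
  intro w hw
  by_contra h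
  push_neg at h
  have hoc : OrdConnected (connectedComponentIn Xᶜ z) :=
    (isPreconnected_connectedComponentIn).ordConnected
  have : a ∈ connectedComponentIn Xᶜ z :=
    hoc.out hw (mem_connectedComponentIn hz) ⟨h, hza.le⟩
  exact (connectedComponentIn_subset _ _ this) ha


lemma brouwer_key (X : Set ℝ) (hX : IsCompact X) (hne : X.Nonempty)
    (hgap : ∀ u v : ℝ, u < v → ∃ c, c ∈ Set.Ioo u v ∧ c ∉ X)
    (hperf : ∀ x ∈ X, x ∈ closure (X \ {x})) :
    Nonempty (↥X ≃ₜ (ℕ → Bool)) := by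
  classical
  -- pieces
  set S : Type := {s : ℝ × ℝ // s.1 ∉ X ∧ s.2 ∉ X ∧ (X ∩ Ioo s.1 s.2).Nonempty} with hS
  let P : S → Set ℝ := fun s => X ∩ Ioo s.1.1 s.1.2
  have hPc : ∀ s : S, P s = X ∩ Icc s.1.1 s.1.2 := by
    rintro ⟨⟨p, q⟩, hp, hq, hnem⟩
    ext x
    simp only [P, mem_inter_iff, mem_Ioo, mem_Icc]
    refine ⟨fun h => ⟨h.1, h.2.1.le, h.2.2.le⟩, fun h => ⟨h.1, ?_, ?_⟩⟩
    · exact lt_of_le_of_ne h.2.1 (fun e => hp (e ▸ h.1))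
    · exact lt_of_le_of_ne h.2.2 (fun e => hq (e.symm ▸ h.1))
  have hPcomp : ∀ s : S, IsCompact (P s) := fun s => by
    rw [hPc s]; exact hX.inter_right isClosed_Icc
  have hPne : ∀ s : S, (P s).Nonempty := fun s => s.2.2.2
  have hPX : ∀ s : S, P s ⊆ X := fun s => inter_subset_left
  let w : S → ℝ := fun s => sSup (P s) - sInf (P s)
  have hwmem : ∀ s : S, sInf (P s) ∈ P s ∧ sSup (P s) ∈ P s := fun s =>
    ⟨(hPcomp s).sInf_mem (hPne s), (hPcomp s).sSup_mem (hPne s)⟩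
  have hdist : ∀ s : S, ∀ x ∈ P s, ∀ y ∈ P s, |x - y| ≤ w s := by
    intro s x hx y hy
    have bb := (hPcomp s).bddBelow
    have ba := (hPcomp s).bddAbove
    rw [abs_sub_le_iff]
    constructor
    · have := le_csSup ba hx; have := csInf_le bb hy; simp only [w]; linarith
    · have := le_csSup ba hy; have := csInf_le bb hx; simp only [w]; linarith
  have hmem' : ∀ (t : S), ∀ y ∈ P t, y ∈ X ∧ t.1.1 < y ∧ y < t.1.2 := by
    intro t y hy
    simpa [P, mem_Ioo] using hy
  -- step
  have step : ∀ s : S, ∃ c : ℝ, c ∉ X ∧ s.1.1 < c ∧ c < s.1.2 ∧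
      (X ∩ Ioo s.1.1 c).Nonempty ∧ (X ∩ Ioo c s.1.2).Nonempty ∧
      ∀ t : S, (t.1.2 = c ∧ t.1.1 = s.1.1) ∨ (t.1.1 = c ∧ t.1.2 = s.1.2) →
        w t ≤ 2/3 * w s := by
    rintro s
    have haA : sInf (P s) ∈ P s := (hwmem s).1
    have hbA : sSup (P s) ∈ P s := (hwmem s).2
    set a := sInf (P s) with ha
    set b := sSup (P s) with hb
    have hmem : ∀ y ∈ P s, y ∈ X ∧ s.1.1 < y ∧ y < s.1.2 := by
      intro y hy
      simpa [P, mem_Ioo] using hy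
    have haX : a ∈ X := (hmem a haA).1
    have hpa : s.1.1 < a := (hmem a haA).2.1
    have haq : a < s.1.2 := (hmem a haA).2.2
    have hbX : b ∈ X := (hmem b hbA).1
    have hpb : s.1.1 < b := (hmem b hbA).2.1
    have hbq : b < s.1.2 := (hmem b hbA).2.2
    have hab : a < b := by
      rcases lt_or_ge a b with h | h
      · exact h
      · exfalso
        have hsing : ∀ y ∈ P s, y = a := by
          intro y hy
          have h1 : a ≤ y := csInf_le (hPcomp s).bddBelow hy
          have h2 : y ≤ b := le_csSup (hPcomp s).bddAbove hy
          linarith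
        have := hperf a haX
        rw [mem_closure_iff] at this
        obtain ⟨y, hy1, hy2⟩ := this (Ioo s.1.1 s.1.2) isOpen_Ioo ⟨hpa, haq⟩
        have hyP : y ∈ P s := ⟨hy2.1, hy1⟩
        exact hy2.2 (hsing y hyP)
    obtain ⟨c, hc1, hc2⟩ := hgap ((2*a+b)/3) ((a+2*b)/3) (by linarith)
    have hac : a < c := by have := hc1.1; linarith
    have hcb : c < b := by have := hc1.2; linarith
    refine ⟨c, hc2, hpa.trans hac, hcb.trans hbq, ⟨a, haX, hpa, hac⟩,
      ⟨b, hbX, hcb, hbq⟩, ?_⟩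
    rintro t (⟨ht2, ht1⟩ | ⟨ht1, ht2⟩)
    · -- left child : P t = X ∩ Ioo p c
      have hsub : P t ⊆ P s := by
        intro x hx
        have hx' := hmem' t x hx
        rw [ht1, ht2] at hx'
        exact ⟨hx'.1, hx'.2.1, hx'.2.2.trans (hcb.trans hbq)⟩
      have h1 : a ≤ sInf (P t) :=
        le_csInf (hPne t) (fun x hx => csInf_le (hPcomp s).bddBelow (hsub hx))
      have h2 : sSup (P t) ≤ c :=
        csSup_le (hPne t) (fun x hx => ((ht2 ▸ (hmem' t x hx).2.2) : x < c).le)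
      have := hc1.2
      show sSup (P t) - sInf (P t) ≤ 2/3 * (b - a)
      linarith
    · have hsub : P t ⊆ P s := by
        intro x hx
        have hx' := hmem' t x hx
        rw [ht1, ht2] at hx'
        exact ⟨hx'.1, hpa.trans (hac.trans hx'.2.1), hx'.2.2⟩
      have h1 : sSup (P t) ≤ b :=
        csSup_le (hPne t) (fun x hx => le_csSup (hPcomp s).bddAbove (hsub hx))
      have h2 : c ≤ sInf (P t) :=
        le_csInf (hPne t) (fun x hx => ((ht1 ▸ (hmem' t x hx).2.1) : c < x).le)
      have := hc1.1
      show sSup (P t) - sInf (P t) ≤ 2/3 * (b - a)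
      linarith
  choose cut hcutX hcutl hcutr hcutL hcutR hcutW using step
  -- children
  let child : Bool → S → S := fun b s =>
    if b then ⟨(cut s, s.1.2), hcutX s, s.2.2.1, hcutR s⟩
    else ⟨(s.1.1, cut s), s.2.1, hcutX s, hcutL s⟩
  have child_sub : ∀ b s, P (child b s) ⊆ P s := by
    intro b s x hx
    cases b <;>
      simp only [child, if_true, if_false, Bool.false_eq_true, ite_false, ite_true, P,
        mem_inter_iff, mem_Ioo] at hx ⊢
    · exact ⟨hx.1, hx.2.1, lt_trans hx.2.2 (hcutr s)⟩
    · exact ⟨hx.1, lt_trans (hcutl s) hx.2.1, hx.2.2⟩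
  have child_w : ∀ b s, w (child b s) ≤ 2/3 * w s := by
    intro b s
    cases b
    · exact hcutW s _ (Or.inl ⟨rfl, rfl⟩)
    · exact hcutW s _ (Or.inr ⟨rfl, rfl⟩)
  have child_lt : ∀ s, ∀ x ∈ P (child false s), ∀ y ∈ P (child true s), x < cut s ∧ cut s < y := by
    intro s x hx y hy
    exact ⟨hx.2.2, hy.2.1⟩
  -- initial state
  have hinit : (sInf X - 1) ∉ X ∧ (sSup X + 1) ∉ X ∧ (X ∩ Ioo (sInf X - 1) (sSup X + 1)).Nonempty := by
    have hb := hX.bddBelow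
    have ha := hX.bddAbove
    refine ⟨fun h => ?_, fun h => ?_, ?_⟩
    · have := csInf_le hb h; linarith
    · have := le_csSup ha h; linarith
    · obtain ⟨x, hx⟩ := hne
      exact ⟨x, hx, by have := csInf_le hb hx; linarith, by have := le_csSup ha hx; linarith⟩
  let init : S := ⟨(sInf X - 1, sSup X + 1), hinit⟩
  have hPinit : P init = X := by
    ext x
    simp only [P, mem_inter_iff, mem_Ioo, init]
    refine ⟨fun h => h.1, fun h => ⟨h, ?_, ?_⟩⟩
    · have := csInf_le hX.bddBelow h; linarith
    · have := le_csSup hX.bddAbove h; linarith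
  -- iterates
  let E : (ℕ → Bool) → ℕ → S := fun σ => fun n => Nat.rec init (fun k prev => child (σ k) prev) n
  have E0 : ∀ σ, E σ 0 = init := fun _ => rfl
  have ES : ∀ σ n, E σ (n + 1) = child (σ n) (E σ n) := fun _ _ => rfl
  have Eagree : ∀ n (σ τ : ℕ → Bool), (∀ i < n, σ i = τ i) → E σ n = E τ n := by
    intro n
    induction n with
    | zero => intro σ τ _; rfl
    | succ n ih =>
      intro σ τ h
      rw [ES, ES, ih σ τ (fun i hi => h i (Nat.lt_succ_of_lt hi)), h n (Nat.lt_succ_self n)]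
  have Ew : ∀ σ n, w (E σ n) ≤ (2/3 : ℝ)^n * w init := by
    intro σ n
    induction n with
    | zero => simp [E0]
    | succ n ih =>
      rw [ES]
      calc w (child (σ n) (E σ n)) ≤ 2/3 * w (E σ n) := child_w _ _
        _ ≤ 2/3 * ((2/3)^n * w init) := by
            have h23 : (0:ℝ) ≤ 2/3 := by norm_num
            nlinarith [ih]
        _ = (2/3)^(n+1) * w init := by ring
  have Esub : ∀ σ n, P (E σ (n+1)) ⊆ P (E σ n) := fun σ n => by
    rw [ES]; exact child_sub _ _
  -- limit point
  have gex : ∀ σ : ℕ → Bool, ∃ x : ℝ, ∀ n, x ∈ P (E σ n) := by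
    intro σ
    have := IsCompact.nonempty_iInter_of_sequence_nonempty_isCompact_isClosed
      (fun n => P (E σ n)) (Esub σ) (fun n => hPne _) (hPcomp _)
      (fun n => by show IsClosed (P (E σ n)); rw [hPc]; exact (hX.isClosed).inter isClosed_Icc)
    obtain ⟨x, hx⟩ := this
    exact ⟨x, fun n => mem_iInter.1 hx n⟩
  choose g hg using gex
  have hgX : ∀ σ, g σ ∈ X := fun σ => hPinit ▸ (E0 σ ▸ hg σ 0)
  -- width tendsto 0
  have hwtend : Filter.Tendsto (fun n => (2/3:ℝ)^n * w init) Filter.atTop (nhds 0) := by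
    have := tendsto_pow_atTop_nhds_zero_of_lt_one (by norm_num : (0:ℝ) ≤ 2/3) (by norm_num : (2/3:ℝ) < 1)
    simpa using this.mul_const (w init)
  have hunique : ∀ σ (x : ℝ), (∀ n, x ∈ P (E σ n)) → x = g σ := by
    intro σ x hx
    have hle : ∀ n, |x - g σ| ≤ (2/3:ℝ)^n * w init := fun n =>
      le_trans (hdist _ _ (hx n) _ (hg σ n)) (Ew σ n)
    have : |x - g σ| ≤ 0 := ge_of_tendsto' hwtend hle
    have := abs_nonneg (x - g σ)
    have : |x - g σ| = 0 := le_antisymm ‹|x - g σ| ≤ 0› this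
    rw [abs_eq_zero] at this
    linarith [this]
  -- the map
  let F : (ℕ → Bool) → ↥X := fun σ => ⟨g σ, hgX σ⟩
  have Finj : Function.Injective F := by
    intro σ τ hFeq
    have hgeq : g σ = g τ := congrArg Subtype.val hFeq
    by_contra hne'
    have hd : ∃ n, σ n ≠ τ n := by
      by_contra h
      push_neg at h
      exact hne' (funext h)
    set n := Nat.find hd with hn
    have hdn : σ n ≠ τ n := Nat.find_spec hd
    have hlt : ∀ i < n, σ i = τ i := fun i hi => by
      have := Nat.find_min hd hi
      simpa using this
    have hEeq : E σ n = E τ n := Eagree n σ τ hlt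
    have h1 : g σ ∈ P (E σ (n+1)) := hg σ (n+1)
    have h2 : g τ ∈ P (E τ (n+1)) := hg τ (n+1)
    rw [ES] at h1 h2
    rw [hEeq] at h1
    set s := E τ n
    cases hb : σ n with
    | false =>
      have hb' : τ n = true := by
        cases hb2 : τ n
        · rw [hb, hb2] at hdn; exact absurd rfl hdn
        · rfl
      rw [hb] at h1; rw [hb'] at h2
      have := child_lt s _ h1 _ h2
      rw [hgeq] at this
      linarith [this.1, this.2]
    | true =>
      have hb' : τ n = false := by
        cases hb2 : τ n
        · rfl
        · rw [hb, hb2] at hdn; exact absurd rfl hdn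
      rw [hb] at h1; rw [hb'] at h2
      have := child_lt s _ h2 _ h1
      rw [hgeq] at this
      linarith [this.1, this.2]
  have Fsurj : Function.Surjective F := by
    rintro ⟨x, hx⟩
    let u : ℕ → S := fun n => Nat.rec init (fun _ prev => child (decide (cut prev < x)) prev) n
    let σ : ℕ → Bool := fun n => decide (cut (u n) < x)
    have hEu : ∀ n, E σ n = u n := by
      intro n
      induction n with
      | zero => rfl
      | succ n ih => rw [ES, ih]
    have hxu : ∀ n, x ∈ P (u n) := by
      intro n
      induction n with
      | zero => rw [show P (u 0) = X from hPinit]; exact hx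
      | succ n ih =>
        have hxc : x ≠ cut (u n) := fun h => hcutX (u n) (h ▸ hx)
        have hu : u (n+1) = child (decide (cut (u n) < x)) (u n) := rfl
        rcases lt_or_gt_of_ne hxc with h | h
        · -- x < cut : false branch
          have : decide (cut (u n) < x) = false := by simp [not_lt.2 h.le]
          rw [hu, this]
          exact ⟨hx, ih.2.1, h⟩
        · have : decide (cut (u n) < x) = true := by simp [h]
          rw [hu, this]
          exact ⟨hx, h, ih.2.2⟩
    refine ⟨σ, ?_⟩
    have : x = g σ := hunique σ x (fun n => (hEu n).symm ▸ hxu n)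
    simp only [F]
    exact Subtype.ext this.symm
  have Fcont : Continuous F := by
    apply Continuous.subtype_mk
    rw [continuous_iff_continuousAt]
    intro σ
    rw [ContinuousAt, Metric.tendsto_nhds]
    intro ε hε
    obtain ⟨n, hn⟩ := (hwtend.eventually (gt_mem_nhds hε)).exists
    have hV : {τ : ℕ → Bool | ∀ i < n, τ i = σ i} ∈ nhds σ := by
      have : {τ : ℕ → Bool | ∀ i < n, τ i = σ i} =
          ⋂ i ∈ Finset.range n, (fun τ : ℕ → Bool => τ i) ⁻¹' {σ i} := by
        ext τ; simp [Finset.mem_range]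
      rw [this]
      refine IsOpen.mem_nhds ?_ ?_
      · exact isOpen_biInter_finset (fun i _ => (continuous_apply i).isOpen_preimage _ (isOpen_discrete _))
      · simp
    refine Filter.mem_of_superset hV ?_
    intro τ hτ
    have hEeq : E τ n = E σ n := Eagree n τ σ hτ
    have h1 : g τ ∈ P (E σ n) := hEeq ▸ hg τ n
    have h2 : g σ ∈ P (E σ n) := hg σ n
    have := le_trans (hdist _ _ h1 _ h2) (Ew σ n)
    simp only [mem_setOf_eq, Real.dist_eq]
    exact lt_of_le_of_lt this hn
  exact ⟨(Continuous.homeoOfEquivCompactToT2 (f := Equiv.ofBijective F ⟨Finj, Fsurj⟩) Fcont).symm⟩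


lemma cantor_perfect_pt (p : ℕ → Bool) : p ∈ closure ({p}ᶜ) := by
  have ht : Filter.Tendsto (fun n => Function.update p n (!p n)) Filter.atTop (nhds p) := by
    rw [tendsto_pi_nhds]
    intro i
    apply Filter.Tendsto.congr' (f₁ := fun _ => p i)
    · filter_upwards [Filter.eventually_gt_atTop i] with n hn
      simp [Function.update_of_ne (show i ≠ n by omega)]
    · exact tendsto_const_nhds
  refine mem_closure_of_tendsto ht ?_
  filter_upwards with n
  simp only [mem_compl_iff, mem_singleton_iff]
  intro hcon
  have := congrFun hcon n
  simp at this

lemma perf_of_homeo (X : Set ℝ) (e : ↥X ≃ₜ (ℕ → Bool)) :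
    ∀ x ∈ X, x ∈ closure (X \ {x}) := by
  intro x hx
  set x0 : ↥X := ⟨x, hx⟩
  have h2 : e x0 ∈ closure ({e x0}ᶜ) := cantor_perfect_pt (e x0)
  have h3 : x0 ∈ e ⁻¹' closure ({e x0}ᶜ) := h2
  rw [Homeomorph.preimage_closure] at h3
  have h4 : e ⁻¹' ({e x0}ᶜ) = {x0}ᶜ := by
    ext y
    simp [e.injective.eq_iff]
  rw [h4] at h3
  rw [closure_subtype] at h3
  have h5 : (Subtype.val '' ({x0}ᶜ : Set ↥X)) = X \ {x} := by
    ext z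
    constructor
    · rintro ⟨⟨z', hz'⟩, hz1, rfl⟩
      refine ⟨hz', ?_⟩
      simp only [mem_compl_iff, mem_singleton_iff, x0] at hz1
      simpa using fun h => hz1 (Subtype.ext h)
    · rintro ⟨hz1, hz2⟩
      exact ⟨⟨z, hz1⟩, by simpa [x0, Subtype.ext_iff] using hz2, rfl⟩
  rwa [h5] at h3

lemma sing_of_homeo (X : Set ℝ) (e : ↥X ≃ₜ (ℕ → Bool)) :
    ∀ x ∈ X, connectedComponentIn X x = {x} := by
  haveI : TotallyDisconnectedSpace ↥X :=
    e.isEmbedding.isTotallyDisconnected_range.mp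
      (isTotallyDisconnected_of_totallyDisconnectedSpace _)
  intro x hx
  rw [connectedComponentIn_eq_image hx]
  have h1 : connectedComponent (⟨x, hx⟩ : ↥X) = {⟨x, hx⟩} :=
    totallyDisconnectedSpace_iff_connectedComponent_singleton.mp ‹_› _
  rw [h1]
  simp

lemma gap_of_sing (X : Set ℝ) (hsing : ∀ x ∈ X, connectedComponentIn X x = {x}) :
    ∀ u v : ℝ, u < v → ∃ c, c ∈ Ioo u v ∧ c ∉ X := by
  intro u v huv
  by_contra h
  push_neg at h
  have hm : (u + v)/2 ∈ Ioo u v := ⟨by linarith, by linarith⟩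
  have hsub : Ioo u v ⊆ connectedComponentIn X ((u + v)/2) :=
    isPreconnected_Ioo.subset_connectedComponentIn hm (fun z hz => h z hz)
  rw [hsing _ (h _ hm)] at hsub
  have hq : (3*u + v)/4 ∈ Ioo u v := ⟨by linarith, by linarith⟩
  have := hsub hq
  rw [mem_singleton_iff] at this
  linarith

lemma interlace_fwd (X : Set ℝ) (hX : IsCompact X)
    (hgap : ∀ u v : ℝ, u < v → ∃ c, c ∈ Ioo u v ∧ c ∉ X)
    (hperf : ∀ x ∈ X, x ∈ closure (X \ {x})) :
    Interlaces (gapsOf X) (gapsOf X) := by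
  rintro I ⟨zI, hzI, rfl⟩ J ⟨zJ, hzJ, rfl⟩ hLT
  have hxI : zI ∈ connectedComponentIn Xᶜ zI := mem_connectedComponentIn hzI
  have hyJ : zJ ∈ connectedComponentIn Xᶜ zJ := mem_connectedComponentIn hzJ
  have hxy : zI < zJ := hLT _ hxI _ hyJ
  set T := X ∩ Icc zI zJ with hT
  have hTc : IsCompact T := hX.inter_right isClosed_Icc
  have hTne : T.Nonempty := by
    by_contra hTe
    rw [not_nonempty_iff_eq_empty] at hTe
    have hIcc : Icc zI zJ ⊆ Xᶜ := by
      intro z hz hzX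
      exact absurd (show z ∈ T from ⟨hzX, hz⟩) (by simp [hTe])
    have hsub : Icc zI zJ ⊆ connectedComponentIn Xᶜ zI :=
      isPreconnected_Icc.subset_connectedComponentIn ⟨le_refl zI, hxy.le⟩ hIcc
    exact lt_irrefl zJ (hLT _ (hsub ⟨hxy.le, le_refl zJ⟩) _ hyJ)
  set a := sInf T with ha
  set b := sSup T with hb
  have haT : a ∈ T := hTc.sInf_mem hTne
  have hbT : b ∈ T := hTc.sSup_mem hTne
  have hxa : zI < a := lt_of_le_of_ne haT.2.1 (fun h => hzI (h ▸ haT.1))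
  have hby : b < zJ := lt_of_le_of_ne hbT.2.2 (fun h => hzJ (h.symm ▸ hbT.1))
  have hIlt : ∀ z ∈ connectedComponentIn Xᶜ zI, z < a := gapLT hzI haT.1 hxa
  have hJgt : ∀ z ∈ connectedComponentIn Xᶜ zJ, b < z := ltGap hzJ hbT.1 hby
  have hab : a ≤ b := le_csSup hTc.bddAbove haT
  rcases eq_or_lt_of_le hab with heq | hlt
  · exfalso
    have := hperf a haT.1
    rw [mem_closure_iff] at this
    obtain ⟨y, hy1, hy2⟩ := this (Ioo zI zJ) isOpen_Ioo ⟨hxa, heq ▸ hby⟩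
    have hyT : y ∈ T := ⟨hy2.1, hy1.1.le, hy1.2.le⟩
    have h1 : a ≤ y := csInf_le hTc.bddBelow hyT
    have h2 : y ≤ b := le_csSup hTc.bddAbove hyT
    have : y = a := le_antisymm (heq ▸ h2) h1
    exact hy2.2 (by simp [this])
  · obtain ⟨c, hc1, hc2⟩ := hgap a b hlt
    refine ⟨connectedComponentIn Xᶜ c, ⟨c, hc2, rfl⟩, ?_, ?_⟩
    · intro z hz k hk
      exact lt_trans (hIlt z hz) (ltGap hc2 haT.1 hc1.1 k hk)
    · intro k hk z hz
      exact lt_trans (gapLT hc2 hbT.1 hc1.2 k hk) (hJgt z hz)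

lemma perf_bwd (X : Set ℝ)
    (hInt : Interlaces (gapsOf X) (gapsOf X)) :
    ∀ x ∈ X, x ∈ closure (X \ {x}) := by
  intro x hx
  by_contra hcl
  rw [Metric.mem_closure_iff] at hcl
  push_neg at hcl
  obtain ⟨ε, hε, hball⟩ := hcl
  have hXloc : ∀ y ∈ X, |y - x| < ε → y = x := by
    intro y hy hlt
    by_contra hne'
    have := hball y ⟨hy, hne'⟩
    rw [Real.dist_eq, abs_sub_comm] at this
    linarith
  have hzI : x - ε/2 ∉ X := by
    intro h
    have := hXloc _ h (by rw [abs_sub_comm, show x - (x - ε/2) = ε/2 by ring, abs_of_pos (by linarith)]; linarith)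
    linarith
  have hzJ : x + ε/2 ∉ X := by
    intro h
    have := hXloc _ h (by rw [show x + ε/2 - x = ε/2 by ring, abs_of_pos (by linarith)]; linarith)
    linarith
  have hIsub : Ioo (x - ε) x ⊆ connectedComponentIn Xᶜ (x - ε/2) := by
    refine isPreconnected_Ioo.subset_connectedComponentIn ⟨by linarith, by linarith⟩ ?_
    intro z hz hzX
    have := hXloc z hzX (by rw [abs_sub_lt_iff]; constructor <;> [linarith [hz.1, hz.2]; linarith [hz.1, hz.2]])
    exact absurd this (ne_of_lt hz.2)
  have hJsub : Ioo x (x + ε) ⊆ connectedComponentIn Xᶜ (x + ε/2) := by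
    refine isPreconnected_Ioo.subset_connectedComponentIn ⟨by linarith, by linarith⟩ ?_
    intro z hz hzX
    have := hXloc z hzX (by rw [abs_sub_lt_iff]; constructor <;> [linarith [hz.1, hz.2]; linarith [hz.1, hz.2]])
    exact absurd this.symm (ne_of_lt hz.1)
  have hIlt : ∀ z ∈ connectedComponentIn Xᶜ (x - ε/2), z < x := gapLT hzI hx (by linarith)
  have hJgt : ∀ z ∈ connectedComponentIn Xᶜ (x + ε/2), x < z := ltGap hzJ hx (by linarith)
  obtain ⟨K, hK, hIK, hKJ⟩ := hInt _ ⟨_, hzI, rfl⟩ _ ⟨_, hzJ, rfl⟩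
    (fun p hp q hq => (hIlt p hp).trans (hJgt q hq))
  obtain ⟨zK, hzK, rfl⟩ := hK
  have hkK : zK ∈ connectedComponentIn Xᶜ zK := mem_connectedComponentIn hzK
  have h1 : x ≤ zK := by
    by_contra h
    push_neg at h
    set m := max zK (x - ε) with hm
    have hmx : m < x := max_lt h (by linarith)
    have hmem : (m + x)/2 ∈ Ioo (x - ε) x := by
      constructor
      · have : x - ε ≤ m := le_max_right _ _
        linarith
      · linarith
    have := hIK _ (hIsub hmem) _ hkK
    have h3 : zK ≤ m := le_max_left _ _
    linarith
  have h2 : zK ≤ x := by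
    by_contra h
    push_neg at h
    set m := min zK (x + ε) with hm
    have hmx : x < m := lt_min h (by linarith)
    have hmem : (x + m)/2 ∈ Ioo x (x + ε) := by
      constructor
      · linarith
      · have : m ≤ x + ε := min_le_right _ _
        linarith
    have := hKJ _ hkK _ (hJsub hmem)
    have h3 : m ≤ zK := min_le_left _ _
    linarith
  exact hzK (show zK ∈ X from (le_antisymm h2 h1) ▸ hx)

theorem cantor_copy_iff_gaps_interlace (X : Set ℝ) (hX : IsCompact X)
    (hne : X.Nonempty) :
    Nonempty (↥X ≃ₜ (ℕ → Bool)) ↔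
      (gapsOf X = QOf X ∧ Interlaces (gapsOf X) (gapsOf X)) := by
  constructor
  · rintro ⟨e⟩
    have hsing := sing_of_homeo X e
    have hperf := perf_of_homeo X e
    have hgap := gap_of_sing X hsing
    constructor
    · have hint : intervalsOf X = ∅ := by
        rw [eq_empty_iff_forall_notMem]
        rintro I ⟨⟨x, hx, rfl⟩, hnt⟩
        rw [hsing x hx] at hnt
        obtain ⟨a, ha, b, hb, hab⟩ := hnt
        rw [mem_singleton_iff] at ha hb
        exact hab (ha.trans hb.symm)
      rw [QOf, hint, union_empty]
    · exact interlace_fwd X hX hgap hperf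
  · rintro ⟨hQ, hInt⟩
    have hint : intervalsOf X = ∅ := by
      rw [eq_empty_iff_forall_notMem]
      rintro I hI
      have hIQ : I ∈ QOf X := Or.inr hI
      rw [← hQ] at hIQ
      obtain ⟨z, hz, hzeq⟩ := hIQ
      obtain ⟨⟨x, hx, hIeq⟩, hnt⟩ := hI
      have hxI : x ∈ I := by rw [hIeq]; exact mem_connectedComponentIn hx
      have hsubc : I ⊆ Xᶜ := by rw [hzeq]; exact connectedComponentIn_subset _ _
      exact hsubc hxI hx
    have hsing : ∀ x ∈ X, connectedComponentIn X x = {x} := by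
      intro x hx
      have hns : ¬ (connectedComponentIn X x).Nontrivial := by
        intro hnt
        have hmem : connectedComponentIn X x ∈ intervalsOf X := ⟨⟨x, hx, rfl⟩, hnt⟩
        rw [hint] at hmem
        exact hmem
      rw [not_nontrivial_iff] at hns
      exact hns.eq_singleton_of_mem (mem_connectedComponentIn hx)
    exact brouwer_key X hX hne (gap_of_sing X hsing) (perf_bwd X hInt)
end

section
/- If X ⊆ ℝ is an M-Cantorval, then the family B_X of X-intervals with no free endpoint interlaces the full family Q_X of X-gaps and X-intervals: between any two members of Q_X lies a member of B_X. -/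
open Set

namespace MCVhelp

variable {X : Set ℝ}

lemma intervals_subset {I : Set ℝ} (hI : I ∈ intervalsOf X) : I ⊆ X := by
  obtain ⟨⟨x, hx, rfl⟩, -⟩ := hI
  exact connectedComponentIn_subset _ _

lemma intervals_preconn {I : Set ℝ} (hI : I ∈ intervalsOf X) : IsPreconnected I := by
  obtain ⟨⟨x, hx, rfl⟩, -⟩ := hI
  exact isPreconnected_connectedComponentIn

lemma gaps_subset {G : Set ℝ} (hG : G ∈ gapsOf X) : G ⊆ Xᶜ := by
  obtain ⟨x, hx, rfl⟩ := hG
  exact connectedComponentIn_subset _ _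

lemma gaps_preconn {G : Set ℝ} (hG : G ∈ gapsOf X) : IsPreconnected G := by
  obtain ⟨x, hx, rfl⟩ := hG
  exact isPreconnected_connectedComponentIn

lemma Q_preconn {I : Set ℝ} (hI : I ∈ QOf X) : IsPreconnected I := by
  cases hI with
  | inl h => exact gaps_preconn h
  | inr h => exact intervals_preconn h

lemma Q_ordConn {I : Set ℝ} (hI : I ∈ QOf X) : I.OrdConnected :=
  (Q_preconn hI).ordConnected

lemma Q_nonempty {I : Set ℝ} (hI : I ∈ QOf X) : I.Nonempty := by
  cases hI with
  | inl h => obtain ⟨x, hx, rfl⟩ := h; exact ⟨x, mem_connectedComponentIn hx⟩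
  | inr h => exact h.2.nonempty

lemma intervals_comp {I : Set ℝ} (hI : I ∈ intervalsOf X) {y : ℝ} (hy : y ∈ I) :
    connectedComponentIn X y = I := by
  obtain ⟨⟨x, hx, rfl⟩, -⟩ := hI
  exact (connectedComponentIn_eq hy).symm

lemma gaps_comp {G : Set ℝ} (hG : G ∈ gapsOf X) {y : ℝ} (hy : y ∈ G) :
    connectedComponentIn Xᶜ y = G := by
  obtain ⟨x, hx, rfl⟩ := hG
  exact (connectedComponentIn_eq hy).symm

lemma triv_notMem_interval {t : ℝ} (ht : t ∈ trivCompOf X) {I : Set ℝ}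
    (hI : I ∈ intervalsOf X) : t ∉ I := by
  intro htI
  have h1 : connectedComponentIn X t = I := intervals_comp hI htI
  have h2 := ht.2
  rw [h1] at h2
  obtain ⟨a, ha, b, hb, hab⟩ := hI.2
  rw [h2] at ha hb
  exact hab (ha.trans hb.symm)

lemma triv_notMem_Q {t : ℝ} (ht : t ∈ trivCompOf X) {J : Set ℝ} (hJ : J ∈ QOf X) : t ∉ J := by
  cases hJ with
  | inl h => exact fun htJ => (gaps_subset h htJ) ht.1
  | inr h => exact triv_notMem_interval ht h

lemma intervals_closed (hX : IsClosed X) {I : Set ℝ} (hI : I ∈ intervalsOf X) : IsClosed I := by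
  obtain ⟨⟨x, hx, hIeq⟩, -⟩ := hI
  subst hIeq
  have h1 : closure (connectedComponentIn X x) ⊆ connectedComponentIn X x :=
    IsPreconnected.subset_connectedComponentIn
      isPreconnected_connectedComponentIn.closure
      (subset_closure (mem_connectedComponentIn hx))
      (by
        have := closure_mono (connectedComponentIn_subset X x)
        rwa [hX.closure_eq] at this)
  exact isClosed_of_closure_subset h1

lemma intervals_compact (hX : IsClosed X) (hb : Bornology.IsBounded X)
    {I : Set ℝ} (hI : I ∈ intervalsOf X) : IsCompact I :=
  Metric.isCompact_of_isClosed_isBounded (intervals_closed hX hI)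
    (hb.subset (intervals_subset hI))

/-- Every X-interval belongs to BOf X. -/
lemma intervals_subset_B (h : MCantorval X) : intervalsOf X ⊆ BOf X := by
  intro K hK
  refine ⟨hK, fun e he => ?_⟩
  have h1 := h.2.2.2 K hK e he
  refine closure_mono (fun t ht => ?_) h1
  exact ⟨ht.1.1, triv_notMem_interval ht.1 hK⟩

lemma setLT_singleton_of {I : Set ℝ} (hc : I.OrdConnected) {p x : ℝ}
    (hp : p ∈ I) (hx : x ∉ I) (hpx : p < x) : setLT I {x} := by
  intro i hi y hy
  rw [mem_singleton_iff] at hy; subst hy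
  by_contra hlt
  push_neg at hlt
  exact hx (hc.out hp hi ⟨hpx.le, hlt⟩)

lemma singleton_setLT_of {J : Set ℝ} (hc : J.OrdConnected) {r x : ℝ}
    (hr : r ∈ J) (hx : x ∉ J) (hxr : x < r) : setLT {x} J := by
  intro y hy j hj
  rw [mem_singleton_iff] at hy; subst hy
  by_contra hlt
  push_neg at hlt
  exact hx (hc.out hj hr ⟨hlt, hxr.le⟩)

/-- Left control: a pivot `p < t` such that any interval lying partly above `p`
is entirely above `I`. -/
lemma left_control (hX : IsClosed X) (hb : Bornology.IsBounded X)
    {I : Set ℝ} (hI : I ∈ QOf X) {t : ℝ} (ht : setLT I {t}) :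
    ∃ p, p < t ∧ ∀ K ∈ intervalsOf X, ∀ q ∈ K, p < q → setLT I K := by
  rcases hI with hg | hint
  · obtain ⟨x, hx, hGeq⟩ := hg
    have hIg : I ∈ gapsOf X := ⟨x, hx, hGeq⟩
    have hxG : x ∈ I := hGeq ▸ mem_connectedComponentIn hx
    refine ⟨x, ht x hxG t rfl, fun K hK q hq hpq i hi k hk => ?_⟩
    have hKX : K ⊆ X := intervals_subset hK
    have hxK : x ∉ K := fun hxK => hx (hKX hxK)
    have hkx : x < k := by
      by_contra hle; push_neg at hle
      exact hxK ((intervals_preconn hK).ordConnected.out hk hq ⟨hle, hpq.le⟩)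
    have hkI : k ∉ I := fun hkI => (gaps_subset hIg hkI) (hKX hk)
    exact setLT_singleton_of (Q_ordConn (Or.inl hIg)) hxG hkI hkx i hi k rfl
  · obtain ⟨p, hp⟩ := (intervals_compact hX hb hint).exists_isGreatest hint.2.nonempty
    refine ⟨p, ht p hp.1 t rfl, fun K hK q hq hpq i hi k hk => ?_⟩
    have hpK : p ∉ K := by
      intro hpK
      have hKI : K = I := (intervals_comp hK hpK).symm.trans (intervals_comp hint hp.1)
      exact absurd (hp.2 (hKI ▸ hq)) (not_le.mpr hpq)
    have hkp : p < k := by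
      by_contra hle; push_neg at hle
      exact hpK ((intervals_preconn hK).ordConnected.out hk hq ⟨hle, hpq.le⟩)
    exact lt_of_le_of_lt (hp.2 hi) hkp

/-- Right control: a pivot `r > t` such that any interval lying partly below `r`
is entirely below `J`. -/
lemma right_control (hX : IsClosed X) (hb : Bornology.IsBounded X)
    {J : Set ℝ} (hJ : J ∈ QOf X) {t : ℝ} (ht : setLT {t} J) :
    ∃ r, t < r ∧ ∀ K ∈ intervalsOf X, ∀ q ∈ K, q < r → setLT K J := by
  rcases hJ with hg | hint
  · obtain ⟨x, hx, hGeq⟩ := hg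
    have hJg : J ∈ gapsOf X := ⟨x, hx, hGeq⟩
    have hxG : x ∈ J := hGeq ▸ mem_connectedComponentIn hx
    refine ⟨x, ht t rfl x hxG, fun K hK q hq hqr k hk j hj => ?_⟩
    have hKX : K ⊆ X := intervals_subset hK
    have hxK : x ∉ K := fun hxK => hx (hKX hxK)
    have hkx : k < x := by
      by_contra hle; push_neg at hle
      exact hxK ((intervals_preconn hK).ordConnected.out hq hk ⟨hqr.le, hle⟩)
    have hkJ : k ∉ J := fun hkJ => (gaps_subset hJg hkJ) (hKX hk)
    exact singleton_setLT_of (Q_ordConn (Or.inl hJg)) hxG hkJ hkx k rfl j hj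
  · obtain ⟨r, hr⟩ := (intervals_compact hX hb hint).exists_isLeast hint.2.nonempty
    refine ⟨r, ht t rfl r hr.1, fun K hK q hq hqr k hk j hj => ?_⟩
    have hrK : r ∉ K := by
      intro hrK
      have hKJ : K = J := (intervals_comp hK hrK).symm.trans (intervals_comp hint hr.1)
      exact absurd (hr.2 (hKJ ▸ hq)) (not_le.mpr hqr)
    have hkr : k < r := by
      by_contra hle; push_neg at hle
      exact hrK ((intervals_preconn hK).ordConnected.out hq hk ⟨hqr.le, hle⟩)
    exact lt_of_lt_of_le hkr (hr.2 hj)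

/-- Step A: a point of `X` strictly between `I` and `J`. -/
lemma exists_point_between (h : MCantorval X) {I J : Set ℝ}
    (hI : I ∈ QOf X) (hJ : J ∈ QOf X) (hIJ : setLT I J) :
    ∃ t ∈ X, setLT I {t} ∧ setLT {t} J := by
  have hX : IsClosed X := h.2.2.1.1
  have hb : Bornology.IsBounded X := h.2.1
  obtain ⟨j₀, hj₀⟩ := Q_nonempty hJ
  have hJoc := Q_ordConn hJ
  have build : ∀ t, t ∈ trivCompOf X → setLT I {t} → t < j₀ →
      ∃ t ∈ X, setLT I {t} ∧ setLT {t} J := by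
    intro t ht hIt htj
    exact ⟨t, ht.1, hIt, singleton_setLT_of hJoc hj₀ (triv_notMem_Q ht hJ) htj⟩
  rcases hI with hg | hint
  · -- I is a gap
    obtain ⟨x₀, hx₀, hGeq⟩ := hg
    have hIg : I ∈ gapsOf X := ⟨x₀, hx₀, hGeq⟩
    have hi₀ : x₀ ∈ I := hGeq ▸ mem_connectedComponentIn hx₀
    have hbdd : BddAbove I := ⟨j₀, fun i hi => (hIJ i hi j₀ hj₀).le⟩
    set u := sSup I with hu_def
    have hIne : I.Nonempty := ⟨x₀, hi₀⟩
    have hle_u : ∀ i ∈ I, i ≤ u := fun i hi => le_csSup hbdd hi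
    have huj : u ≤ j₀ := csSup_le hIne (fun i hi => (hIJ i hi j₀ hj₀).le)
    have hsub : ∀ z, x₀ ≤ z → z < u → z ∈ I := by
      intro z hz1 hz2
      obtain ⟨i, hi, hzi⟩ := exists_lt_of_lt_csSup hIne hz2
      exact (Q_ordConn (Or.inl hIg)).out hi₀ hi ⟨hz1, hzi.le⟩
    have hIopen : IsOpen I := hGeq ▸ (IsOpen.connectedComponentIn (isOpen_compl_iff.mpr hX))
    have hunI : u ∉ I := by
      intro huI
      rw [Metric.isOpen_iff] at hIopen
      obtain ⟨ε, hε, hball⟩ := hIopen u huI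
      have hmem : u + ε/2 ∈ Metric.ball u ε := by
        rw [Metric.mem_ball, Real.dist_eq,
          show u + ε/2 - u = ε/2 by ring, abs_of_pos (by linarith)]
        linarith
      have := hle_u _ (hball hmem)
      linarith
    have huX : u ∈ X := by
      by_contra huX
      have hIcc : Icc x₀ u ⊆ Xᶜ := by
        rintro z ⟨hz1, hz2⟩
        rcases lt_or_eq_of_le hz2 with h' | h'
        · exact gaps_subset hIg (hsub z hz1 h')
        · exact h' ▸ huX
      have h2 : Icc x₀ u ⊆ connectedComponentIn Xᶜ x₀ :=
        isPreconnected_Icc.subset_connectedComponentIn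
          ⟨le_refl x₀, le_csSup hbdd hi₀⟩ hIcc
      have h3 : u ∈ I := by
        rw [hGeq]
        exact h2 ⟨le_csSup hbdd hi₀, le_refl u⟩
      exact hunI h3
    have hx₀u : x₀ < u := lt_of_le_of_ne (hle_u _ hi₀) (fun he => hunI (he ▸ hi₀))
    have hsetLTIu : setLT I {u} := by
      intro i hi y hy
      rw [mem_singleton_iff] at hy; subst hy
      exact lt_of_le_of_ne (hle_u i hi) (fun he => hunI (he ▸ hi))
    by_cases hC : connectedComponentIn X u = {u}
    · -- sup of gap is a singleton component
      have hutriv : u ∈ trivCompOf X := ⟨huX, hC⟩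
      have hunJ : u ∉ J := triv_notMem_Q hutriv hJ
      have huj' : u < j₀ := lt_of_le_of_ne huj (fun he => hunJ (he ▸ hj₀))
      exact build u hutriv hsetLTIu huj'
    · -- sup of gap lies in a nontrivial component C with least element u
      set C := connectedComponentIn X u with hC_def
      have huC : u ∈ C := mem_connectedComponentIn huX
      have hCnt : C.Nontrivial := by
        by_contra hns
        rw [Set.not_nontrivial_iff] at hns
        exact hC (hns.eq_singleton_of_mem huC)
      have hCint : C ∈ intervalsOf X := ⟨⟨u, huX, hC_def⟩, hCnt⟩
      have hCX : C ⊆ X := intervals_subset hCint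
      have hleast : IsLeast C u := by
        refine ⟨huC, fun c hc => ?_⟩
        by_contra hlt
        push_neg at hlt
        have hcX : c ∈ X := hCX hc
        have hcI : c ∉ I := fun hcI => (gaps_subset hIg hcI) hcX
        have hcx₀ : x₀ ≤ c := by
          by_contra hlt2
          push_neg at hlt2
          have hx₀C : x₀ ∈ C := ((intervals_preconn hCint).ordConnected).out hc huC
            ⟨hlt2.le, (hle_u _ hi₀)⟩
          exact (gaps_subset hIg hi₀) (hCX hx₀C)
        exact hcI (hsub c hcx₀ hlt)
      have hcl := h.2.2.2 C hCint u (Or.inl hleast)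
      rw [Metric.mem_closure_iff] at hcl
      have hright : ∀ t, t ∈ trivCompOf X → t ≠ u → |u - t| < u - x₀ → u < t := by
        intro t ht htu hd
        rcases lt_or_ge u t with h' | h'
        · exact h'
        · exfalso
          have h3 : x₀ ≤ t := by have := lt_of_abs_lt hd; linarith
          have htI : t ∈ I := hsub t h3 (lt_of_le_of_ne h' htu)
          exact (gaps_subset hIg htI) ht.1
      have huj' : u < j₀ := by
        rcases lt_or_eq_of_le huj with h' | h'
        · exact h'
        · exfalso
          rcases hJ with hJg | hJint
          · exact (gaps_subset hJg (h' ▸ hj₀)) huX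
          · obtain ⟨d, hd⟩ := (intervals_compact hX hb hCint).exists_isGreatest hCnt.nonempty
            have hud : u < d := by
              rcases lt_or_ge u d with h'' | h''
              · exact h''
              · exfalso
                refine hC (eq_singleton_iff_unique_mem.mpr ⟨huC, fun c hc => ?_⟩)
                exact le_antisymm ((hd.2 hc).trans h'') (hleast.2 hc)
            obtain ⟨t, ⟨ht, htne⟩, htd⟩ := hcl (min (u - x₀) (d - u))
              (lt_min (by linarith) (by linarith))
            rw [Real.dist_eq] at htd
            have htu : t ≠ u := by simpa using htne
            have hgt : u < t := hright t ht htu (lt_of_lt_of_le htd (min_le_left _ _))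
            have hlt : t < d := by
              have := neg_lt_of_abs_lt (lt_of_lt_of_le htd (min_le_right _ _)); linarith
            have htC : t ∈ C := (intervals_preconn hCint).ordConnected.out huC hd.1
              ⟨hgt.le, hlt.le⟩
            exact (triv_notMem_interval ht hCint) htC
      obtain ⟨t, ⟨ht, htne⟩, htd⟩ := hcl (min (u - x₀) (j₀ - u))
        (lt_min (by linarith) (by linarith))
      rw [Real.dist_eq] at htd
      have htu : t ≠ u := by simpa using htne
      have hgt : u < t := hright t ht htu (lt_of_lt_of_le htd (min_le_left _ _))
      have htj : t < j₀ := by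
        have := neg_lt_of_abs_lt (lt_of_lt_of_le htd (min_le_right _ _)); linarith
      refine build t ht ?_ htj
      intro i hi y hy
      rw [mem_singleton_iff] at hy; subst hy
      exact lt_of_le_of_lt (hle_u i hi) hgt
  · -- I is an interval
    obtain ⟨u, hu⟩ := (intervals_compact hX hb hint).exists_isGreatest hint.2.nonempty
    obtain ⟨α, hα⟩ := (intervals_compact hX hb hint).exists_isLeast hint.2.nonempty
    have hαu : α < u := by
      obtain ⟨a, ha, b, hbm, hab⟩ := hint.2
      by_contra hle
      push_neg at hle
      exact hab (le_antisymm ((hu.2 ha).trans (hle.trans (hα.2 hbm)))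
        ((hu.2 hbm).trans (hle.trans (hα.2 ha))))
    have huj : u < j₀ := hIJ u hu.1 j₀ hj₀
    have hcl := h.2.2.2 I hint u (Or.inr hu)
    rw [Metric.mem_closure_iff] at hcl
    obtain ⟨t, ⟨ht, htne⟩, htd⟩ := hcl (min (u - α) (j₀ - u))
      (lt_min (by linarith) (by linarith))
    rw [Real.dist_eq] at htd
    have htu : t ≠ u := by simpa using htne
    have hd1 : |u - t| < u - α := lt_of_lt_of_le htd (min_le_left _ _)
    have hd2 : |u - t| < j₀ - u := lt_of_lt_of_le htd (min_le_right _ _)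
    have htnI : t ∉ I := triv_notMem_interval ht hint
    have htgtu : u < t := by
      rcases lt_or_ge u t with h' | h'
      · exact h'
      · exfalso
        have h3 : α ≤ t := by have := lt_of_abs_lt hd1; linarith
        exact htnI ((Q_ordConn (Or.inr hint)).out hα.1 hu.1 ⟨h3, h'⟩)
    have htj : t < j₀ := by have := neg_lt_of_abs_lt hd2; linarith
    refine build t ht ?_ htj
    intro i hi y hy
    rw [mem_singleton_iff] at hy; subst hy
    exact lt_of_le_of_lt (hu.2 hi) htgtu

end MCVhelp

open MCVhelp in
theorem mCantorval_B_interlaces (X : Set ℝ) (h : MCantorval X) :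
    Interlaces (BOf X) (QOf X) := by
  intro I hI J hJ hIJ
  have hX : IsClosed X := h.2.2.1.1
  have hb : Bornology.IsBounded X := h.2.1
  obtain ⟨t, htX, htI, htJ⟩ := exists_point_between h hI hJ hIJ
  obtain ⟨p, hpt, hp⟩ := left_control hX hb hI htI
  obtain ⟨r, htr, hr⟩ := right_control hX hb hJ htJ
  have htc : t ∈ closure (⋃₀ intervalsOf X) := h.2.2.1.2 htX
  rw [Metric.mem_closure_iff] at htc
  obtain ⟨q, hq, hdist⟩ := htc (min (t - p) (r - t)) (by
    simp only [lt_min_iff, sub_pos]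
    exact ⟨hpt, htr⟩)
  obtain ⟨K, hK, hqK⟩ := hq
  rw [Real.dist_eq] at hdist
  have h1 : |t - q| < t - p := lt_of_lt_of_le hdist (min_le_left _ _)
  have h2 : |t - q| < r - t := lt_of_lt_of_le hdist (min_le_right _ _)
  have hpq : p < q := by
    have := lt_of_abs_lt h1
    linarith
  have hqr : q < r := by
    have := neg_lt_of_abs_lt h2
    linarith
  exact ⟨K, intervals_subset_B h hK, hp K hK q hqK hpq, hr K hK q hqK hqr⟩
end
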